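/- arXiv:math/0509366 — 4 statements merged into one kernel-verified Lean document; each statement's English description precedes it below -/
import Mathlib

section
/- Let 𝒮 = (π, E, V) be an sc-smooth splicing and let Φ : V ⊕ E → E, Φ(v,e) = π_v(e). For a = (v, δv) ∈ TV define Π_a : TE → TE by Π_{(v,δv)}(e, δe) = (Φ(v,e), DΦ(v,e)(δv, δe)). Then (Π, TE, TV) is an sc-smooth splicing (the tangent splicing T𝒮): every Π_a is a linear projection of TE, bounded on every level of TE, and the map TV ⊕ TE → TE, (a,b) ↦ Π_a(b), is sc-smooth. -/
universe u v

/-- The data of an sc-scale on an ambient real vector space `E`: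
a sequence of levels (submodules of `E`) together with a norm function for each level. -/
structure ScScale (E : Type u) [AddCommGroup E] [Module ℝ E] where
  level : ℕ → Submodule ℝ E
  lnorm : ℕ → E → ℝ

namespace ScScale

variable {E : Type u} {F : Type v} [AddCommGroup E] [Module ℝ E] [AddCommGroup F] [Module ℝ F]

/-- The axioms making an sc-scale into an sc-Banach space structure: the levels are nested,
each level norm is a genuine complete norm on its level, the inclusion of a level into
any lower level is a compact (bounded) operator, and the intersection `E∞` of all levels
is dense in every level. -/
def IsScBanach (S : ScScale E) : Prop :=
  (∀ {m n : ℕ}, m ≤ n → S.level n ≤ S.level m) ∧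
  (∀ m x, 0 ≤ S.lnorm m x) ∧
  (∀ m, ∀ x ∈ S.level m, ∀ y ∈ S.level m, S.lnorm m (x + y) ≤ S.lnorm m x + S.lnorm m y) ∧
  (∀ m (c : ℝ), ∀ x ∈ S.level m, S.lnorm m (c • x) = |c| * S.lnorm m x) ∧
  (∀ m, ∀ x ∈ S.level m, S.lnorm m x = 0 → x = 0) ∧
  (∀ m n, m ≤ n → ∃ C > (0:ℝ), ∀ x ∈ S.level n, S.lnorm m x ≤ C * S.lnorm n x) ∧
  (∀ m (u : ℕ → E), (∀ k, u k ∈ S.level m) →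
      (∀ ε > (0:ℝ), ∃ K, ∀ p ≥ K, ∀ q ≥ K, S.lnorm m (u p - u q) < ε) →
      ∃ x ∈ S.level m, ∀ ε > (0:ℝ), ∃ K, ∀ p ≥ K, S.lnorm m (u p - x) < ε) ∧
  (∀ m (u : ℕ → E), (∀ k, u k ∈ S.level (m+1)) → (∀ k, S.lnorm (m+1) (u k) ≤ 1) →
      ∃ φ : ℕ → ℕ, StrictMono φ ∧
        ∀ ε > (0:ℝ), ∃ K, ∀ p ≥ K, ∀ q ≥ K, S.lnorm m (u (φ p) - u (φ q)) < ε) ∧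
  (∀ m, ∀ x ∈ S.level m, ∀ ε > (0:ℝ), ∃ y, (∀ n, y ∈ S.level n) ∧ S.lnorm m (x - y) < ε)

/-- `U` is an open subset of the sc-space: it is contained in the `0`-level and open
with respect to the level-`0` norm topology. -/
def IsOpenIn (S : ScScale E) (U : Set E) : Prop :=
  U ⊆ (S.level 0 : Set E) ∧
  ∀ x ∈ U, ∃ ε > (0:ℝ), ∀ y ∈ (S.level 0 : Set E), S.lnorm 0 (y - x) < ε → y ∈ U

/-- The tangent scale `TE` with `(TE)ₘ = E_{m+1} ⊕ Eₘ`, realized on `E × E`. -/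
def tangent (S : ScScale E) : ScScale (E × E) where
  level m := (S.level (m+1)).prod (S.level m)
  lnorm m p := S.lnorm (m+1) p.1 + S.lnorm m p.2

/-- The tangent set `TU = U₁ ⊕ E` of a set `U`. -/
def tangentSet (S : ScScale E) (U : Set E) : Set (E × E) :=
  {p | p.1 ∈ U ∧ p.1 ∈ S.level 1 ∧ p.2 ∈ S.level 0}

/-- The shifted scale `E^k` with `(E^k)ₘ = E_{m+k}`. -/
def shift (S : ScScale E) (k : ℕ) : ScScale E where
  level m := S.level (m + k)
  lnorm m := S.lnorm (m + k)

/-- The direct sum of two sc-scales. -/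
def prod (S : ScScale E) (T : ScScale F) : ScScale (E × F) where
  level m := (S.level m).prod (T.level m)
  lnorm m p := S.lnorm m p.1 + T.lnorm m p.2

end ScScale

/-- `f : U → F` is of class sc⁰: it preserves all levels and is continuous on every level
with respect to the level norms. -/
def Sc0 {E : Type u} {F : Type v} [AddCommGroup E] [Module ℝ E] [AddCommGroup F] [Module ℝ F]
    (SE : ScScale E) (SF : ScScale F) (U : Set E) (f : E → F) : Prop :=
  ∀ m : ℕ,
    (∀ x ∈ U ∩ (SE.level m : Set E), f x ∈ SF.level m) ∧
    (∀ x ∈ U ∩ (SE.level m : Set E), ∀ ε > (0:ℝ), ∃ δ > (0:ℝ),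
      ∀ y ∈ U ∩ (SE.level m : Set E),
        SE.lnorm m (y - x) < δ → SF.lnorm m (f y - f x) < ε)

/-- The tangent map `Tf(x,h) = (f(x), Df(x)h)` associated to `f` and a family of
linearizations `Df`. -/
def Tmap {E : Type u} {F : Type v} [AddCommGroup E] [Module ℝ E] [AddCommGroup F] [Module ℝ F]
    (f : E → F) (Df : E → (E →ₗ[ℝ] F)) : E × E → F × F :=
  fun p => (f p.1, Df p.1 p.2)

/-- `Df` witnesses that `f` is of class sc¹ on `U`: at every point `x ∈ U₁` the linear
map `Df x` is bounded from level 0 to level 0 and is the sc-differential of `f` at `x`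
(a Fréchet-type limit taken from level 1 into level 0), and the tangent map
`Tf : TU → TF` is sc⁰. -/
def Sc1With {E : Type u} {F : Type v} [AddCommGroup E] [Module ℝ E] [AddCommGroup F] [Module ℝ F]
    (SE : ScScale E) (SF : ScScale F) (U : Set E) (f : E → F)
    (Df : E → (E →ₗ[ℝ] F)) : Prop :=
  (∀ x ∈ U ∩ (SE.level 1 : Set E),
    (∃ C : ℝ, ∀ h ∈ SE.level 0, SF.lnorm 0 (Df x h) ≤ C * SE.lnorm 0 h) ∧
    (∀ ε > (0:ℝ), ∃ δ > (0:ℝ), ∀ h ∈ (SE.level 1 : Set E),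
      x + h ∈ U → SE.lnorm 1 h < δ →
        SF.lnorm 0 (f (x + h) - f x - Df x h) ≤ ε * SE.lnorm 1 h)) ∧
  Sc0 SE.tangent SF.tangent (SE.tangentSet U) (Tmap f Df)

/-- `f` is of class sc¹ on `U`. -/
def IsSc1 {E : Type u} {F : Type v} [AddCommGroup E] [Module ℝ E] [AddCommGroup F] [Module ℝ F]
    (SE : ScScale E) (SF : ScScale F) (U : Set E) (f : E → F) : Prop :=
  Sc0 SE SF U f ∧ ∃ Df : E → (E →ₗ[ℝ] F), Sc1With SE SF U f Df

/-- `f` is of class sc^k on `U`, defined inductively via tangent maps. -/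
def IsSck (k : ℕ) {E : Type u} {F : Type v} [AddCommGroup E] [Module ℝ E]
    [AddCommGroup F] [Module ℝ F]
    (SE : ScScale E) (SF : ScScale F) (U : Set E) (f : E → F) : Prop :=
  match k with
  | 0 => Sc0 SE SF U f
  | k + 1 => Sc0 SE SF U f ∧ ∃ Df : E → (E →ₗ[ℝ] F), Sc1With SE SF U f Df ∧
      IsSck k SE.tangent SF.tangent (SE.tangentSet U) (Tmap f Df)

/-- A partial cone in a finite-dimensional vector space `A`: the image of
`[0,∞)^k × ℝ^{n-k}` under a linear isomorphism `ℝⁿ ≅ A`. -/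
def IsPartialCone {A : Type v} [AddCommGroup A] [Module ℝ A] (C : Set A) : Prop :=
  ∃ (n k : ℕ) (T : A ≃ₗ[ℝ] (Fin n → ℝ)), k ≤ n ∧
    C = {a : A | ∀ i : Fin n, (i : ℕ) < k → 0 ≤ T a i}

/-- The constant sc-structure on a normed space `A` (used for finite-dimensional
parameter spaces): every level is `A` with the given norm. -/
noncomputable def constScale (A : Type v) [NormedAddCommGroup A] [NormedSpace ℝ A] :
    ScScale A where
  level _ := ⊤
  lnorm _ a := ‖a‖

/-- `(π, E, V)` is an sc-smooth splicing: `V` is a relatively open subset of a partial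
cone, each `π v` (for `v ∈ V`) is a linear projection of the sc-space carried by the
scale `SE`, preserving and bounded on every level, and the total map
`(v, e) ↦ π v e` is sc-smooth. -/
noncomputable def IsScSplicing {A : Type v} {E : Type u}
    [NormedAddCommGroup A] [NormedSpace ℝ A] [AddCommGroup E] [Module ℝ E]
    (V : Set A) (SE : ScScale E) (π : A → E → E) : Prop :=
  (∃ C : Set A, IsPartialCone C ∧ ∃ O : Set A, IsOpen O ∧ V = O ∩ C) ∧
  (∀ m : ℕ, ∀ v ∈ V, ∀ e ∈ SE.level m, π v e ∈ SE.level m) ∧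
  (∀ v ∈ V, ∀ e ∈ SE.level 0, π v (π v e) = π v e) ∧
  (∀ v ∈ V, ∀ e ∈ SE.level 0, ∀ e' ∈ SE.level 0, π v (e + e') = π v e + π v e') ∧
  (∀ v ∈ V, ∀ c : ℝ, ∀ e ∈ SE.level 0, π v (c • e) = c • π v e) ∧
  (∀ m : ℕ, ∀ v ∈ V, ∃ C : ℝ, ∀ e ∈ SE.level m, SE.lnorm m (π v e) ≤ C * SE.lnorm m e) ∧
  (∀ k : ℕ, IsSck k ((constScale A).prod SE) SE
      {p : A × E | p.1 ∈ V ∧ p.2 ∈ SE.level 0} (fun p => π p.1 p.2))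

section AuxCongr

universe u₁ u₂ u₃

theorem Sc0.congr {E : Type u₁} {F : Type u₂} [AddCommGroup E] [Module ℝ E]
    [AddCommGroup F] [Module ℝ F] {SE : ScScale E} {SF : ScScale F} {U : Set E} {f g : E → F}
    (hf : Sc0 SE SF U f) (hfg : ∀ x ∈ U, f x = g x) : Sc0 SE SF U g := by
  intro m
  refine ⟨fun x hx => ?_, fun x hx ε hε => ?_⟩
  · rw [← hfg x hx.1]; exact (hf m).1 x hx
  · obtain ⟨δ, hδ, h⟩ := (hf m).2 x hx ε hε
    exact ⟨δ, hδ, fun y hy hyx => by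
      rw [← hfg y hy.1, ← hfg x hx.1]; exact h y hy hyx⟩

theorem Sc1With.congr {E : Type u₁} {F : Type u₂} [AddCommGroup E] [Module ℝ E]
    [AddCommGroup F] [Module ℝ F] {SE : ScScale E} {SF : ScScale F} {U : Set E} {f g : E → F}
    {Df : E → E →ₗ[ℝ] F} (hf : Sc1With SE SF U f Df) (hfg : ∀ x ∈ U, f x = g x) :
    Sc1With SE SF U g Df := by
  refine ⟨fun x hx => ⟨(hf.1 x hx).1, fun ε hε => ?_⟩, hf.2.congr fun p hp => ?_⟩
  · obtain ⟨δ, hδ, h⟩ := (hf.1 x hx).2 ε hε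
    exact ⟨δ, hδ, fun h' hh' hxh' hn => by
      rw [← hfg _ hxh', ← hfg _ hx.1]; exact h h' hh' hxh' hn⟩
  · simp only [Tmap]; rw [hfg _ hp.1]

theorem isSck_congr (k : ℕ) : ∀ {E : Type u₁} {F : Type u₂} [AddCommGroup E] [Module ℝ E]
    [AddCommGroup F] [Module ℝ F] {SE : ScScale E} {SF : ScScale F} {U : Set E}
    {f g : E → F}, IsSck k SE SF U f → (∀ x ∈ U, f x = g x) → IsSck k SE SF U g := by
  induction k with
  | zero => intro _ _ _ _ _ _ _ _ _ _ _ hf hfg; exact hf.congr hfg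
  | succ k ih =>
    intro E F _ _ _ _ SE SF U f g hf hfg
    obtain ⟨h0, Dfx, h1, h2⟩ := hf
    refine ⟨h0.congr hfg, Dfx, h1.congr hfg, ih h2 ?_⟩
    intro p hp; simp only [Tmap]; rw [hfg _ hp.1]

end AuxCongr

section AuxTransport

universe u₁ u₂ u₃

/-- Compatibility data for transporting sc-smoothness along a linear map. -/
def TransComp {E₁ : Type u₁} {E₂ : Type u₂} [AddCommGroup E₁] [Module ℝ E₁]
    [AddCommGroup E₂] [Module ℝ E₂] (S₁ : ScScale E₁) (S₂ : ScScale E₂)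
    (U₁ : Set E₁) (U₂ : Set E₂) (σ : E₂ →ₗ[ℝ] E₁) : Prop :=
  (∀ m x, x ∈ S₂.level m → σ x ∈ S₁.level m) ∧
  (∀ x ∈ U₂, σ x ∈ U₁) ∧
  (∀ m x, x ∈ S₂.level m → 0 ≤ S₂.lnorm m x) ∧
  (∀ m x, x ∈ S₁.level m → 0 ≤ S₁.lnorm m x) ∧
  (∀ m, ∃ c > (0:ℝ), ∀ x ∈ S₂.level m, S₁.lnorm m (σ x) ≤ c * S₂.lnorm m x)

theorem TransComp.tangent {E₁ : Type u₁} {E₂ : Type u₂} [AddCommGroup E₁] [Module ℝ E₁]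
    [AddCommGroup E₂] [Module ℝ E₂] {S₁ : ScScale E₁} {S₂ : ScScale E₂}
    {U₁ : Set E₁} {U₂ : Set E₂} {σ : E₂ →ₗ[ℝ] E₁} (h : TransComp S₁ S₂ U₁ U₂ σ) :
    TransComp S₁.tangent S₂.tangent (S₁.tangentSet U₁) (S₂.tangentSet U₂) (σ.prodMap σ) := by
  obtain ⟨hl, hU, hnn2, hnn1, hc⟩ := h
  refine ⟨?_, ?_, ?_, ?_, ?_⟩
  · intro m x hx
    have hx' : x.1 ∈ S₂.level (m+1) ∧ x.2 ∈ S₂.level m := Submodule.mem_prod.mp hx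
    exact Submodule.mem_prod.mpr ⟨hl _ _ hx'.1, hl _ _ hx'.2⟩
  · rintro x ⟨hx1, hx2, hx3⟩
    exact ⟨hU _ hx1, hl _ _ hx2, hl _ _ hx3⟩
  · intro m x hx
    have hx' : x.1 ∈ S₂.level (m+1) ∧ x.2 ∈ S₂.level m := Submodule.mem_prod.mp hx
    have := hnn2 (m+1) x.1 hx'.1
    have := hnn2 m x.2 hx'.2
    show 0 ≤ S₂.lnorm (m+1) x.1 + S₂.lnorm m x.2
    linarith
  · intro m x hx
    have hx' : x.1 ∈ S₁.level (m+1) ∧ x.2 ∈ S₁.level m := Submodule.mem_prod.mp hx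
    have := hnn1 (m+1) x.1 hx'.1
    have := hnn1 m x.2 hx'.2
    show 0 ≤ S₁.lnorm (m+1) x.1 + S₁.lnorm m x.2
    linarith
  · intro m
    obtain ⟨c1, hc1, hb1⟩ := hc (m+1)
    obtain ⟨c2, hc2, hb2⟩ := hc m
    refine ⟨c1 + c2, by positivity, fun x hx => ?_⟩
    have hx' : x.1 ∈ S₂.level (m+1) ∧ x.2 ∈ S₂.level m := Submodule.mem_prod.mp hx
    have h1 := hb1 x.1 hx'.1
    have h2 := hb2 x.2 hx'.2
    have n1 := hnn2 (m+1) x.1 hx'.1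
    have n2 := hnn2 m x.2 hx'.2
    show S₁.lnorm (m+1) (σ x.1) + S₁.lnorm m (σ x.2) ≤
      (c1 + c2) * (S₂.lnorm (m+1) x.1 + S₂.lnorm m x.2)
    nlinarith

theorem sc0_transport {E₁ : Type u₁} {E₂ : Type u₂} {F : Type u₃}
    [AddCommGroup E₁] [Module ℝ E₁] [AddCommGroup E₂] [Module ℝ E₂]
    [AddCommGroup F] [Module ℝ F]
    {S₁ : ScScale E₁} {S₂ : ScScale E₂} {SF : ScScale F} {U₁ : Set E₁} {U₂ : Set E₂}
    {σ : E₂ →ₗ[ℝ] E₁} (h : TransComp S₁ S₂ U₁ U₂ σ) {g : E₁ → F} (hg : Sc0 S₁ SF U₁ g) :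
    Sc0 S₂ SF U₂ (fun x => g (σ x)) := by
  obtain ⟨hl, hU, hnn2, hnn1, hc⟩ := h
  intro m
  obtain ⟨c, hc0, hcb⟩ := hc m
  refine ⟨fun x hx => (hg m).1 (σ x) ⟨hU x hx.1, hl m x hx.2⟩, fun x hx ε hε => ?_⟩
  obtain ⟨δ, hδ, hcont⟩ := (hg m).2 (σ x) ⟨hU x hx.1, hl m x hx.2⟩ ε hε
  refine ⟨δ / c, by positivity, fun y hy hyx => ?_⟩
  have h1 : S₁.lnorm m (σ y - σ x) < δ := by
    have h2 := hcb (y - x) (Submodule.sub_mem _ hy.2 hx.2)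
    rw [map_sub] at h2
    have h3 : c * S₂.lnorm m (y - x) < c * (δ / c) := mul_lt_mul_of_pos_left hyx hc0
    rw [mul_div_cancel₀ _ (ne_of_gt hc0)] at h3
    linarith
  exact hcont (σ y) ⟨hU y hy.1, hl m y hy.2⟩ h1

theorem sc1With_transport {E₁ : Type u₁} {E₂ : Type u₂} {F : Type u₃}
    [AddCommGroup E₁] [Module ℝ E₁] [AddCommGroup E₂] [Module ℝ E₂]
    [AddCommGroup F] [Module ℝ F]
    {S₁ : ScScale E₁} {S₂ : ScScale E₂} {SF : ScScale F} {U₁ : Set E₁} {U₂ : Set E₂}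
    {σ : E₂ →ₗ[ℝ] E₁} (h : TransComp S₁ S₂ U₁ U₂ σ) {g : E₁ → F} {Dg : E₁ → E₁ →ₗ[ℝ] F}
    (hg : Sc1With S₁ SF U₁ g Dg) :
    Sc1With S₂ SF U₂ (fun x => g (σ x)) (fun x => (Dg (σ x)).comp σ) := by
  obtain ⟨hl, hU, hnn2, hnn1, hc⟩ := h
  constructor
  · intro x hx
    have hx1 : σ x ∈ U₁ ∩ (S₁.level 1 : Set E₁) := ⟨hU x hx.1, hl 1 x hx.2⟩
    obtain ⟨c0, hc00, hb0⟩ := hc 0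
    obtain ⟨c1, hc10, hb1⟩ := hc 1
    refine ⟨?_, ?_⟩
    · obtain ⟨C, hC⟩ := (hg.1 (σ x) hx1).1
      refine ⟨max C 0 * c0, fun h' hh' => ?_⟩
      have h1 := hC (σ h') (hl 0 h' hh')
      have h2 := hb0 h' hh'
      have h3 : 0 ≤ S₁.lnorm 0 (σ h') := hnn1 0 _ (hl 0 h' hh')
      have h4 : SF.lnorm 0 ((Dg (σ x)).comp σ h') = SF.lnorm 0 (Dg (σ x) (σ h')) := rfl
      rw [h4]
      calc SF.lnorm 0 (Dg (σ x) (σ h')) ≤ C * S₁.lnorm 0 (σ h') := h1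
        _ ≤ max C 0 * S₁.lnorm 0 (σ h') := mul_le_mul_of_nonneg_right (le_max_left _ _) h3
        _ ≤ max C 0 * (c0 * S₂.lnorm 0 h') :=
            mul_le_mul_of_nonneg_left h2 (le_max_right _ _)
        _ = max C 0 * c0 * S₂.lnorm 0 h' := by ring
    · intro ε hε
      obtain ⟨c1', hc10', hb1'⟩ := hc 1
      obtain ⟨δ, hδ, happ⟩ := (hg.1 (σ x) hx1).2 (ε / c1') (by positivity)
      refine ⟨δ / c1', by positivity, fun h' hh' hxh' hn => ?_⟩
      have hσh1 : σ h' ∈ (S₁.level 1 : Set E₁) := hl 1 h' hh'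
      have hb := hb1' h' hh'
      have h2 : S₁.lnorm 1 (σ h') < δ := by
        have h3 : c1' * S₂.lnorm 1 h' < c1' * (δ / c1') := mul_lt_mul_of_pos_left hn hc10'
        rw [mul_div_cancel₀ _ (ne_of_gt hc10')] at h3
        linarith
      have key := happ (σ h') hσh1 (by rw [← map_add]; exact hU _ hxh') h2
      have heq : (fun x => g (σ x)) (x + h') - (fun x => g (σ x)) x -
          (fun x => (Dg (σ x)).comp σ) x h' =
          g (σ x + σ h') - g (σ x) - Dg (σ x) (σ h') := by
        simp [map_add]
      rw [heq]
      calc SF.lnorm 0 (g (σ x + σ h') - g (σ x) - Dg (σ x) (σ h'))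
          ≤ (ε / c1') * S₁.lnorm 1 (σ h') := key
        _ ≤ (ε / c1') * (c1' * S₂.lnorm 1 h') :=
            mul_le_mul_of_nonneg_left hb (by positivity)
        _ = ε * S₂.lnorm 1 h' := by field_simp
  · have ht : TransComp S₁.tangent S₂.tangent (S₁.tangentSet U₁) (S₂.tangentSet U₂)
        (σ.prodMap σ) := TransComp.tangent ⟨hl, hU, hnn2, hnn1, hc⟩
    have h0 := sc0_transport ht hg.2
    exact h0.congr (fun p _ => by simp [Tmap])

theorem isSck_transport (k : ℕ) : ∀ {E₁ : Type u₁} {E₂ : Type u₂} {F : Type u₃}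
    [AddCommGroup E₁] [Module ℝ E₁] [AddCommGroup E₂] [Module ℝ E₂]
    [AddCommGroup F] [Module ℝ F]
    {S₁ : ScScale E₁} {S₂ : ScScale E₂} {SF : ScScale F} {U₁ : Set E₁} {U₂ : Set E₂}
    {σ : E₂ →ₗ[ℝ] E₁} {g : E₁ → F},
    TransComp S₁ S₂ U₁ U₂ σ → IsSck k S₁ SF U₁ g → IsSck k S₂ SF U₂ (fun x => g (σ x)) := by
  induction k with
  | zero =>
    intro _ _ _ _ _ _ _ _ _ _ _ _ _ _ _ _ h hg
    exact sc0_transport h hg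
  | succ k ih =>
    intro E₁ E₂ F _ _ _ _ _ _ S₁ S₂ SF U₁ U₂ σ g h hg
    obtain ⟨h0, Dg, h1, h2⟩ := hg
    refine ⟨sc0_transport h h0, fun x => (Dg (σ x)).comp σ, sc1With_transport h h1, ?_⟩
    have h3 := ih h.tangent h2
    exact isSck_congr k h3 (fun p _ => by simp [Tmap])

end AuxTransport

section AuxCone

theorem isPartialCone_fst_preimage {A : Type v} [AddCommGroup A] [Module ℝ A]
    {C : Set A} (hC : IsPartialCone C) : IsPartialCone {a : A × A | a.1 ∈ C} := by
  obtain ⟨n, k, T, hkn, hCeq⟩ := hC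
  set T' : (A × A) ≃ₗ[ℝ] (Fin (n + n) → ℝ) :=
    (LinearEquiv.prodCongr T T).trans
      ((LinearEquiv.sumArrowLequivProdArrow (Fin n) (Fin n) ℝ ℝ).symm.trans
        (LinearEquiv.funCongrLeft ℝ ℝ finSumFinEquiv.symm)) with hT'
  have key : ∀ (a : A × A) (j : Fin n), T' a (Fin.castAdd n j) = T a.1 j := by
    intro a j
    simp [hT', LinearEquiv.funCongrLeft, Equiv.symm_symm, LinearEquiv.sumArrowLequivProdArrow]
  refine ⟨n + n, k, T', le_trans hkn (Nat.le_add_right _ _), ?_⟩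
  ext a
  simp only [Set.mem_setOf_eq, hCeq]
  constructor
  · intro h i hi
    have hin : (i : ℕ) < n := lt_of_lt_of_le hi hkn
    have hieq : i = Fin.castAdd n ⟨(i : ℕ), hin⟩ := by
      apply Fin.ext; simp
    rw [hieq, key]
    exact h ⟨(i : ℕ), hin⟩ hi
  · intro h j hj
    have := h (Fin.castAdd n j) (by simpa using hj)
    rwa [key] at this

end AuxCone

set_option maxHeartbeats 4000000 in
/-- the tangent of an sc-smooth splicing is an sc-smooth splicing.
Given a splicing `𝒮 = (π, E, V)` and any family `Df` of sc-linearizations of the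
sc-smooth map `Φ(v,e) = π v e`, the family
`Π_{(v,δv)}(e,δe) = (π v e, DΦ(v,e)(δv,δe))`, parameterized by `TV = V ⊕ A` and
acting on `TE`, is again an sc-smooth splicing. -/
theorem tangent_splicing_is_splicing {A : Type v} {E : Type u}
    [NormedAddCommGroup A] [NormedSpace ℝ A] [FiniteDimensional ℝ A]
    [AddCommGroup E] [Module ℝ E]
    (SE : ScScale E) (hSE : SE.IsScBanach)
    (V : Set A) (π : A → E → E) (hspl : IsScSplicing V SE π)
    (Df : A × E → ((A × E) →ₗ[ℝ] E))
    (hDf : Sc1With ((constScale A).prod SE) SE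
      {p : A × E | p.1 ∈ V ∧ p.2 ∈ SE.level 0} (fun p => π p.1 p.2) Df) :
    IsScSplicing {a : A × A | a.1 ∈ V} SE.tangent
      (fun a b => (π a.1 b.1, Df (a.1, b.1) (a.2, b.2))) := by
  classical
  obtain ⟨hmono, hnn, htri, nsmul, hzero, _hcomp, _hcau, _hcpt, hdense⟩ := hSE
  obtain ⟨hcone, hlev, pproj, padd, psml, hbdd, hsm⟩ := hspl
  -- basic norm facts
  have nzero : ∀ m : ℕ, SE.lnorm m 0 = 0 := by
    intro m
    have h := nsmul m 0 0 (Submodule.zero_mem _)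
    simpa using h
  have nneg : ∀ m : ℕ, ∀ b ∈ SE.level m, SE.lnorm m (-b) = SE.lnorm m b := by
    intro m b hb
    have h := nsmul m (-1) b hb
    simpa using h
  have nsmulpos : ∀ m : ℕ, ∀ t : ℝ, 0 < t → ∀ b ∈ SE.level m,
      SE.lnorm m (t • b) = t * SE.lnorm m b := by
    intro m t ht b hb
    rw [nsmul m t b hb, abs_of_pos ht]
  have nsub : ∀ m : ℕ, ∀ a ∈ SE.level m, ∀ b ∈ SE.level m,
      SE.lnorm m (a - b) ≤ SE.lnorm m a + SE.lnorm m b := by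
    intro m a ha b hb
    have h1 := htri m a ha (-b) (Submodule.neg_mem _ hb)
    rw [nneg m b hb] at h1
    simpa [sub_eq_add_neg] using h1
  have zero_of_forall : ∀ z ∈ SE.level 0, (∀ ε > (0:ℝ), SE.lnorm 0 z ≤ ε) → z = 0 := by
    intro z hz h
    refine hzero 0 z hz ?_
    by_contra hne
    have hpos : 0 < SE.lnorm 0 z := lt_of_le_of_ne (hnn 0 z) (Ne.symm hne)
    have h2 := h (SE.lnorm 0 z / 2) (by positivity)
    linarith
  -- membership in prod scale levels
  have memSU : ∀ (m : ℕ) (p : A × E), p.2 ∈ SE.level m →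
      p ∈ (((constScale A).prod SE).level m : Set (A × E)) := by
    intro m p h
    exact Submodule.mem_prod.mpr ⟨Submodule.mem_top, h⟩
  have memSU' : ∀ (m : ℕ) (p : A × E), p ∈ (((constScale A).prod SE).level m : Set (A × E)) →
      p.2 ∈ SE.level m := by
    intro m p h
    exact (Submodule.mem_prod.mp h).2
  -- membership of Df-values, parametric in the witnessing family
  have dfmem : ∀ df : A × E → ((A × E) →ₗ[ℝ] E),
      Sc1With ((constScale A).prod SE) SE {p : A × E | p.1 ∈ V ∧ p.2 ∈ SE.level 0}
        (fun p => π p.1 p.2) df →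
      ∀ (m : ℕ) (v : A) (e δe : E) (δv : A), v ∈ V → e ∈ SE.level (m+1) →
        δe ∈ SE.level m → df (v, e) (δv, δe) ∈ SE.level m := by
    intro df hdf m v e δe δv hv he hδe
    have h1 := (hdf.2 m).1 ((v, e), (δv, δe))
      ⟨⟨⟨hv, hmono (Nat.zero_le (m+1)) he⟩,
        memSU 1 _ (hmono (Nat.succ_le_succ (Nat.zero_le m)) he),
        memSU 0 _ (hmono (Nat.zero_le m) hδe)⟩,
        Submodule.mem_prod.mpr ⟨memSU (m+1) _ he, memSU m _ hδe⟩⟩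
    exact (Submodule.mem_prod.mp h1).2
  -- decomposition of arbitrary directions into admissible ones
  have hadm : ∀ v ∈ V, ∀ δv : A, ∃ p q : A,
      (∃ t₀ > (0:ℝ), ∀ t : ℝ, 0 < t → t ≤ t₀ → v + t • p ∈ V) ∧
      (∃ t₀ > (0:ℝ), ∀ t : ℝ, 0 < t → t ≤ t₀ → v + t • q ∈ V) ∧ δv = p - q := by
    obtain ⟨C, ⟨n, k, T, hkn, hCeq⟩, O, hO, hVeq⟩ := hcone
    intro v hv δv
    have hv' : v ∈ O ∩ C := by rw [← hVeq]; exact hv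
    obtain ⟨r, hr, hball⟩ := Metric.isOpen_iff.mp hO v hv'.1
    have main : ∀ w : A, (∀ i : Fin n, (i : ℕ) < k → 0 ≤ T w i) →
        ∃ t₀ > (0:ℝ), ∀ t : ℝ, 0 < t → t ≤ t₀ → v + t • w ∈ V := by
      intro w hw
      refine ⟨r / (‖w‖ + 1), by positivity, fun t ht ht0 => ?_⟩
      rw [hVeq]
      constructor
      · apply hball
        simp only [Metric.mem_ball, dist_eq_norm, add_sub_cancel_left]
        rw [norm_smul, Real.norm_eq_abs, abs_of_pos ht]
        have h1 : t * ‖w‖ ≤ r / (‖w‖ + 1) * ‖w‖ :=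
          mul_le_mul_of_nonneg_right ht0 (norm_nonneg w)
        have h2 : r / (‖w‖ + 1) * ‖w‖ < r := by
          rw [div_mul_eq_mul_div, div_lt_iff₀ (by positivity)]
          nlinarith [norm_nonneg w]
        linarith
      · have hvC := hv'.2
        rw [hCeq] at hvC ⊢
        intro i hi
        have h1 := hvC i hi
        have h2 := hw i hi
        have h3 : T (v + t • w) i = T v i + t * T w i := by
          simp [map_add, map_smul]
        rw [h3]; nlinarith
    refine ⟨T.symm (fun i => max (T δv i) 0), T.symm (fun i => max (-(T δv i)) 0), ?_, ?_, ?_⟩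
    · apply main
      intro i _
      simp [le_max_right]
    · apply main
      intro i _
      simp [le_max_right]
    · apply T.injective
      rw [map_sub]
      simp only [LinearEquiv.apply_symm_apply]
      funext i
      simp only [Pi.sub_apply]
      rcases le_total (T δv i) 0 with h | h
      · rw [max_eq_right h, max_eq_left (by linarith : (0:ℝ) ≤ -(T δv i))]
        ring
      · rw [max_eq_left h, max_eq_right (by linarith : -(T δv i) ≤ 0)]
        ring
  -- the fundamental directional-derivative estimate, parametric in the sc-differential
  have hder : ∀ df : A × E → ((A × E) →ₗ[ℝ] E),
      Sc1With ((constScale A).prod SE) SE {p : A × E | p.1 ∈ V ∧ p.2 ∈ SE.level 0}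
        (fun p => π p.1 p.2) df →
      ∀ v ∈ V, ∀ e ∈ SE.level 1, ∀ δv : A, ∀ δe ∈ SE.level 1,
      ∀ t₁ > (0:ℝ), (∀ t : ℝ, 0 < t → t ≤ t₁ → v + t • δv ∈ V) →
      ∀ ε > (0:ℝ), ∃ t₀ > (0:ℝ), ∀ t : ℝ, 0 < t → t ≤ t₀ →
        v + t • δv ∈ V ∧
        SE.lnorm 0 (π (v + t • δv) (e + t • δe) - π v e - t • df (v, e) (δv, δe)) ≤ ε * t := by
    intro df hdf v hv e he δv δe hδe t₁ ht₁ hadm' ε hε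
    have hx : ((v, e) : A × E) ∈ {p : A × E | p.1 ∈ V ∧ p.2 ∈ SE.level 0} ∩
        ((((constScale A).prod SE).level 1 : Submodule ℝ (A × E)) : Set (A × E)) :=
      ⟨⟨hv, hmono (Nat.zero_le 1) he⟩, memSU 1 _ he⟩
    have hδe1 := hnn 1 δe
    have hδv1 := norm_nonneg δv
    have hM0 : (0:ℝ) < ‖δv‖ + SE.lnorm 1 δe + 1 := by linarith
    obtain ⟨δ, hδ, happ⟩ := (hdf.1 (v, e) hx).2 (ε / (‖δv‖ + SE.lnorm 1 δe + 1))
      (div_pos hε hM0)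
    refine ⟨min t₁ (δ / (‖δv‖ + SE.lnorm 1 δe + 1)), lt_min ht₁ (div_pos hδ hM0),
      fun t ht htle => ?_⟩
    have htt₁ : t ≤ t₁ := le_trans htle (min_le_left _ _)
    have hvt : v + t • δv ∈ V := hadm' t ht htt₁
    refine ⟨hvt, ?_⟩
    have hmem1 : ((t • δv, t • δe) : A × E) ∈
        ((((constScale A).prod SE).level 1 : Submodule ℝ (A × E)) : Set (A × E)) :=
      memSU 1 _ (Submodule.smul_mem _ _ hδe)
    have hUmem : ((v, e) : A × E) + (t • δv, t • δe) ∈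
        {p : A × E | p.1 ∈ V ∧ p.2 ∈ SE.level 0} := by
      refine ⟨hvt, ?_⟩
      exact Submodule.add_mem _ (hmono (Nat.zero_le 1) he)
        (Submodule.smul_mem _ _ (hmono (Nat.zero_le 1) hδe))
    have hn1 : ((constScale A).prod SE).lnorm 1 (t • δv, t • δe) =
        t * (‖δv‖ + SE.lnorm 1 δe) := by
      show ‖t • δv‖ + SE.lnorm 1 (t • δe) = _
      rw [norm_smul, nsmulpos 1 t ht δe hδe, Real.norm_eq_abs, abs_of_pos ht]
      ring
    have hlt : ((constScale A).prod SE).lnorm 1 (t • δv, t • δe) < δ := by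
      rw [hn1]
      have h1 : t ≤ δ / (‖δv‖ + SE.lnorm 1 δe + 1) := le_trans htle (min_le_right _ _)
      have h2 : t * (‖δv‖ + SE.lnorm 1 δe) ≤
          δ / (‖δv‖ + SE.lnorm 1 δe + 1) * (‖δv‖ + SE.lnorm 1 δe) :=
        mul_le_mul_of_nonneg_right h1 (by linarith)
      have h3 : δ / (‖δv‖ + SE.lnorm 1 δe + 1) * (‖δv‖ + SE.lnorm 1 δe) < δ := by
        rw [div_mul_eq_mul_div, div_lt_iff₀ hM0]
        nlinarith
      linarith
    have key := happ (t • δv, t • δe) hmem1 hUmem hlt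
    have heq2 : df (v, e) (t • δv, t • δe) = t • df (v, e) (δv, δe) := by
      have h4 : ((t • δv, t • δe) : A × E) = t • ((δv, δe) : A × E) := rfl
      rw [h4, map_smul]
    rw [hn1, heq2] at key
    have heq3 : (fun p : A × E => π p.1 p.2) ((v, e) + (t • δv, t • δe)) =
        π (v + t • δv) (e + t • δe) := rfl
    have heq4 : (fun p : A × E => π p.1 p.2) ((v, e) : A × E) = π v e := rfl
    rw [heq3, heq4] at key
    calc SE.lnorm 0 (π (v + t • δv) (e + t • δe) - π v e - t • df (v, e) (δv, δe))
        ≤ ε / (‖δv‖ + SE.lnorm 1 δe + 1) * (t * (‖δv‖ + SE.lnorm 1 δe)) := key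
      _ ≤ ε * t := by
          rw [div_mul_eq_mul_div, div_le_iff₀ hM0]
          nlinarith
  -- two sc-differentials agree in admissible directions (level-1 increments)
  have huniq_adm : ∀ df : A × E → ((A × E) →ₗ[ℝ] E),
      Sc1With ((constScale A).prod SE) SE {p : A × E | p.1 ∈ V ∧ p.2 ∈ SE.level 0}
        (fun p => π p.1 p.2) df →
      ∀ df' : A × E → ((A × E) →ₗ[ℝ] E),
      Sc1With ((constScale A).prod SE) SE {p : A × E | p.1 ∈ V ∧ p.2 ∈ SE.level 0}
        (fun p => π p.1 p.2) df' →
      ∀ v ∈ V, ∀ e ∈ SE.level 1, ∀ δv : A, ∀ δe ∈ SE.level 1,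
      (∃ t₁ > (0:ℝ), ∀ t : ℝ, 0 < t → t ≤ t₁ → v + t • δv ∈ V) →
      df (v, e) (δv, δe) = df' (v, e) (δv, δe) := by
    intro df hdf df' hdf' v hv e he δv δe hδe hAdm'
    obtain ⟨t₁, ht₁, hA⟩ := hAdm'
    have hz1 : df (v, e) (δv, δe) ∈ SE.level 0 :=
      dfmem df hdf 0 v e δe δv hv he (hmono (Nat.zero_le 1) hδe)
    have hz2 : df' (v, e) (δv, δe) ∈ SE.level 0 :=
      dfmem df' hdf' 0 v e δe δv hv he (hmono (Nat.zero_le 1) hδe)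
    have key : ∀ ε > (0:ℝ), SE.lnorm 0 (df (v, e) (δv, δe) - df' (v, e) (δv, δe)) ≤ ε := by
      intro ε hε
      obtain ⟨t₀, ht₀, h1⟩ := hder df hdf v hv e he δv δe hδe t₁ ht₁ hA (ε/2) (by positivity)
      obtain ⟨t₀', ht₀', h2⟩ := hder df' hdf' v hv e he δv δe hδe t₁ ht₁ hA (ε/2) (by positivity)
      set t := min t₀ t₀' with hts
      have ht : 0 < t := lt_min ht₀ ht₀'
      obtain ⟨hvt, k1⟩ := h1 t ht (min_le_left _ _)
      obtain ⟨_, k2⟩ := h2 t ht (min_le_right _ _)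
      have hπt : π (v + t • δv) (e + t • δe) ∈ SE.level 0 :=
        hlev 0 _ hvt _ (Submodule.add_mem _ (hmono (Nat.zero_le 1) he)
          (Submodule.smul_mem _ _ (hmono (Nat.zero_le 1) hδe)))
      have hπv : π v e ∈ SE.level 0 := hlev 0 v hv e (hmono (Nat.zero_le 1) he)
      have hzz : t • (df (v, e) (δv, δe) - df' (v, e) (δv, δe)) =
          (π (v + t • δv) (e + t • δe) - π v e - t • df' (v, e) (δv, δe)) -
          (π (v + t • δv) (e + t • δe) - π v e - t • df (v, e) (δv, δe)) := by
        rw [smul_sub]; abel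
      have m1 : (π (v + t • δv) (e + t • δe) - π v e - t • df' (v, e) (δv, δe)) ∈
          SE.level 0 := Submodule.sub_mem _ (Submodule.sub_mem _ hπt hπv)
            (Submodule.smul_mem _ _ hz2)
      have m2 : (π (v + t • δv) (e + t • δe) - π v e - t • df (v, e) (δv, δe)) ∈
          SE.level 0 := Submodule.sub_mem _ (Submodule.sub_mem _ hπt hπv)
            (Submodule.smul_mem _ _ hz1)
      have h3 := nsub 0 _ m1 _ m2
      rw [← hzz, nsmulpos 0 t ht _ (Submodule.sub_mem _ hz1 hz2)] at h3
      have h4 : t * SE.lnorm 0 (df (v, e) (δv, δe) - df' (v, e) (δv, δe)) ≤ ε * t := by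
        calc t * SE.lnorm 0 (df (v, e) (δv, δe) - df' (v, e) (δv, δe)) ≤
            SE.lnorm 0 (π (v + t • δv) (e + t • δe) - π v e - t • df' (v, e) (δv, δe)) +
            SE.lnorm 0 (π (v + t • δv) (e + t • δe) - π v e - t • df (v, e) (δv, δe)) := h3
          _ ≤ ε/2 * t + ε/2 * t := add_le_add k2 k1
          _ = ε * t := by ring
      nlinarith [hnn 0 (df (v, e) (δv, δe) - df' (v, e) (δv, δe))]
    have := zero_of_forall _ (Submodule.sub_mem _ hz1 hz2) key
    exact sub_eq_zero.mp this
  -- two sc-differentials agree for all directions, level-1 increments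
  have huniq1 : ∀ df : A × E → ((A × E) →ₗ[ℝ] E),
      Sc1With ((constScale A).prod SE) SE {p : A × E | p.1 ∈ V ∧ p.2 ∈ SE.level 0}
        (fun p => π p.1 p.2) df →
      ∀ df' : A × E → ((A × E) →ₗ[ℝ] E),
      Sc1With ((constScale A).prod SE) SE {p : A × E | p.1 ∈ V ∧ p.2 ∈ SE.level 0}
        (fun p => π p.1 p.2) df' →
      ∀ v ∈ V, ∀ e ∈ SE.level 1, ∀ δv : A, ∀ δe ∈ SE.level 1,
      df (v, e) (δv, δe) = df' (v, e) (δv, δe) := by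
    intro df hdf df' hdf' v hv e he δv δe hδe
    obtain ⟨p, q, hp, hq, hpq⟩ := hadm v hv δv
    have e1 : ((δv, δe) : A × E) = (p, δe) - (q, (0:E)) := by
      rw [hpq]; exact Prod.ext_iff.mpr ⟨rfl, by simp⟩
    rw [e1, map_sub, map_sub,
      huniq_adm df hdf df' hdf' v hv e he p δe hδe hp,
      huniq_adm df hdf df' hdf' v hv e he q 0 (Submodule.zero_mem _) hq]
  -- full uniqueness against the given Df
  have huniq : ∀ df : A × E → ((A × E) →ₗ[ℝ] E),
      Sc1With ((constScale A).prod SE) SE {p : A × E | p.1 ∈ V ∧ p.2 ∈ SE.level 0}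
        (fun p => π p.1 p.2) df →
      ∀ v ∈ V, ∀ e ∈ SE.level 1, ∀ δv : A, ∀ δe ∈ SE.level 0,
      df (v, e) (δv, δe) = Df (v, e) (δv, δe) := by
    intro df hdf v hv e he δv δe hδe
    have hx : ((v, e) : A × E) ∈ {p : A × E | p.1 ∈ V ∧ p.2 ∈ SE.level 0} ∩
        ((((constScale A).prod SE).level 1 : Submodule ℝ (A × E)) : Set (A × E)) :=
      ⟨⟨hv, hmono (Nat.zero_le 1) he⟩, memSU 1 _ he⟩
    obtain ⟨Cd, hCd⟩ := (hdf.1 (v, e) hx).1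
    obtain ⟨Cd', hCd'⟩ := (hDf.1 (v, e) hx).1
    have hz1 : df (v, e) (δv, δe) ∈ SE.level 0 := dfmem df hdf 0 v e δe δv hv he hδe
    have hz2 : Df (v, e) (δv, δe) ∈ SE.level 0 := dfmem Df hDf 0 v e δe δv hv he hδe
    have key : ∀ ε > (0:ℝ), SE.lnorm 0 (df (v, e) (δv, δe) - Df (v, e) (δv, δe)) ≤ ε := by
      intro ε hε
      have hK : (0:ℝ) < max Cd 0 + max Cd' 0 + 1 := by positivity
      obtain ⟨y, hyall, hyn⟩ := hdense 0 δe hδe (ε / (max Cd 0 + max Cd' 0 + 1))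
        (div_pos hε hK)
      have hy0 : y ∈ SE.level 0 := hyall 0
      have hy1 : y ∈ SE.level 1 := hyall 1
      have hpair : ((δv, δe) : A × E) = (δv, y) + ((0:A), δe - y) :=
        Prod.ext_iff.mpr ⟨by simp, by show δe = y + (δe - y); abel⟩
      have hsplit : df (v, e) (δv, δe) - Df (v, e) (δv, δe) =
          df (v, e) (0, δe - y) - Df (v, e) (0, δe - y) := by
        rw [hpair, map_add, map_add, huniq1 df hdf Df hDf v hv e he δv y hy1]
        abel
      rw [hsplit]
      have hmem : ((0:A), δe - y) ∈ ((constScale A).prod SE).level 0 :=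
        memSU 0 _ (Submodule.sub_mem _ hδe hy0)
      have hn0 : ((constScale A).prod SE).lnorm 0 ((0:A), δe - y) = SE.lnorm 0 (δe - y) := by
        show ‖(0:A)‖ + _ = _
        simp
      have b1 := hCd ((0:A), δe - y) hmem
      have b2 := hCd' ((0:A), δe - y) hmem
      rw [hn0] at b1 b2
      have hsub := nsub 0 _ (dfmem df hdf 0 v e (δe - y) 0 hv he
          (Submodule.sub_mem _ hδe hy0)) _
        (dfmem Df hDf 0 v e (δe - y) 0 hv he (Submodule.sub_mem _ hδe hy0))
      have hnd := hnn 0 (δe - y)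
      have c1 : SE.lnorm 0 (δe - y) ≤ ε / (max Cd 0 + max Cd' 0 + 1) := le_of_lt hyn
      calc SE.lnorm 0 (df (v, e) (0, δe - y) - Df (v, e) (0, δe - y)) ≤
          SE.lnorm 0 (df (v, e) (0, δe - y)) + SE.lnorm 0 (Df (v, e) (0, δe - y)) := hsub
        _ ≤ max Cd 0 * SE.lnorm 0 (δe - y) + max Cd' 0 * SE.lnorm 0 (δe - y) := by
            have d1 : Cd * SE.lnorm 0 (δe - y) ≤ max Cd 0 * SE.lnorm 0 (δe - y) :=
              mul_le_mul_of_nonneg_right (le_max_left _ _) hnd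
            have d2 : Cd' * SE.lnorm 0 (δe - y) ≤ max Cd' 0 * SE.lnorm 0 (δe - y) :=
              mul_le_mul_of_nonneg_right (le_max_left _ _) hnd
            exact add_le_add (le_trans b1 d1) (le_trans b2 d2)
        _ ≤ (max Cd 0 + max Cd' 0) * (ε / (max Cd 0 + max Cd' 0 + 1)) := by
            have := mul_le_mul_of_nonneg_left c1 (by positivity :
              (0:ℝ) ≤ max Cd 0 + max Cd' 0)
            linarith [this]
        _ ≤ ε := by
            rw [div_eq_inv_mul]
            have h9 : (max Cd 0 + max Cd' 0) ≤ (max Cd 0 + max Cd' 0 + 1) := by linarith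
            have h10 := mul_le_mul_of_nonneg_right h9 (by positivity :
              (0:ℝ) ≤ (max Cd 0 + max Cd' 0 + 1)⁻¹ * ε)
            calc (max Cd 0 + max Cd' 0) * ((max Cd 0 + max Cd' 0 + 1)⁻¹ * ε) ≤
                (max Cd 0 + max Cd' 0 + 1) * ((max Cd 0 + max Cd' 0 + 1)⁻¹ * ε) := h10
              _ = ε := by field_simp
    have := zero_of_forall _ (Submodule.sub_mem _ hz1 hz2) key
    exact sub_eq_zero.mp this
  -- the partial derivative in the fiber direction is π v
  have FactA1 : ∀ v ∈ V, ∀ e ∈ SE.level 1, ∀ δe ∈ SE.level 1,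
      Df (v, e) ((0:A), δe) = π v δe := by
    intro v hv e he δe hδe
    have hAdm : ∀ t : ℝ, 0 < t → t ≤ 1 → v + t • (0:A) ∈ V := by
      intro t _ _; simpa using hv
    have hπ : π v δe ∈ SE.level 0 := hlev 0 v hv δe (hmono (Nat.zero_le 1) hδe)
    have hd : Df (v, e) ((0:A), δe) ∈ SE.level 0 :=
      dfmem Df hDf 0 v e δe 0 hv he (hmono (Nat.zero_le 1) hδe)
    have key : ∀ ε > (0:ℝ), SE.lnorm 0 (Df (v, e) ((0:A), δe) - π v δe) ≤ ε := by
      intro ε hε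
      obtain ⟨t₀, ht₀, h1⟩ := hder Df hDf v hv e he 0 δe hδe 1 one_pos hAdm ε hε
      obtain ⟨_, k1⟩ := h1 t₀ ht₀ le_rfl
      have e2 : v + t₀ • (0:A) = v := by simp
      have e3 : π v (e + t₀ • δe) = π v e + t₀ • π v δe := by
        rw [padd v hv e (hmono (Nat.zero_le 1) he) (t₀ • δe)
          (Submodule.smul_mem _ _ (hmono (Nat.zero_le 1) hδe)),
          psml v hv t₀ δe (hmono (Nat.zero_le 1) hδe)]
      rw [e2, e3] at k1
      have e4 : π v e + t₀ • π v δe - π v e - t₀ • Df (v, e) ((0:A), δe) =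
          t₀ • (π v δe - Df (v, e) ((0:A), δe)) := by
        rw [smul_sub]; abel
      rw [e4, nsmulpos 0 t₀ ht₀ _ (Submodule.sub_mem _ hπ hd)] at k1
      have e5 : SE.lnorm 0 (Df (v, e) ((0:A), δe) - π v δe) =
          SE.lnorm 0 (π v δe - Df (v, e) ((0:A), δe)) := by
        rw [show Df (v, e) ((0:A), δe) - π v δe = -(π v δe - Df (v, e) ((0:A), δe)) by abel,
          nneg 0 _ (Submodule.sub_mem _ hπ hd)]
      rw [e5]
      nlinarith
    have := zero_of_forall _ (Submodule.sub_mem _ hd hπ) key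
    exact sub_eq_zero.mp this
  -- extension to level-0 fiber directions by density
  have FactA : ∀ v ∈ V, ∀ e ∈ SE.level 1, ∀ δe ∈ SE.level 0,
      Df (v, e) ((0:A), δe) = π v δe := by
    intro v hv e he δe hδe
    have hx : ((v, e) : A × E) ∈ {p : A × E | p.1 ∈ V ∧ p.2 ∈ SE.level 0} ∩
        ((((constScale A).prod SE).level 1 : Submodule ℝ (A × E)) : Set (A × E)) :=
      ⟨⟨hv, hmono (Nat.zero_le 1) he⟩, memSU 1 _ he⟩
    obtain ⟨Cd, hCd⟩ := (hDf.1 (v, e) hx).1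
    obtain ⟨Cp, hCp⟩ := hbdd 0 v hv
    have hπ : π v δe ∈ SE.level 0 := hlev 0 v hv δe hδe
    have hd : Df (v, e) ((0:A), δe) ∈ SE.level 0 := dfmem Df hDf 0 v e δe 0 hv he hδe
    have key : ∀ ε > (0:ℝ), SE.lnorm 0 (Df (v, e) ((0:A), δe) - π v δe) ≤ ε := by
      intro ε hε
      have hK : (0:ℝ) < max Cd 0 + max Cp 0 + 1 := by positivity
      obtain ⟨y, hyall, hyn⟩ := hdense 0 δe hδe (ε / (max Cd 0 + max Cp 0 + 1))
        (div_pos hε hK)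
      have hy0 : y ∈ SE.level 0 := hyall 0
      have hy1 : y ∈ SE.level 1 := hyall 1
      have hpair : ((0:A), δe) = ((0:A), y) + ((0:A), δe - y) :=
        Prod.ext_iff.mpr ⟨by simp, by show δe = y + (δe - y); abel⟩
      have hπsplit : π v δe = π v y + π v (δe - y) := by
        have h6 := padd v hv y hy0 (δe - y) (Submodule.sub_mem _ hδe hy0)
        have e6 : y + (δe - y) = δe := by abel
        rw [e6] at h6
        exact h6
      have heq : Df (v, e) ((0:A), δe) - π v δe =
          Df (v, e) ((0:A), δe - y) - π v (δe - y) := by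
        rw [hpair, map_add, hπsplit, FactA1 v hv e he y hy1]
        abel
      rw [heq]
      have hmem : ((0:A), δe - y) ∈ ((constScale A).prod SE).level 0 :=
        memSU 0 _ (Submodule.sub_mem _ hδe hy0)
      have hn0 : ((constScale A).prod SE).lnorm 0 ((0:A), δe - y) = SE.lnorm 0 (δe - y) := by
        show ‖(0:A)‖ + _ = _
        simp
      have b1 := hCd ((0:A), δe - y) hmem
      rw [hn0] at b1
      have b2 := hCp (δe - y) (Submodule.sub_mem _ hδe hy0)
      have hsub := nsub 0 _ (dfmem Df hDf 0 v e (δe - y) 0 hv he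
          (Submodule.sub_mem _ hδe hy0)) _
        (hlev 0 v hv _ (Submodule.sub_mem _ hδe hy0))
      have hnd := hnn 0 (δe - y)
      have c1 : SE.lnorm 0 (δe - y) ≤ ε / (max Cd 0 + max Cp 0 + 1) := le_of_lt hyn
      calc SE.lnorm 0 (Df (v, e) ((0:A), δe - y) - π v (δe - y)) ≤
          SE.lnorm 0 (Df (v, e) ((0:A), δe - y)) + SE.lnorm 0 (π v (δe - y)) := hsub
        _ ≤ max Cd 0 * SE.lnorm 0 (δe - y) + max Cp 0 * SE.lnorm 0 (δe - y) := by
            have d1 : Cd * SE.lnorm 0 (δe - y) ≤ max Cd 0 * SE.lnorm 0 (δe - y) :=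
              mul_le_mul_of_nonneg_right (le_max_left _ _) hnd
            have d2 : Cp * SE.lnorm 0 (δe - y) ≤ max Cp 0 * SE.lnorm 0 (δe - y) :=
              mul_le_mul_of_nonneg_right (le_max_left _ _) hnd
            exact add_le_add (le_trans b1 d1) (le_trans b2 d2)
        _ ≤ (max Cd 0 + max Cp 0) * (ε / (max Cd 0 + max Cp 0 + 1)) := by
            have := mul_le_mul_of_nonneg_left c1 (by positivity :
              (0:ℝ) ≤ max Cd 0 + max Cp 0)
            linarith [this]
        _ ≤ ε := by
            rw [div_eq_inv_mul]
            have h9 : (max Cd 0 + max Cp 0) ≤ (max Cd 0 + max Cp 0 + 1) := by linarith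
            have h10 := mul_le_mul_of_nonneg_right h9 (by positivity :
              (0:ℝ) ≤ (max Cd 0 + max Cp 0 + 1)⁻¹ * ε)
            calc (max Cd 0 + max Cp 0) * ((max Cd 0 + max Cp 0 + 1)⁻¹ * ε) ≤
                (max Cd 0 + max Cp 0 + 1) * ((max Cd 0 + max Cp 0 + 1)⁻¹ * ε) := h10
              _ = ε := by field_simp
    have := zero_of_forall _ (Submodule.sub_mem _ hd hπ) key
    exact sub_eq_zero.mp this
  have psub : ∀ v' ∈ V, ∀ a ∈ SE.level 0, ∀ b ∈ SE.level 0,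
      π v' (a - b) = π v' a - π v' b := by
    intro v' hv' a ha b hb
    have h1 := padd v' hv' a ha ((-1 : ℝ) • b) (Submodule.smul_mem _ _ hb)
    have h2 := psml v' hv' (-1) b hb
    rw [h2] at h1
    rw [sub_eq_add_neg, ← neg_one_smul ℝ b, h1, neg_one_smul, ← sub_eq_add_neg]
  have ntri3 : ∀ a ∈ SE.level 0, ∀ b ∈ SE.level 0, ∀ c ∈ SE.level 0,
      SE.lnorm 0 (a + b - c) ≤ SE.lnorm 0 a + SE.lnorm 0 b + SE.lnorm 0 c := by
    intro a ha b hb c hc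
    have h1 := nsub 0 (a + b) (Submodule.add_mem _ ha hb) c hc
    have h2 := htri 0 a ha b hb
    linarith
  -- additivity of the δv-part in the base point, admissible directions
  have FactB_add_adm : ∀ v ∈ V, ∀ e ∈ SE.level 1, ∀ e' ∈ SE.level 1, ∀ δv : A,
      (∃ t₁ > (0:ℝ), ∀ t : ℝ, 0 < t → t ≤ t₁ → v + t • δv ∈ V) →
      Df (v, e + e') (δv, (0:E)) = Df (v, e) (δv, (0:E)) + Df (v, e') (δv, (0:E)) := by
    intro v hv e he e' he' δv hA'
    obtain ⟨t₁, ht₁, hA⟩ := hA'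
    have hee' : e + e' ∈ SE.level 1 := Submodule.add_mem _ he he'
    have hd1 : Df (v, e) (δv, (0:E)) ∈ SE.level 0 :=
      dfmem Df hDf 0 v e 0 δv hv he (Submodule.zero_mem _)
    have hd2 : Df (v, e') (δv, (0:E)) ∈ SE.level 0 :=
      dfmem Df hDf 0 v e' 0 δv hv he' (Submodule.zero_mem _)
    have hd3 : Df (v, e + e') (δv, (0:E)) ∈ SE.level 0 :=
      dfmem Df hDf 0 v (e + e') 0 δv hv hee' (Submodule.zero_mem _)
    have hzmem : Df (v, e + e') (δv, (0:E)) -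
        (Df (v, e) (δv, (0:E)) + Df (v, e') (δv, (0:E))) ∈ SE.level 0 :=
      Submodule.sub_mem _ hd3 (Submodule.add_mem _ hd1 hd2)
    have key : ∀ ε > (0:ℝ), SE.lnorm 0 (Df (v, e + e') (δv, (0:E)) -
        (Df (v, e) (δv, (0:E)) + Df (v, e') (δv, (0:E)))) ≤ ε := by
      intro ε hε
      obtain ⟨ta, hta, h1⟩ := hder Df hDf v hv e he δv 0 (Submodule.zero_mem _) t₁ ht₁ hA
        (ε/3) (by positivity)
      obtain ⟨tb, htb, h2⟩ := hder Df hDf v hv e' he' δv 0 (Submodule.zero_mem _) t₁ ht₁ hA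
        (ε/3) (by positivity)
      obtain ⟨tc, htc, h3⟩ := hder Df hDf v hv (e + e') hee' δv 0 (Submodule.zero_mem _)
        t₁ ht₁ hA (ε/3) (by positivity)
      set t := min ta (min tb tc) with hts
      have ht : 0 < t := lt_min hta (lt_min htb htc)
      obtain ⟨hvt, k1⟩ := h1 t ht (min_le_left _ _)
      obtain ⟨_, k2⟩ := h2 t ht (le_trans (min_le_right _ _) (min_le_left _ _))
      obtain ⟨_, k3⟩ := h3 t ht (le_trans (min_le_right _ _) (min_le_right _ _))
      simp only [smul_zero, add_zero] at k1 k2 k3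
      have he0 : e ∈ SE.level 0 := hmono (Nat.zero_le 1) he
      have he0' : e' ∈ SE.level 0 := hmono (Nat.zero_le 1) he'
      have ha1 := padd (v + t • δv) hvt e he0 e' he0'
      have ha2 := padd v hv e he0 e' he0'
      have hzz : t • (Df (v, e + e') (δv, (0:E)) -
          (Df (v, e) (δv, (0:E)) + Df (v, e') (δv, (0:E)))) =
          (π (v + t • δv) e - π v e - t • Df (v, e) (δv, (0:E))) +
          (π (v + t • δv) e' - π v e' - t • Df (v, e') (δv, (0:E))) -
          (π (v + t • δv) (e + e') - π v (e + e') - t • Df (v, e + e') (δv, (0:E))) := by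
        rw [ha1, ha2]
        module
      have m3 : (π (v + t • δv) (e + e') - π v (e + e') -
          t • Df (v, e + e') (δv, (0:E))) ∈ SE.level 0 :=
        Submodule.sub_mem _ (Submodule.sub_mem _
          (hlev 0 _ hvt _ (Submodule.add_mem _ he0 he0'))
          (hlev 0 _ hv _ (Submodule.add_mem _ he0 he0'))) (Submodule.smul_mem _ _ hd3)
      have m1 : (π (v + t • δv) e - π v e - t • Df (v, e) (δv, (0:E))) ∈ SE.level 0 :=
        Submodule.sub_mem _ (Submodule.sub_mem _ (hlev 0 _ hvt _ he0) (hlev 0 _ hv _ he0))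
          (Submodule.smul_mem _ _ hd1)
      have m2 : (π (v + t • δv) e' - π v e' - t • Df (v, e') (δv, (0:E))) ∈ SE.level 0 :=
        Submodule.sub_mem _ (Submodule.sub_mem _ (hlev 0 _ hvt _ he0') (hlev 0 _ hv _ he0'))
          (Submodule.smul_mem _ _ hd2)
      have h4 := ntri3 _ m1 _ m2 _ m3
      rw [← hzz, nsmulpos 0 t ht _ hzmem] at h4
      have h6 : t * SE.lnorm 0 (Df (v, e + e') (δv, (0:E)) -
          (Df (v, e) (δv, (0:E)) + Df (v, e') (δv, (0:E)))) ≤ ε * t := by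
        linarith
      nlinarith [hnn 0 (Df (v, e + e') (δv, (0:E)) -
        (Df (v, e) (δv, (0:E)) + Df (v, e') (δv, (0:E))))]
    have := zero_of_forall _ hzmem key
    exact sub_eq_zero.mp this
  -- homogeneity of the δv-part in the base point, admissible directions
  have FactB_smul_adm : ∀ v ∈ V, ∀ e ∈ SE.level 1, ∀ c : ℝ, ∀ δv : A,
      (∃ t₁ > (0:ℝ), ∀ t : ℝ, 0 < t → t ≤ t₁ → v + t • δv ∈ V) →
      Df (v, c • e) (δv, (0:E)) = c • Df (v, e) (δv, (0:E)) := by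
    intro v hv e he c δv hA'
    obtain ⟨t₁, ht₁, hA⟩ := hA'
    have hce : c • e ∈ SE.level 1 := Submodule.smul_mem _ _ he
    have hd1 : Df (v, e) (δv, (0:E)) ∈ SE.level 0 :=
      dfmem Df hDf 0 v e 0 δv hv he (Submodule.zero_mem _)
    have hd3 : Df (v, c • e) (δv, (0:E)) ∈ SE.level 0 :=
      dfmem Df hDf 0 v (c • e) 0 δv hv hce (Submodule.zero_mem _)
    have hzmem : Df (v, c • e) (δv, (0:E)) - c • Df (v, e) (δv, (0:E)) ∈ SE.level 0 :=
      Submodule.sub_mem _ hd3 (Submodule.smul_mem _ _ hd1)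
    have key : ∀ ε > (0:ℝ), SE.lnorm 0 (Df (v, c • e) (δv, (0:E)) -
        c • Df (v, e) (δv, (0:E))) ≤ ε := by
      intro ε hε
      have hc1 : (0:ℝ) < |c| + 1 := by positivity
      obtain ⟨ta, hta, h1⟩ := hder Df hDf v hv e he δv 0 (Submodule.zero_mem _) t₁ ht₁ hA
        (ε/(|c|+1)) (div_pos hε hc1)
      obtain ⟨tc, htc, h3⟩ := hder Df hDf v hv (c • e) hce δv 0 (Submodule.zero_mem _)
        t₁ ht₁ hA (ε/(|c|+1)) (div_pos hε hc1)
      set t := min ta tc with hts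
      have ht : 0 < t := lt_min hta htc
      obtain ⟨hvt, k1⟩ := h1 t ht (min_le_left _ _)
      obtain ⟨_, k3⟩ := h3 t ht (min_le_right _ _)
      simp only [smul_zero, add_zero] at k1 k3
      have he0 : e ∈ SE.level 0 := hmono (Nat.zero_le 1) he
      have ha1 := psml (v + t • δv) hvt c e he0
      have ha2 := psml v hv c e he0
      have hzz : t • (Df (v, c • e) (δv, (0:E)) - c • Df (v, e) (δv, (0:E))) =
          c • (π (v + t • δv) e - π v e - t • Df (v, e) (δv, (0:E))) -
          (π (v + t • δv) (c • e) - π v (c • e) - t • Df (v, c • e) (δv, (0:E))) := by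
        rw [ha1, ha2]
        module
      have m3 : (π (v + t • δv) (c • e) - π v (c • e) -
          t • Df (v, c • e) (δv, (0:E))) ∈ SE.level 0 :=
        Submodule.sub_mem _ (Submodule.sub_mem _
          (hlev 0 _ hvt _ (Submodule.smul_mem _ _ he0))
          (hlev 0 _ hv _ (Submodule.smul_mem _ _ he0))) (Submodule.smul_mem _ _ hd3)
      have m1 : (π (v + t • δv) e - π v e - t • Df (v, e) (δv, (0:E))) ∈ SE.level 0 :=
        Submodule.sub_mem _ (Submodule.sub_mem _ (hlev 0 _ hvt _ he0) (hlev 0 _ hv _ he0))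
          (Submodule.smul_mem _ _ hd1)
      have h4 := nsub 0 _ (Submodule.smul_mem _ c m1) _ m3
      rw [← hzz, nsmulpos 0 t ht _ hzmem, nsmul 0 c _ m1] at h4
      have h6 : t * SE.lnorm 0 (Df (v, c • e) (δv, (0:E)) - c • Df (v, e) (δv, (0:E))) ≤
          ε * t := by
        have habs : (0:ℝ) ≤ |c| := abs_nonneg c
        have h7 : |c| * SE.lnorm 0 (π (v + t • δv) e - π v e - t • Df (v, e) (δv, (0:E))) ≤
            |c| * (ε/(|c|+1) * t) := mul_le_mul_of_nonneg_left k1 habs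
        have h8 : ε/(|c|+1) * t + |c| * (ε/(|c|+1) * t) = ε * t := by
          field_simp
          ring
        linarith [k3]
      nlinarith [hnn 0 (Df (v, c • e) (δv, (0:E)) - c • Df (v, e) (δv, (0:E)))]
    have := zero_of_forall _ hzmem key
    exact sub_eq_zero.mp this
  -- extension to all directions δv
  have FactB_add : ∀ v ∈ V, ∀ e ∈ SE.level 1, ∀ e' ∈ SE.level 1, ∀ δv : A,
      Df (v, e + e') (δv, (0:E)) = Df (v, e) (δv, (0:E)) + Df (v, e') (δv, (0:E)) := by
    intro v hv e he e' he' δv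
    obtain ⟨p, q, hp, hq, hpq⟩ := hadm v hv δv
    have hsp : ((δv, (0:E)) : A × E) = (p, (0:E)) - (q, (0:E)) :=
      Prod.ext_iff.mpr ⟨by simp [hpq], by simp⟩
    rw [hsp]
    simp only [map_sub]
    rw [FactB_add_adm v hv e he e' he' p hp, FactB_add_adm v hv e he e' he' q hq]
    abel
  have FactB_smul : ∀ v ∈ V, ∀ e ∈ SE.level 1, ∀ c : ℝ, ∀ δv : A,
      Df (v, c • e) (δv, (0:E)) = c • Df (v, e) (δv, (0:E)) := by
    intro v hv e he c δv
    obtain ⟨p, q, hp, hq, hpq⟩ := hadm v hv δv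
    have hsp : ((δv, (0:E)) : A × E) = (p, (0:E)) - (q, (0:E)) :=
      Prod.ext_iff.mpr ⟨by simp [hpq], by simp⟩
    rw [hsp]
    simp only [map_sub]
    rw [FactB_smul_adm v hv e he c p hp, FactB_smul_adm v hv e he c q hq, smul_sub]
  -- decomposition of the differential
  have Dsplit : ∀ v ∈ V, ∀ e ∈ SE.level 1, ∀ δv : A, ∀ δe ∈ SE.level 0,
      Df (v, e) (δv, δe) = Df (v, e) (δv, (0:E)) + π v δe := by
    intro v hv e he δv δe hδe
    have hsp : ((δv, δe) : A × E) = (δv, (0:E)) + ((0:A), δe) :=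
      Prod.ext_iff.mpr ⟨by simp, by simp⟩
    rw [hsp, map_add, FactA v hv e he δe hδe]
  -- the key projection identity, admissible directions
  have FactStar_adm : ∀ v ∈ V, ∀ e ∈ SE.level 1, ∀ δv : A,
      (∃ t₁ > (0:ℝ), ∀ t : ℝ, 0 < t → t ≤ t₁ → v + t • δv ∈ V) →
      Df (v, π v e) (δv, (0:E)) + π v (Df (v, e) (δv, (0:E))) = Df (v, e) (δv, (0:E)) := by
    intro v hv e he δv hA'
    obtain ⟨t₁, ht₁, hA⟩ := hA'
    have he0 : e ∈ SE.level 0 := hmono (Nat.zero_le 1) he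
    have hπe1 : π v e ∈ SE.level 1 := hlev 1 v hv e he
    have hπe0 : π v e ∈ SE.level 0 := hmono (Nat.zero_le 1) hπe1
    have hw : Df (v, e) (δv, (0:E)) ∈ SE.level 0 :=
      dfmem Df hDf 0 v e 0 δv hv he (Submodule.zero_mem _)
    have hw' : Df (v, π v e) (δv, (0:E)) ∈ SE.level 0 :=
      dfmem Df hDf 0 v (π v e) 0 δv hv hπe1 (Submodule.zero_mem _)
    have hπw : π v (Df (v, e) (δv, (0:E))) ∈ SE.level 0 := hlev 0 v hv _ hw
    have hzmem : Df (v, π v e) (δv, (0:E)) + π v (Df (v, e) (δv, (0:E))) -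
        Df (v, e) (δv, (0:E)) ∈ SE.level 0 :=
      Submodule.sub_mem _ (Submodule.add_mem _ hw' hπw) hw
    have key : ∀ ε > (0:ℝ), SE.lnorm 0 (Df (v, π v e) (δv, (0:E)) +
        π v (Df (v, e) (δv, (0:E))) - Df (v, e) (δv, (0:E))) ≤ ε := by
      intro ε hε
      have hc0 : Sc0 ((constScale A).prod SE) SE {p : A × E | p.1 ∈ V ∧ p.2 ∈ SE.level 0}
          (fun p => π p.1 p.2) := hsm 0
      have hx₀ : ((v, Df (v, e) (δv, (0:E))) : A × E) ∈
          {p : A × E | p.1 ∈ V ∧ p.2 ∈ SE.level 0} ∩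
          ((((constScale A).prod SE).level 0 : Submodule ℝ (A × E)) : Set (A × E)) :=
        ⟨⟨hv, hw⟩, memSU 0 _ hw⟩
      obtain ⟨δ', hδ', hcont⟩ := (hc0 0).2 _ hx₀ (ε/3) (by positivity)
      have hε₁0 : (0:ℝ) < min (ε/3) (δ'/2) := lt_min (by positivity) (by positivity)
      obtain ⟨ta, hta, h1⟩ := hder Df hDf v hv e he δv 0 (Submodule.zero_mem _) t₁ ht₁ hA
        (min (ε/3) (δ'/2)) hε₁0
      obtain ⟨tb, htb, h2⟩ := hder Df hDf v hv (π v e) hπe1 δv 0 (Submodule.zero_mem _)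
        t₁ ht₁ hA (min (ε/3) (δ'/2)) hε₁0
      set t := min (min ta tb) (δ' / (2 * (‖δv‖ + 1))) with hts
      have ht : 0 < t := lt_min (lt_min hta htb) (by positivity)
      have htne : t ≠ 0 := ne_of_gt ht
      obtain ⟨hvt, k1⟩ := h1 t ht (le_trans (min_le_left _ _) (min_le_left _ _))
      obtain ⟨_, k2⟩ := h2 t ht (le_trans (min_le_left _ _) (min_le_right _ _))
      simp only [smul_zero, add_zero] at k1 k2
      -- abbreviations via the explicit terms
      have hXmem : π (v + t • δv) e - π v e ∈ SE.level 0 :=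
        Submodule.sub_mem _ (hlev 0 _ hvt e he0) (hlev 0 v hv e he0)
      have humem : (1/t) • (π (v + t • δv) e - π v e) ∈ SE.level 0 :=
        Submodule.smul_mem _ _ hXmem
      have hu : t • ((1/t) • (π (v + t • δv) e - π v e)) = π (v + t • δv) e - π v e := by
        rw [smul_smul, mul_one_div_cancel htne, one_smul]
      have hid : π (v + t • δv) (π (v + t • δv) e - π v e) =
          (π (v + t • δv) e - π v e) -
          (π (v + t • δv) (π v e) - π v (π v e)) := by
        have p1 : π (v + t • δv) (π (v + t • δv) e) = π (v + t • δv) e :=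
          pproj (v + t • δv) hvt e he0
        have p2 : π v (π v e) = π v e := pproj v hv e he0
        have p3 : π (v + t • δv) (π (v + t • δv) e - π v e) =
            π (v + t • δv) (π (v + t • δv) e) - π (v + t • δv) (π v e) :=
          psub (v + t • δv) hvt _ (hlev 0 _ hvt e he0) _ hπe0
        rw [p3, p1, p2]
        abel
      have hpu : π (v + t • δv) (π (v + t • δv) e - π v e) =
          t • π (v + t • δv) ((1/t) • (π (v + t • δv) e - π v e)) := by
        conv_lhs => rw [← hu]
        rw [psml (v + t • δv) hvt t _ humem]
      have hXY : (π (v + t • δv) e - π v e) -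
          (π (v + t • δv) (π v e) - π v (π v e)) =
          t • π (v + t • δv) ((1/t) • (π (v + t • δv) e - π v e)) := by
        rw [← hpu, ← hid]
      have hzz : t • (Df (v, π v e) (δv, (0:E)) + π v (Df (v, e) (δv, (0:E))) -
          Df (v, e) (δv, (0:E))) =
          t • (π v (Df (v, e) (δv, (0:E))) -
            π (v + t • δv) ((1/t) • (π (v + t • δv) e - π v e))) +
          (π (v + t • δv) e - π v e - t • Df (v, e) (δv, (0:E))) -
          (π (v + t • δv) (π v e) - π v (π v e) - t • Df (v, π v e) (δv, (0:E))) := by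
        have h7 : t • π (v + t • δv) ((1/t) • (π (v + t • δv) e - π v e)) =
            (π (v + t • δv) e - π v e) -
            (π (v + t • δv) (π v e) - π v (π v e)) := hXY.symm
        rw [smul_sub t (π v (Df (v, e) (δv, (0:E))))
          (π (v + t • δv) ((1/t) • (π (v + t • δv) e - π v e))), h7]
        module
      -- continuity estimate
      have huw : (1/t) • (π (v + t • δv) e - π v e) - Df (v, e) (δv, (0:E)) =
          (1/t) • (π (v + t • δv) e - π v e - t • Df (v, e) (δv, (0:E))) := by
        rw [eq_comm, smul_sub, smul_smul, one_div_mul_cancel htne, one_smul]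
      have hdiff : ((v + t • δv, (1/t) • (π (v + t • δv) e - π v e)) : A × E) -
          (v, Df (v, e) (δv, (0:E))) =
          (t • δv, (1/t) • (π (v + t • δv) e - π v e) - Df (v, e) (δv, (0:E))) :=
        Prod.ext_iff.mpr ⟨by show v + t • δv - v = t • δv; abel, rfl⟩
      have hnrm : ((constScale A).prod SE).lnorm 0
          (((v + t • δv, (1/t) • (π (v + t • δv) e - π v e)) : A × E) -
            (v, Df (v, e) (δv, (0:E)))) < δ' := by
        rw [hdiff]
        show ‖t • δv‖ + SE.lnorm 0 ((1/t) • (π (v + t • δv) e - π v e) -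
          Df (v, e) (δv, (0:E))) < δ'
        have b1 : ‖t • δv‖ < δ'/2 := by
          rw [norm_smul, Real.norm_eq_abs, abs_of_pos ht]
          have h8 : t ≤ δ' / (2 * (‖δv‖ + 1)) := min_le_right _ _
          have h9 : t * ‖δv‖ ≤ δ' / (2 * (‖δv‖ + 1)) * ‖δv‖ :=
            mul_le_mul_of_nonneg_right h8 (norm_nonneg δv)
          have h10 : δ' / (2 * (‖δv‖ + 1)) * ‖δv‖ < δ'/2 := by
            rw [div_mul_eq_mul_div, div_lt_iff₀ (by positivity)]
            nlinarith [norm_nonneg δv]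
          linarith
        have b2 : SE.lnorm 0 ((1/t) • (π (v + t • δv) e - π v e) -
            Df (v, e) (δv, (0:E))) ≤ δ'/2 := by
          rw [huw, nsmulpos 0 (1/t) (by positivity) _
            (Submodule.sub_mem _ hXmem (Submodule.smul_mem _ _ hw))]
          have h11 : (1/t) * SE.lnorm 0 (π (v + t • δv) e - π v e -
              t • Df (v, e) (δv, (0:E))) ≤ (1/t) * (min (ε/3) (δ'/2) * t) :=
            mul_le_mul_of_nonneg_left k1 (by positivity)
          have h12 : (1/t) * (min (ε/3) (δ'/2) * t) = min (ε/3) (δ'/2) := by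
            field_simp
          have h13 : min (ε/3) (δ'/2) ≤ δ'/2 := min_le_right _ _
          linarith
        linarith
      have hcy := hcont ((v + t • δv, (1/t) • (π (v + t • δv) e - π v e)) : A × E)
        ⟨⟨hvt, humem⟩, memSU 0 _ humem⟩ hnrm
      have hcy' : SE.lnorm 0 (π (v + t • δv) ((1/t) • (π (v + t • δv) e - π v e)) -
          π v (Df (v, e) (δv, (0:E)))) < ε/3 := hcy
      -- assemble
      have hπumem : π (v + t • δv) ((1/t) • (π (v + t • δv) e - π v e)) ∈ SE.level 0 :=
        hlev 0 _ hvt _ humem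
      have m1 : (π (v + t • δv) e - π v e - t • Df (v, e) (δv, (0:E))) ∈ SE.level 0 :=
        Submodule.sub_mem _ hXmem (Submodule.smul_mem _ _ hw)
      have m2 : (π (v + t • δv) (π v e) - π v (π v e) -
          t • Df (v, π v e) (δv, (0:E))) ∈ SE.level 0 :=
        Submodule.sub_mem _ (Submodule.sub_mem _ (hlev 0 _ hvt _ hπe0)
          (hlev 0 v hv _ hπe0)) (Submodule.smul_mem _ _ hw')
      have hswap : SE.lnorm 0 (t • (π v (Df (v, e) (δv, (0:E))) -
          π (v + t • δv) ((1/t) • (π (v + t • δv) e - π v e)))) =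
          t * SE.lnorm 0 (π (v + t • δv) ((1/t) • (π (v + t • δv) e - π v e)) -
            π v (Df (v, e) (δv, (0:E)))) := by
        rw [nsmulpos 0 t ht _ (Submodule.sub_mem _ hπw hπumem),
          show π v (Df (v, e) (δv, (0:E))) -
              π (v + t • δv) ((1/t) • (π (v + t • δv) e - π v e)) =
            -(π (v + t • δv) ((1/t) • (π (v + t • δv) e - π v e)) -
              π v (Df (v, e) (δv, (0:E)))) by abel,
          nneg 0 _ (Submodule.sub_mem _ hπumem hπw)]
      have h14 := ntri3 _ (Submodule.smul_mem _ t (Submodule.sub_mem _ hπw hπumem)) _ m1 _ m2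
      rw [← hzz, nsmulpos 0 t ht _ hzmem, hswap] at h14
      have h15 : min (ε/3) (δ'/2) ≤ ε/3 := min_le_left _ _
      have h16 : t * SE.lnorm 0 (Df (v, π v e) (δv, (0:E)) +
          π v (Df (v, e) (δv, (0:E))) - Df (v, e) (δv, (0:E))) ≤ ε * t := by
        nlinarith [hcy', k1, k2]
      nlinarith [hnn 0 (Df (v, π v e) (δv, (0:E)) +
        π v (Df (v, e) (δv, (0:E))) - Df (v, e) (δv, (0:E)))]
    have hfin := zero_of_forall _ hzmem key
    have := sub_eq_zero.mp hfin
    exact this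
  -- extension to all directions δv
  have FactStar : ∀ v ∈ V, ∀ e ∈ SE.level 1, ∀ δv : A,
      Df (v, π v e) (δv, (0:E)) + π v (Df (v, e) (δv, (0:E))) = Df (v, e) (δv, (0:E)) := by
    intro v hv e he δv
    obtain ⟨p, q, hp, hq, hpq⟩ := hadm v hv δv
    have hsp : ((δv, (0:E)) : A × E) = (p, (0:E)) - (q, (0:E)) :=
      Prod.ext_iff.mpr ⟨by simp [hpq], by simp⟩
    have hwp : Df (v, e) (p, (0:E)) ∈ SE.level 0 :=
      dfmem Df hDf 0 v e 0 p hv he (Submodule.zero_mem _)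
    have hwq : Df (v, e) (q, (0:E)) ∈ SE.level 0 :=
      dfmem Df hDf 0 v e 0 q hv he (Submodule.zero_mem _)
    have s1 := FactStar_adm v hv e he p hp
    have s2 := FactStar_adm v hv e he q hq
    rw [hsp]
    simp only [map_sub]
    rw [psub v hv _ hwp _ hwq, eq_sub_of_add_eq s1, eq_sub_of_add_eq s2]
    abel
  -- now assemble the splicing conditions
  refine ⟨?_, ?_, ?_, ?_, ?_, ?_, ?_⟩
  -- 1: relatively open subset of a partial cone
  · obtain ⟨C, hC, O, hO, hVeq⟩ := hcone
    refine ⟨{a : A × A | a.1 ∈ C}, isPartialCone_fst_preimage hC,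
      Prod.fst ⁻¹' O, hO.preimage continuous_fst, ?_⟩
    ext a
    simp [hVeq]
  -- 2: level preservation
  · intro m a ha b hb
    have hb1 : b.1 ∈ SE.level (m+1) := (Submodule.mem_prod.mp hb).1
    have hb2 : b.2 ∈ SE.level m := (Submodule.mem_prod.mp hb).2
    exact Submodule.mem_prod.mpr ⟨hlev (m+1) a.1 ha b.1 hb1,
      dfmem Df hDf m a.1 b.1 b.2 a.2 ha hb1 hb2⟩
  -- 3: projection property
  · intro a ha b hb
    have hb1 : b.1 ∈ SE.level 1 := (Submodule.mem_prod.mp hb).1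
    have hb2 : b.2 ∈ SE.level 0 := (Submodule.mem_prod.mp hb).2
    have hb10 : b.1 ∈ SE.level 0 := hmono (Nat.zero_le 1) hb1
    have hπ1 : π a.1 b.1 ∈ SE.level 1 := hlev 1 a.1 ha b.1 hb1
    have hw : Df (a.1, b.1) (a.2, (0:E)) ∈ SE.level 0 :=
      dfmem Df hDf 0 a.1 b.1 0 a.2 ha hb1 (Submodule.zero_mem _)
    have hd : Df (a.1, b.1) (a.2, b.2) ∈ SE.level 0 :=
      dfmem Df hDf 0 a.1 b.1 b.2 a.2 ha hb1 hb2
    refine Prod.ext_iff.mpr ⟨pproj a.1 ha b.1 hb10, ?_⟩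
    show Df (a.1, π a.1 b.1) (a.2, Df (a.1, b.1) (a.2, b.2)) = Df (a.1, b.1) (a.2, b.2)
    rw [Dsplit a.1 ha (π a.1 b.1) hπ1 a.2 (Df (a.1, b.1) (a.2, b.2)) hd,
      Dsplit a.1 ha b.1 hb1 a.2 b.2 hb2,
      padd a.1 ha _ hw _ (hlev 0 a.1 ha b.2 hb2),
      pproj a.1 ha b.2 hb2,
      eq_sub_of_add_eq (FactStar a.1 ha b.1 hb1 a.2)]
    abel
  -- 4: additivity
  · intro a ha b hb b' hb'
    have hb1 : b.1 ∈ SE.level 1 := (Submodule.mem_prod.mp hb).1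
    have hb2 : b.2 ∈ SE.level 0 := (Submodule.mem_prod.mp hb).2
    have hb1' : b'.1 ∈ SE.level 1 := (Submodule.mem_prod.mp hb').1
    have hb2' : b'.2 ∈ SE.level 0 := (Submodule.mem_prod.mp hb').2
    have hb10 : b.1 ∈ SE.level 0 := hmono (Nat.zero_le 1) hb1
    have hb10' : b'.1 ∈ SE.level 0 := hmono (Nat.zero_le 1) hb1'
    refine Prod.ext_iff.mpr ⟨?_, ?_⟩
    · show π a.1 (b + b').1 = π a.1 b.1 + π a.1 b'.1
      rw [Prod.fst_add]
      exact padd a.1 ha b.1 hb10 b'.1 hb10'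
    · show Df (a.1, (b + b').1) (a.2, (b + b').2) =
        Df (a.1, b.1) (a.2, b.2) + Df (a.1, b'.1) (a.2, b'.2)
      rw [Prod.fst_add, Prod.snd_add,
        Dsplit a.1 ha (b.1 + b'.1) (Submodule.add_mem _ hb1 hb1') a.2 (b.2 + b'.2)
          (Submodule.add_mem _ hb2 hb2'),
        Dsplit a.1 ha b.1 hb1 a.2 b.2 hb2, Dsplit a.1 ha b'.1 hb1' a.2 b'.2 hb2',
        FactB_add a.1 ha b.1 hb1 b'.1 hb1' a.2,
        padd a.1 ha b.2 hb2 b'.2 hb2']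
      abel
  -- 5: homogeneity
  · intro a ha c b hb
    have hb1 : b.1 ∈ SE.level 1 := (Submodule.mem_prod.mp hb).1
    have hb2 : b.2 ∈ SE.level 0 := (Submodule.mem_prod.mp hb).2
    have hb10 : b.1 ∈ SE.level 0 := hmono (Nat.zero_le 1) hb1
    refine Prod.ext_iff.mpr ⟨?_, ?_⟩
    · show π a.1 (c • b).1 = c • π a.1 b.1
      rw [Prod.smul_fst]
      exact psml a.1 ha c b.1 hb10
    · show Df (a.1, (c • b).1) (a.2, (c • b).2) = c • Df (a.1, b.1) (a.2, b.2)
      rw [Prod.smul_fst, Prod.smul_snd,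
        Dsplit a.1 ha (c • b.1) (Submodule.smul_mem _ _ hb1) a.2 (c • b.2)
          (Submodule.smul_mem _ _ hb2),
        Dsplit a.1 ha b.1 hb1 a.2 b.2 hb2,
        FactB_smul a.1 ha b.1 hb1 c a.2,
        psml a.1 ha c b.2 hb2, smul_add]
  -- 6: boundedness on every level
  · intro m a ha
    obtain ⟨Cp1, hCp1⟩ := hbdd (m+1) a.1 ha
    obtain ⟨Cp0, hCp0⟩ := hbdd m a.1 ha
    have hx₀ : (((a.1, (0:E)), (a.2, (0:E))) : (A × E) × (A × E)) ∈
        ((constScale A).prod SE).tangentSet {p : A × E | p.1 ∈ V ∧ p.2 ∈ SE.level 0} ∩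
        (((((constScale A).prod SE).tangent).level m :
          Submodule ℝ ((A × E) × (A × E))) : Set ((A × E) × (A × E))) :=
      ⟨⟨⟨ha, Submodule.zero_mem _⟩, memSU 1 _ (Submodule.zero_mem _),
        memSU 0 _ (Submodule.zero_mem _)⟩,
        Submodule.mem_prod.mpr ⟨memSU (m+1) _ (Submodule.zero_mem _),
          memSU m _ (Submodule.zero_mem _)⟩⟩
    obtain ⟨δ, hδ, hcont⟩ := (hDf.2 m).2 _ hx₀ 1 one_pos
    have hπ0 : π a.1 (0:E) = 0 := by
      have h := psml a.1 ha 0 0 (Submodule.zero_mem _)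
      simpa using h
    have hDf0 : Df (a.1, (0:E)) (a.2, (0:E)) = 0 := by
      have h1 := FactB_smul a.1 ha 0 (Submodule.zero_mem _) 0 a.2
      simpa using h1
    have hbound : ∀ e ∈ SE.level (m+1), SE.lnorm m (Df (a.1, e) (a.2, (0:E))) ≤
        (2/δ) * SE.lnorm (m+1) e := by
      intro e he
      have he1 : e ∈ SE.level 1 := hmono (Nat.succ_le_succ (Nat.zero_le m)) he
      rcases eq_or_ne (SE.lnorm (m+1) e) 0 with h0 | h0
      · have he0 : e = 0 := hzero (m+1) e he h0
        rw [he0, hDf0, nzero m, nzero (m+1)]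
        norm_num
      · have hpos : 0 < SE.lnorm (m+1) e := lt_of_le_of_ne (hnn (m+1) e) (Ne.symm h0)
        have hc0 : 0 < δ / (2 * SE.lnorm (m+1) e) := by positivity
        have hce : (δ / (2 * SE.lnorm (m+1) e)) • e ∈ SE.level (m+1) :=
          Submodule.smul_mem _ _ he
        have hy : (((a.1, (δ / (2 * SE.lnorm (m+1) e)) • e), (a.2, (0:E))) :
            (A × E) × (A × E)) ∈
            ((constScale A).prod SE).tangentSet {p : A × E | p.1 ∈ V ∧ p.2 ∈ SE.level 0} ∩
            (((((constScale A).prod SE).tangent).level m :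
              Submodule ℝ ((A × E) × (A × E))) : Set ((A × E) × (A × E))) :=
          ⟨⟨⟨ha, hmono (Nat.zero_le (m+1)) hce⟩,
            memSU 1 _ (hmono (Nat.succ_le_succ (Nat.zero_le m)) hce),
            memSU 0 _ (Submodule.zero_mem _)⟩,
            Submodule.mem_prod.mpr ⟨memSU (m+1) _ hce, memSU m _ (Submodule.zero_mem _)⟩⟩
        have hdiff : (((a.1, (δ / (2 * SE.lnorm (m+1) e)) • e), (a.2, (0:E))) :
            (A × E) × (A × E)) - ((a.1, (0:E)), (a.2, (0:E))) =
            ((0, (δ / (2 * SE.lnorm (m+1) e)) • e), ((0:A), (0:E))) := by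
          refine Prod.ext_iff.mpr ⟨Prod.ext_iff.mpr ⟨?_, ?_⟩,
            Prod.ext_iff.mpr ⟨?_, ?_⟩⟩ <;>
            simp [Prod.fst_sub, Prod.snd_sub]
        have hdist : (((constScale A).prod SE).tangent).lnorm m
            ((((a.1, (δ / (2 * SE.lnorm (m+1) e)) • e), (a.2, (0:E))) :
              (A × E) × (A × E)) - ((a.1, (0:E)), (a.2, (0:E)))) < δ := by
          rw [hdiff]
          show (‖(0:A)‖ + SE.lnorm (m+1) ((δ / (2 * SE.lnorm (m+1) e)) • e)) +
            (‖(0:A)‖ + SE.lnorm m (0:E)) < δ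
          rw [norm_zero, nzero m, nsmulpos (m+1) _ hc0 e he]
          have h5 : δ / (2 * SE.lnorm (m+1) e) * SE.lnorm (m+1) e = δ/2 := by
            field_simp
          rw [h5]
          linarith
        have hky := hcont _ hy hdist
        have hTx₀ : Tmap (fun p : A × E => π p.1 p.2) Df ((a.1, (0:E)), (a.2, (0:E))) =
            (0 : E × E) := Prod.ext_iff.mpr ⟨hπ0, hDf0⟩
        rw [hTx₀, sub_zero] at hky
        have hky2 : SE.lnorm (m+1) (π a.1 ((δ / (2 * SE.lnorm (m+1) e)) • e)) +
            SE.lnorm m (Df (a.1, (δ / (2 * SE.lnorm (m+1) e)) • e) (a.2, (0:E))) < 1 := hky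
        have hky3 : SE.lnorm m (Df (a.1, (δ / (2 * SE.lnorm (m+1) e)) • e)
            (a.2, (0:E))) < 1 := by
          have h6 := hnn (m+1) (π a.1 ((δ / (2 * SE.lnorm (m+1) e)) • e))
          linarith
        rw [FactB_smul a.1 ha e he1 (δ / (2 * SE.lnorm (m+1) e)) a.2,
          nsmulpos m _ hc0 _ (dfmem Df hDf m a.1 e 0 a.2 ha he (Submodule.zero_mem _))]
          at hky3
        have h7 : SE.lnorm m (Df (a.1, e) (a.2, (0:E))) <
            1 / (δ / (2 * SE.lnorm (m+1) e)) := by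
          rw [lt_div_iff₀ hc0]
          linarith [mul_comm (δ / (2 * SE.lnorm (m+1) e))
            (SE.lnorm m (Df (a.1, e) (a.2, (0:E))))]
        have h8 : 1 / (δ / (2 * SE.lnorm (m+1) e)) = (2/δ) * SE.lnorm (m+1) e := by
          field_simp
        rw [h8] at h7
        exact le_of_lt h7
    refine ⟨max Cp1 0 + 2/δ + max Cp0 0, fun b hb => ?_⟩
    have hb1 : b.1 ∈ SE.level (m+1) := (Submodule.mem_prod.mp hb).1
    have hb2 : b.2 ∈ SE.level m := (Submodule.mem_prod.mp hb).2
    have hb11 : b.1 ∈ SE.level 1 := hmono (Nat.succ_le_succ (Nat.zero_le m)) hb1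
    have hb20 : b.2 ∈ SE.level 0 := hmono (Nat.zero_le m) hb2
    show SE.lnorm (m+1) (π a.1 b.1) + SE.lnorm m (Df (a.1, b.1) (a.2, b.2)) ≤
      (max Cp1 0 + 2/δ + max Cp0 0) * (SE.lnorm (m+1) b.1 + SE.lnorm m b.2)
    have t1 : SE.lnorm (m+1) (π a.1 b.1) ≤ max Cp1 0 * SE.lnorm (m+1) b.1 :=
      le_trans (hCp1 b.1 hb1) (mul_le_mul_of_nonneg_right (le_max_left _ _) (hnn _ _))
    have mem1 : Df (a.1, b.1) (a.2, (0:E)) ∈ SE.level m :=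
      dfmem Df hDf m a.1 b.1 0 a.2 ha hb1 (Submodule.zero_mem _)
    have mem2 : π a.1 b.2 ∈ SE.level m := hlev m a.1 ha b.2 hb2
    have t2 : SE.lnorm m (Df (a.1, b.1) (a.2, b.2)) ≤
        (2/δ) * SE.lnorm (m+1) b.1 + max Cp0 0 * SE.lnorm m b.2 := by
      rw [Dsplit a.1 ha b.1 hb11 a.2 b.2 hb20]
      have h7 := htri m _ mem1 _ mem2
      have h8 := hbound b.1 hb1
      have h9 : SE.lnorm m (π a.1 b.2) ≤ max Cp0 0 * SE.lnorm m b.2 :=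
        le_trans (hCp0 b.2 hb2) (mul_le_mul_of_nonneg_right (le_max_left _ _) (hnn _ _))
      linarith
    have hexp : (max Cp1 0 + 2/δ + max Cp0 0) * (SE.lnorm (m+1) b.1 + SE.lnorm m b.2) =
        max Cp1 0 * SE.lnorm (m+1) b.1 + (2/δ) * SE.lnorm (m+1) b.1 +
        max Cp0 0 * SE.lnorm m b.2 +
        (max Cp1 0 * SE.lnorm m b.2 + (2/δ) * SE.lnorm m b.2 +
          max Cp0 0 * SE.lnorm (m+1) b.1) := by ring
    rw [hexp]
    have n1 := mul_nonneg (le_max_right Cp1 0) (hnn m b.2)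
    have n2 := mul_nonneg (le_of_lt (by positivity : (0:ℝ) < 2/δ)) (hnn m b.2)
    have n3 := mul_nonneg (le_max_right Cp0 0) (hnn (m+1) b.1)
    linarith
  -- 7: sc-smoothness of the total map
  · intro k
    obtain ⟨_, Dfk, hDfk, hsck⟩ := hsm (k+1)
    have heqT : ∀ p ∈ ((constScale A).prod SE).tangentSet
        {p : A × E | p.1 ∈ V ∧ p.2 ∈ SE.level 0},
        Tmap (fun p : A × E => π p.1 p.2) Dfk p =
        Tmap (fun p : A × E => π p.1 p.2) Df p := by
      rintro ⟨⟨v, e⟩, ⟨δv, δe⟩⟩ ⟨hU, h1, h0⟩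
      have hv : v ∈ V := hU.1
      have he1 : e ∈ SE.level 1 := memSU' 1 _ h1
      have hδe : δe ∈ SE.level 0 := memSU' 0 _ h0
      show ((π v e, Dfk (v, e) (δv, δe)) : E × E) = (π v e, Df (v, e) (δv, δe))
      exact Prod.ext_iff.mpr ⟨rfl, huniq Dfk hDfk v hv e he1 δv δe hδe⟩
    have hsck' := isSck_congr k hsck heqT
    have htc : TransComp (((constScale A).prod SE).tangent)
        ((constScale (A × A)).prod SE.tangent)
        (((constScale A).prod SE).tangentSet {p : A × E | p.1 ∈ V ∧ p.2 ∈ SE.level 0})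
        {p : (A × A) × (E × E) | p.1 ∈ {a : A × A | a.1 ∈ V} ∧ p.2 ∈ SE.tangent.level 0}
        (LinearEquiv.prodProdProdComm ℝ A A E E).toLinearMap := by
      refine ⟨?_, ?_, ?_, ?_, ?_⟩
      · intro m x hx
        have h1 : x.2.1 ∈ SE.level (m+1) :=
          (Submodule.mem_prod.mp (Submodule.mem_prod.mp hx).2).1
        have h2 : x.2.2 ∈ SE.level m :=
          (Submodule.mem_prod.mp (Submodule.mem_prod.mp hx).2).2
        exact Submodule.mem_prod.mpr ⟨memSU (m+1) _ h1, memSU m _ h2⟩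
      · rintro x ⟨hx1, hx2⟩
        have h1 : x.2.1 ∈ SE.level 1 := (Submodule.mem_prod.mp hx2).1
        have h2 : x.2.2 ∈ SE.level 0 := (Submodule.mem_prod.mp hx2).2
        exact ⟨⟨hx1, hmono (Nat.zero_le 1) h1⟩, memSU 1 _ h1, memSU 0 _ h2⟩
      · intro m x _
        show 0 ≤ ‖x.1‖ + (SE.lnorm (m+1) x.2.1 + SE.lnorm m x.2.2)
        linarith [norm_nonneg x.1, hnn (m+1) x.2.1, hnn m x.2.2]
      · intro m x _
        show 0 ≤ (‖x.1.1‖ + SE.lnorm (m+1) x.1.2) + (‖x.2.1‖ + SE.lnorm m x.2.2)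
        linarith [norm_nonneg x.1.1, norm_nonneg x.2.1, hnn (m+1) x.1.2, hnn m x.2.2]
      · intro m
        refine ⟨2, by norm_num, fun x _ => ?_⟩
        show (‖x.1.1‖ + SE.lnorm (m+1) x.2.1) + (‖x.1.2‖ + SE.lnorm m x.2.2) ≤
          2 * (‖x.1‖ + (SE.lnorm (m+1) x.2.1 + SE.lnorm m x.2.2))
        have h1 : ‖x.1.1‖ ≤ ‖x.1‖ := norm_fst_le x.1
        have h2 : ‖x.1.2‖ ≤ ‖x.1‖ := norm_snd_le x.1
        linarith [hnn (m+1) x.2.1, hnn m x.2.2]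
    have hfin := isSck_transport k htc hsck'
    exact isSck_congr k hfin (fun p _ => rfl)
end

section
/- Chain Rule for sc¹_◁-maps: let f : U ◁ F → V ◁ G and g : V ◁ G → W ◁ H be sc¹_◁ maps between local strong sc-bundles (with the objects of f landing in the domain of g, i.e. a(U) ⊆ V for the base map a of f). Then g ∘ f is sc¹_◁ and T_◁(g ∘ f) = (T_◁ g) ∘ (T_◁ f); moreover T_◁(g ∘ f) is sc⁰_◁. -/
universe u v

section TriangleBundles

variable {E F R G W H : Type*}
  [AddCommGroup E] [Module ℝ E] [AddCommGroup F] [Module ℝ F]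
  [AddCommGroup R] [Module ℝ R] [AddCommGroup G] [Module ℝ G]
  [AddCommGroup W] [Module ℝ W] [AddCommGroup H] [Module ℝ H]

/-- A map `f : U ◁ F → V ◁ G` between local strong sc-bundles is sc⁰_◁ if it induces
sc⁰-maps between the derived sc-spaces `U ⊕ F → V ⊕ G` and `U ⊕ F¹ → V ⊕ G¹`. -/
def IsSc0Tri (SE : ScScale E) (SF : ScScale F) (SR : ScScale R) (SG : ScScale G)
    (U : Set E) (f : E × F → R × G) : Prop :=
  Sc0 (SE.prod SF) (SR.prod SG) {p : E × F | p.1 ∈ U} f ∧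
  Sc0 (SE.prod (SF.shift 1)) (SR.prod (SG.shift 1)) {p : E × F | p.1 ∈ U} f

/-- `Df` witnesses that `f : U ◁ F → V ◁ G` is sc¹_◁: it witnesses sc¹ for both
induced maps between the derived sc-spaces. -/
def Sc1TriWith (SE : ScScale E) (SF : ScScale F) (SR : ScScale R) (SG : ScScale G)
    (U : Set E) (f : E × F → R × G) (Df : E × F → ((E × F) →ₗ[ℝ] (R × G))) : Prop :=
  Sc1With (SE.prod SF) (SR.prod SG) {p : E × F | p.1 ∈ U} f Df ∧
  Sc1With (SE.prod (SF.shift 1)) (SR.prod (SG.shift 1)) {p : E × F | p.1 ∈ U} f Df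

/-- `f : U ◁ F → V ◁ G` is sc¹_◁. -/
def IsSc1Tri (SE : ScScale E) (SF : ScScale F) (SR : ScScale R) (SG : ScScale G)
    (U : Set E) (f : E × F → R × G) : Prop :=
  IsSc0Tri SE SF SR SG U f ∧
  ∃ Df : E × F → ((E × F) →ₗ[ℝ] (R × G)), Sc1TriWith SE SF SR SG U f Df

/-- The ◁-tangent map `T_◁ f : (TU) ◁ (TF) → (TV) ◁ (TG)`,
`T_◁f(u,h,v,b) = (a(u), Da(u)h, ℓ(u,v), Dℓ(u,v)(h,b))`, written in terms of `f`
and a family of linearizations `Df`. -/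
def triTangent (f : E × F → R × G) (Df : E × F → ((E × F) →ₗ[ℝ] (R × G))) :
    (E × E) × (F × F) → (R × R) × (G × G) :=
  fun q =>
    (((f (q.1.1, q.2.1)).1, (Df (q.1.1, q.2.1) (q.1.2, q.2.2)).1),
     ((f (q.1.1, q.2.1)).2, (Df (q.1.1, q.2.1) (q.1.2, q.2.2)).2))

/-- The set underlying `T_◁(U ◁ F) = (TU) ◁ (TF)`. -/
def triTangentSet (SE : ScScale E) (SF : ScScale F) (U : Set E) :
    Set ((E × E) × (F × F)) :=
  {q | q.1.1 ∈ U ∧ q.1.1 ∈ SE.level 1 ∧ q.1.2 ∈ SE.level 0 ∧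
       q.2.1 ∈ SF.level 1 ∧ q.2.2 ∈ SF.level 0}

lemma scalar_mvt (ρ : ℝ → ℝ) (ε : ℝ) (h0 : ρ 0 ≤ 0)
    (hsub : ∀ t ∈ Set.Icc (0:ℝ) 1, ∃ γ > (0:ℝ), ∀ s : ℝ, |s| ≤ γ → t + s ∈ Set.Icc (0:ℝ) 1 →
      |ρ (t + s) - ρ t| ≤ ε * |s|) : ρ 1 ≤ ε := by
  set S : Set ℝ := {t | t ∈ Set.Icc (0:ℝ) 1 ∧ ρ t ≤ ε * t} with hS
  have h0S : (0:ℝ) ∈ S := ⟨⟨le_refl _, zero_le_one⟩, by simpa using h0⟩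
  have hbdd : BddAbove S := ⟨1, fun t ht => ht.1.2⟩
  have hne : S.Nonempty := ⟨0, h0S⟩
  set T := sSup S with hT
  have hT0 : 0 ≤ T := le_csSup hbdd h0S
  have hT1 : T ≤ 1 := csSup_le hne (fun t ht => ht.1.2)
  obtain ⟨γ, hγ, hloc⟩ := hsub T ⟨hT0, hT1⟩
  have hTS : ρ T ≤ ε * T := by
    obtain ⟨t, htS, htlt⟩ := exists_lt_of_lt_csSup hne (show T - γ < T by linarith)
    have htT : t ≤ T := le_csSup hbdd htS
    have h1 := hloc (t - T) (by rw [abs_of_nonpos (by linarith)]; linarith) (by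
      simp only [add_sub_cancel]; exact htS.1)
    rw [show T + (t - T) = t by ring, abs_of_nonpos (show t - T ≤ 0 by linarith)] at h1
    have h2 := (abs_le.mp h1).1
    have h3 := htS.2
    nlinarith
  have hTeq : T = 1 := by
    by_contra hne1
    have hTlt : T < 1 := lt_of_le_of_ne hT1 hne1
    set s := min γ (1 - T) with hs
    have hspos : 0 < s := lt_min hγ (by linarith)
    have h1 := hloc s (by rw [abs_of_pos hspos]; exact min_le_left _ _)
      ⟨by linarith, by have := min_le_right γ (1-T); linarith⟩
    rw [abs_of_pos hspos] at h1
    have h2 := (abs_le.mp h1).2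
    have hmem : T + s ∈ S := ⟨⟨by linarith, by have := min_le_right γ (1-T); linarith⟩, by nlinarith⟩
    have := le_csSup hbdd hmem
    linarith
  calc ρ 1 = ρ T := by rw [hTeq]
  _ ≤ ε * T := hTS
  _ = ε := by rw [hTeq, mul_one]

structure ScNice {X : Type*} [AddCommGroup X] [Module ℝ X] (S : ScScale X) : Prop where
  mono : ∀ {m n : ℕ}, m ≤ n → S.level n ≤ S.level m
  nonneg : ∀ m x, 0 ≤ S.lnorm m x
  tri : ∀ m, ∀ x ∈ S.level m, ∀ y ∈ S.level m, S.lnorm m (x + y) ≤ S.lnorm m x + S.lnorm m y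
  homog : ∀ m (c : ℝ), ∀ x ∈ S.level m, S.lnorm m (c • x) = |c| * S.lnorm m x
  defn : ∀ m, ∀ x ∈ S.level m, S.lnorm m x = 0 → x = 0
  compare : ∀ m n, m ≤ n → ∃ C > (0:ℝ), ∀ x ∈ S.level n, S.lnorm m x ≤ C * S.lnorm n x
  complete : ∀ m (u : ℕ → X), (∀ k, u k ∈ S.level m) →
      (∀ ε > (0:ℝ), ∃ K, ∀ p ≥ K, ∀ q ≥ K, S.lnorm m (u p - u q) < ε) →
      ∃ x ∈ S.level m, ∀ ε > (0:ℝ), ∃ K, ∀ p ≥ K, S.lnorm m (u p - x) < ε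
  compact : ∀ m (u : ℕ → X), (∀ k, u k ∈ S.level (m+1)) → (∀ k, S.lnorm (m+1) (u k) ≤ 1) →
      ∃ φ : ℕ → ℕ, StrictMono φ ∧
        ∀ ε > (0:ℝ), ∃ K, ∀ p ≥ K, ∀ q ≥ K, S.lnorm m (u (φ p) - u (φ q)) < ε

lemma nice_of_banach {X : Type*} [AddCommGroup X] [Module ℝ X] {S : ScScale X}
    (h : S.IsScBanach) : ScNice S := by
  obtain ⟨h1, h2, h3, h4, h5, h6, h7, h8, _⟩ := h
  exact ⟨h1, h2, h3, h4, h5, h6, h7, h8⟩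

lemma nice_zero {X : Type*} [AddCommGroup X] [Module ℝ X] {S : ScScale X}
    (h : ScNice S) (m : ℕ) : S.lnorm m 0 = 0 := by
  have := h.homog m 0 0 (zero_mem _)
  simpa using this

lemma nice_neg {X : Type*} [AddCommGroup X] [Module ℝ X] {S : ScScale X}
    (h : ScNice S) (m : ℕ) {x : X} (hx : x ∈ S.level m) : S.lnorm m (-x) = S.lnorm m x := by
  have := h.homog m (-1) x hx
  simpa using this

lemma nice_sub_comm {X : Type*} [AddCommGroup X] [Module ℝ X] {S : ScScale X}
    (h : ScNice S) (m : ℕ) {x y : X} (hx : x ∈ S.level m) (hy : y ∈ S.level m) :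
    S.lnorm m (x - y) = S.lnorm m (y - x) := by
  rw [show x - y = -(y - x) by abel, nice_neg h m (sub_mem hy hx)]

lemma nice_shift {X : Type*} [AddCommGroup X] [Module ℝ X] {S : ScScale X}
    (h : ScNice S) (k : ℕ) : ScNice (S.shift k) where
  mono := by intro m n hmn; exact h.mono (by omega)
  nonneg := fun m x => h.nonneg _ x
  tri := fun m => h.tri _
  homog := fun m => h.homog _
  defn := fun m => h.defn _
  compare := fun m n hmn => h.compare _ _ (by omega)
  complete := fun m => h.complete _
  compact := by
    intro m u hu hb
    have e : m + 1 + k = m + k + 1 := by omega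
    refine h.compact (m + k) u (fun j => ?_) (fun j => ?_)
    · have h1 : u j ∈ S.level (m + 1 + k) := hu j
      exact e ▸ h1
    · have h1 : S.lnorm (m + 1 + k) (u j) ≤ 1 := hb j
      exact e ▸ h1

lemma nice_prod {X Y : Type*} [AddCommGroup X] [Module ℝ X] [AddCommGroup Y] [Module ℝ Y]
    {S : ScScale X} {T : ScScale Y} (hS : ScNice S) (hT : ScNice T) : ScNice (S.prod T) where
  mono := by
    intro m n hmn p hp
    obtain ⟨h1, h2⟩ := Submodule.mem_prod.mp hp
    exact Submodule.mem_prod.mpr ⟨hS.mono hmn h1, hT.mono hmn h2⟩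
  nonneg := fun m x => add_nonneg (hS.nonneg _ _) (hT.nonneg _ _)
  tri := by
    intro m x hx y hy
    obtain ⟨hx1, hx2⟩ := Submodule.mem_prod.mp hx
    obtain ⟨hy1, hy2⟩ := Submodule.mem_prod.mp hy
    have h1 := hS.tri m x.1 hx1 y.1 hy1
    have h2 := hT.tri m x.2 hx2 y.2 hy2
    show S.lnorm m (x.1 + y.1) + T.lnorm m (x.2 + y.2) ≤
      S.lnorm m x.1 + T.lnorm m x.2 + (S.lnorm m y.1 + T.lnorm m y.2)
    linarith
  homog := by
    intro m c x hx
    obtain ⟨hx1, hx2⟩ := Submodule.mem_prod.mp hx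
    show S.lnorm m (c • x.1) + T.lnorm m (c • x.2) = |c| * (S.lnorm m x.1 + T.lnorm m x.2)
    rw [hS.homog m c x.1 hx1, hT.homog m c x.2 hx2]
    ring
  defn := by
    intro m x hx h0
    obtain ⟨hx1, hx2⟩ := Submodule.mem_prod.mp hx
    have h0' : S.lnorm m x.1 + T.lnorm m x.2 = 0 := h0
    have e1 : S.lnorm m x.1 = 0 := by linarith [hS.nonneg m x.1, hT.nonneg m x.2]
    have e2 : T.lnorm m x.2 = 0 := by linarith [hS.nonneg m x.1, hT.nonneg m x.2]
    exact Prod.ext (hS.defn m x.1 hx1 e1) (hT.defn m x.2 hx2 e2)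
  compare := by
    intro m n hmn
    obtain ⟨C1, hC1, hC1'⟩ := hS.compare m n hmn
    obtain ⟨C2, hC2, hC2'⟩ := hT.compare m n hmn
    refine ⟨max C1 C2, lt_max_of_lt_left hC1, ?_⟩
    intro x hx
    obtain ⟨hx1, hx2⟩ := Submodule.mem_prod.mp hx
    have b1 : S.lnorm m x.1 ≤ max C1 C2 * S.lnorm n x.1 :=
      le_trans (hC1' x.1 hx1) (mul_le_mul_of_nonneg_right (le_max_left _ _) (hS.nonneg _ _))
    have b2 : T.lnorm m x.2 ≤ max C1 C2 * T.lnorm n x.2 :=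
      le_trans (hC2' x.2 hx2) (mul_le_mul_of_nonneg_right (le_max_right _ _) (hT.nonneg _ _))
    show S.lnorm m x.1 + T.lnorm m x.2 ≤ max C1 C2 * (S.lnorm n x.1 + T.lnorm n x.2)
    rw [mul_add]
    linarith
  complete := by
    intro m u hu hcau
    have hu1 : ∀ j, (u j).1 ∈ S.level m := fun j => (Submodule.mem_prod.mp (hu j)).1
    have hu2 : ∀ j, (u j).2 ∈ T.level m := fun j => (Submodule.mem_prod.mp (hu j)).2
    obtain ⟨x1, hx1, hconv1⟩ := hS.complete m (fun j => (u j).1) hu1 (by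
      intro ε hε
      obtain ⟨K, hK⟩ := hcau ε hε
      refine ⟨K, fun p hp q hq => ?_⟩
      have hsum : S.lnorm m ((u p).1 - (u q).1) + T.lnorm m ((u p).2 - (u q).2) < ε := hK p hp q hq
      have := hT.nonneg m ((u p).2 - (u q).2)
      linarith)
    obtain ⟨x2, hx2, hconv2⟩ := hT.complete m (fun j => (u j).2) hu2 (by
      intro ε hε
      obtain ⟨K, hK⟩ := hcau ε hε
      refine ⟨K, fun p hp q hq => ?_⟩
      have hsum : S.lnorm m ((u p).1 - (u q).1) + T.lnorm m ((u p).2 - (u q).2) < ε := hK p hp q hq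
      have := hS.nonneg m ((u p).1 - (u q).1)
      linarith)
    refine ⟨(x1, x2), Submodule.mem_prod.mpr ⟨hx1, hx2⟩, ?_⟩
    intro ε hε
    obtain ⟨K1, hK1⟩ := hconv1 (ε/2) (by linarith)
    obtain ⟨K2, hK2⟩ := hconv2 (ε/2) (by linarith)
    refine ⟨max K1 K2, fun p hp => ?_⟩
    have b1 := hK1 p (le_trans (le_max_left _ _) hp)
    have b2 := hK2 p (le_trans (le_max_right _ _) hp)
    show S.lnorm m ((u p).1 - x1) + T.lnorm m ((u p).2 - x2) < ε
    linarith
  compact := by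
    intro m u hu hb
    have hu1 : ∀ j, (u j).1 ∈ S.level (m+1) := fun j => (Submodule.mem_prod.mp (hu j)).1
    have hu2 : ∀ j, (u j).2 ∈ T.level (m+1) := fun j => (Submodule.mem_prod.mp (hu j)).2
    have hb1 : ∀ j, S.lnorm (m+1) ((u j).1) ≤ 1 := fun j =>
      le_trans (le_add_of_nonneg_right (hT.nonneg (m+1) (u j).2)) (hb j)
    have hb2 : ∀ j, T.lnorm (m+1) ((u j).2) ≤ 1 := fun j =>
      le_trans (le_add_of_nonneg_left (hS.nonneg (m+1) (u j).1)) (hb j)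
    obtain ⟨φ1, hφ1, hcau1⟩ := hS.compact m (fun j => (u j).1) hu1 hb1
    obtain ⟨φ2, hφ2, hcau2⟩ := hT.compact m (fun j => (u (φ1 j)).2) (fun j => hu2 _) (fun j => hb2 _)
    refine ⟨φ1 ∘ φ2, hφ1.comp hφ2, ?_⟩
    intro ε hε
    obtain ⟨K1, hK1⟩ := hcau1 (ε/2) (by linarith)
    obtain ⟨K2, hK2⟩ := hcau2 (ε/2) (by linarith)
    refine ⟨max K1 K2, fun p hp q hq => ?_⟩
    have b1 := hK1 (φ2 p) (le_trans (le_trans (le_max_left _ _) hp) (hφ2.le_apply))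
      (φ2 q) (le_trans (le_trans (le_max_left _ _) hq) (hφ2.le_apply))
    have b2 := hK2 p (le_trans (le_max_right _ _) hp) q (le_trans (le_max_right _ _) hq)
    show S.lnorm m ((u (φ1 (φ2 p))).1 - (u (φ1 (φ2 q))).1)
      + T.lnorm m ((u (φ1 (φ2 p))).2 - (u (φ1 (φ2 q))).2) < ε
    linarith

lemma sc0_comp {A B C : Type*} [AddCommGroup A] [Module ℝ A] [AddCommGroup B] [Module ℝ B]
    [AddCommGroup C] [Module ℝ C]
    {SA : ScScale A} {SB : ScScale B} {SC : ScScale C} {Us : Set A} {Vs : Set B}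
    {f : A → B} {g : B → C} (hmap : ∀ p ∈ Us, f p ∈ Vs)
    (hf : Sc0 SA SB Us f) (hg : Sc0 SB SC Vs g) : Sc0 SA SC Us (g ∘ f) := by
  intro m
  refine ⟨fun x hx => (hg m).1 (f x) ⟨hmap x hx.1, (hf m).1 x hx⟩, ?_⟩
  intro x hx ε hε
  obtain ⟨δ1, hδ1, hg'⟩ := (hg m).2 (f x) ⟨hmap x hx.1, (hf m).1 x hx⟩ ε hε
  obtain ⟨δ, hδ, hf'⟩ := (hf m).2 x hx δ1 hδ1
  refine ⟨δ, hδ, fun y hy hlt => ?_⟩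
  exact hg' (f y) ⟨hmap y hy.1, (hf m).1 y hy⟩ (hf' y hy hlt)

lemma prod_open_lift {X Y : Type*} [AddCommGroup X] [Module ℝ X] [AddCommGroup Y] [Module ℝ Y]
    (SR' : ScScale X) (SG' : ScScale Y) (V : Set X)
    (hGnn : ∀ m y, 0 ≤ SG'.lnorm m y) (hV : SR'.IsOpenIn V) :
    ∀ y ∈ {p : X × Y | p.1 ∈ V} ∩ ((SR'.prod SG').level 0 : Set (X × Y)),
      ∃ ρ > (0:ℝ), ∀ z ∈ ((SR'.prod SG').level 0 : Set (X × Y)),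
        (SR'.prod SG').lnorm 0 (z - y) < ρ → z ∈ {p : X × Y | p.1 ∈ V} := by
  intro y hy
  obtain ⟨ρ, hρ, h⟩ := hV.2 y.1 hy.1
  refine ⟨ρ, hρ, fun z hz hlt => ?_⟩
  have hz1 : z.1 ∈ SR'.level 0 := (Submodule.mem_prod.mp hz).1
  have hlt' : SR'.lnorm 0 (z.1 - y.1) + SG'.lnorm 0 (z.2 - y.2) < ρ := hlt
  exact h z.1 hz1 (by linarith [hGnn 0 (z.2 - y.2)])

lemma sc0_congr {X Y : Type*} [AddCommGroup X] [Module ℝ X] [AddCommGroup Y] [Module ℝ Y]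
    {SX : ScScale X} {SY : ScScale Y} {s₁ s₂ : Set X}
    (h : ∀ m, s₁ ∩ (SX.level m : Set X) = s₂ ∩ (SX.level m : Set X))
    {f : X → Y} (hf : Sc0 SX SY s₁ f) : Sc0 SX SY s₂ f := by
  intro m
  have hmm : ∀ x : X, x ∈ s₂ ∩ (SX.level m : Set X) ↔ x ∈ s₁ ∩ (SX.level m : Set X) := by
    intro x; rw [h m]
  refine ⟨fun x hx => (hf m).1 x ((hmm x).mp hx), ?_⟩
  intro x hx ε hε
  obtain ⟨δ, hδ, h'⟩ := (hf m).2 x ((hmm x).mp hx) ε hε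
  exact ⟨δ, hδ, fun y hy hlt => h' y ((hmm y).mp hy) hlt⟩

lemma tmap_level {A B : Type*} [AddCommGroup A] [Module ℝ A] [AddCommGroup B] [Module ℝ B]
    {SA : ScScale A} {SB : ScScale B} {Us : Set A} {f : A → B} {Df : A → A →ₗ[ℝ] B}
    (hTf : Sc0 SA.tangent SB.tangent (SA.tangentSet Us) (Tmap f Df))
    (p : A × A) (h1 : p.1 ∈ Us) (h2 : p.1 ∈ SA.level 1) (h3 : p.2 ∈ SA.level 0) :
    f p.1 ∈ SB.level 1 ∧ Df p.1 p.2 ∈ SB.level 0 := by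
  have hm := (hTf 0).1 p ⟨⟨h1, h2, h3⟩, Submodule.mem_prod.mpr ⟨h2, h3⟩⟩
  exact Submodule.mem_prod.mp hm

example {A : Type*} [AddCommGroup A] [Module ℝ A] (SA : ScScale A) (q : A × A) :
    SA.tangent.lnorm 0 q = SA.lnorm 1 q.1 + SA.lnorm 0 q.2 := rfl

set_option maxHeartbeats 1000000 in
lemma sc1With_comp {A B C : Type*} [AddCommGroup A] [Module ℝ A] [AddCommGroup B] [Module ℝ B]
    [AddCommGroup C] [Module ℝ C]
    (SA : ScScale A) (SB : ScScale B) (SC : ScScale C)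
    (hA : ScNice SA) (hB : ScNice SB) (hC : ScNice SC)
    (Us : Set A) (Vs : Set B)
    (hVopen : ∀ y ∈ Vs ∩ (SB.level 0 : Set B), ∃ ρ > (0:ℝ), ∀ z ∈ (SB.level 0 : Set B),
      SB.lnorm 0 (z - y) < ρ → z ∈ Vs)
    (f : A → B) (g : B → C) (hmap : ∀ p ∈ Us, f p ∈ Vs)
    (Df : A → A →ₗ[ℝ] B) (Dg : B → B →ₗ[ℝ] C)
    (hf : Sc1With SA SB Us f Df) (hg : Sc1With SB SC Vs g Dg) :
    Sc1With SA SC Us (g ∘ f) (fun p => (Dg (f p)).comp (Df p)) := by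
  have hTf := hf.2
  have hTg := hg.2
  have hTfl := tmap_level hTf
  have hTgl := tmap_level hTg
  constructor
  · intro x hx
    obtain ⟨hxU, hx1⟩ := hx
    have hfx1 : f x ∈ SB.level 1 := (hTfl (x, 0) hxU hx1 (zero_mem _)).1
    have hfxV : f x ∈ Vs := hmap x hxU
    have hfx0 : f x ∈ SB.level 0 := hB.mono (zero_le_one) hfx1
    obtain ⟨Cf, hCf⟩ := (hf.1 x ⟨hxU, hx1⟩).1
    obtain ⟨Cg, hCg⟩ := (hg.1 (f x) ⟨hfxV, hfx1⟩).1
    constructor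
    · -- boundedness of the composition
      refine ⟨max Cg 0 * max Cf 0, fun h hh => ?_⟩
      have hDfh : Df x h ∈ SB.level 0 := (hTfl (x, h) hxU hx1 hh).2
      calc SC.lnorm 0 ((Dg (f x)).comp (Df x) h) = SC.lnorm 0 (Dg (f x) (Df x h)) := rfl
      _ ≤ Cg * SB.lnorm 0 (Df x h) := hCg _ hDfh
      _ ≤ max Cg 0 * SB.lnorm 0 (Df x h) :=
          mul_le_mul_of_nonneg_right (le_max_left _ _) (hB.nonneg _ _)
      _ ≤ max Cg 0 * (max Cf 0 * SA.lnorm 0 h) := by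
          refine mul_le_mul_of_nonneg_left ?_ (le_max_right _ _)
          exact le_trans (hCf h hh)
            (mul_le_mul_of_nonneg_right (le_max_left _ _) (hA.nonneg _ _))
      _ = max Cg 0 * max Cf 0 * SA.lnorm 0 h := by ring
    · -- the differentiability estimate
      intro ε hε
      by_contra hcon
      push_neg at hcon
      -- a sequence violating the estimate
      have hseq : ∀ n : ℕ, ∃ h, h ∈ (SA.level 1 : Set A) ∧ (x + h ∈ Us ∧
          SA.lnorm 1 h < 1/((n:ℝ)+1) ∧
          ε * SA.lnorm 1 h < SC.lnorm 0 ((g ∘ f) (x + h) - (g ∘ f) x - Dg (f x) (Df x h))) := by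
        intro n
        obtain ⟨h, h1, h2, h3, h4⟩ := hcon (1/((n:ℝ)+1)) (by positivity)
        exact ⟨h, h1, h2, h3, h4⟩
      choose hs hs1 hsU hslt hsbig using hseq
      obtain ⟨t, ht_def⟩ : ∃ t : ℕ → ℝ, ∀ n, t n = SA.lnorm 1 (hs n) := ⟨_, fun _ => rfl⟩
      have ht_pos : ∀ n, 0 < t n := by
        intro n
        rw [ht_def n]
        rcases (hA.nonneg 1 (hs n)).lt_or_eq with hlt | heq
        · exact hlt
        · exfalso
          have h0 : hs n = 0 := hA.defn 1 _ (hs1 n) heq.symm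
          have hb := hsbig n
          rw [h0] at hb
          simp only [add_zero, map_zero, sub_zero, sub_self] at hb
          rw [nice_zero hA 1, nice_zero hC 0] at hb
          simp at hb
      obtain ⟨e, he_def⟩ : ∃ e : ℕ → A, ∀ n, e n = (t n)⁻¹ • hs n := ⟨_, fun _ => rfl⟩
      have he1 : ∀ n, e n ∈ SA.level 1 := fun n => by
        rw [he_def n]; exact Submodule.smul_mem _ _ (hs1 n)
      have hen : ∀ n, SA.lnorm 1 (e n) = 1 := by
        intro n
        rw [he_def n, hA.homog 1 _ _ (hs1 n), abs_of_pos (inv_pos.mpr (ht_pos n)), ← ht_def n]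
        exact inv_mul_cancel₀ (ne_of_gt (ht_pos n))
      obtain ⟨φ, hφ, hφc⟩ := hA.compact 0 e (fun n => he1 n) (fun n => le_of_eq (hen n))
      obtain ⟨elim, helim, hconv⟩ := hA.complete 0 (fun n => e (φ n))
        (fun n => hA.mono zero_le_one (he1 (φ n))) hφc
      -- positive bound constants
      obtain ⟨Cf', hCf'_def⟩ : ∃ c : ℝ, c = max Cf 0 + 1 := ⟨_, rfl⟩
      obtain ⟨Cg', hCg'_def⟩ : ∃ c : ℝ, c = max Cg 0 + 1 := ⟨_, rfl⟩
      have hCf'pos : 0 < Cf' := by have := le_max_right Cf 0; rw [hCf'_def]; linarith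
      have hCg'pos : 0 < Cg' := by have := le_max_right Cg 0; rw [hCg'_def]; linarith
      have hCfb : ∀ z ∈ SA.level 0, SB.lnorm 0 (Df x z) ≤ Cf' * SA.lnorm 0 z := by
        intro z hz
        refine le_trans (hCf z hz) (mul_le_mul_of_nonneg_right ?_ (hA.nonneg _ _))
        rw [hCf'_def]; linarith [le_max_left Cf (0:ℝ)]
      have hCgb : ∀ z ∈ SB.level 0, SC.lnorm 0 (Dg (f x) z) ≤ Cg' * SB.lnorm 0 z := by
        intro z hz
        refine le_trans (hCg z hz) (mul_le_mul_of_nonneg_right ?_ (hB.nonneg _ _))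
        rw [hCg'_def]; linarith [le_max_left Cg (0:ℝ)]
      -- data at the limit point
      have hw0 : Df x elim ∈ SB.level 0 := (hTfl (x, elim) hxU hx1 helim).2
      obtain ⟨δs, hδspos, hδs⟩ := (hTg 0).2 (f x, Df x elim)
        ⟨⟨hfxV, hfx1, hw0⟩, Submodule.mem_prod.mpr ⟨hfx1, hw0⟩⟩ (ε/3) (by linarith)
      obtain ⟨ρ, hρpos, hρ⟩ := hVopen (f x) ⟨hfxV, hfx0⟩
      obtain ⟨Cb, hCbpos, hCb⟩ := hB.compare 0 1 zero_le_one
      obtain ⟨δf, hδfpos, hδf⟩ := (hf.1 x ⟨hxU, hx1⟩).2 (δs/8) (by linarith)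
      obtain ⟨δk, hδkpos, hδk⟩ := (hTf 0).2 (x, 0)
        ⟨⟨hxU, hx1, zero_mem _⟩, Submodule.mem_prod.mpr ⟨hx1, zero_mem _⟩⟩
        (min (δs/2) (ρ/Cb)) (lt_min (by linarith) (by positivity))
      obtain ⟨a, ha_def⟩ : ∃ a : ℝ, a = min (δs/(8*Cf')) (ε/(3*Cg'*Cf')) := ⟨_, rfl⟩
      have hapos : 0 < a := by
        rw [ha_def]
        exact lt_min (by positivity) (by positivity)
      obtain ⟨K1, hK1⟩ := hconv a hapos
      obtain ⟨K2, hK2⟩ := exists_nat_one_div_lt (show (0:ℝ) < min δf δk from lt_min hδfpos hδkpos)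
      obtain ⟨m, hm_def⟩ : ∃ m, m = φ (max K1 K2) := ⟨_, rfl⟩
      -- smallness of t m
      have htm : t m < min δf δk := by
        have l1 : t m < 1/((m:ℝ)+1) := by rw [ht_def m]; exact hslt m
        have l2 : (1:ℝ)/((m:ℝ)+1) ≤ 1/(((max K1 K2 : ℕ) : ℝ)+1) := by
          apply one_div_le_one_div_of_le (by positivity)
          have : ((max K1 K2:ℕ):ℝ) ≤ (m:ℝ) := by
            apply Nat.cast_le.mpr
            rw [hm_def]
            exact hφ.le_apply
          linarith
        have l3 : (1:ℝ)/(((max K1 K2 : ℕ) : ℝ)+1) ≤ 1/((K2:ℝ)+1) := by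
          apply one_div_le_one_div_of_le (by positivity)
          have : (K2:ℝ) ≤ ((max K1 K2:ℕ):ℝ) := Nat.cast_le.mpr (le_max_right _ _)
          linarith
        calc t m < 1/((m:ℝ)+1) := l1
        _ ≤ 1/((K2:ℝ)+1) := le_trans l2 l3
        _ < min δf δk := hK2
      have hea : SA.lnorm 0 (e m - elim) < a := by
        rw [hm_def]
        exact hK1 (max K1 K2) (le_max_left _ _)
      -- objects at index m
      have hxh1 : x + hs m ∈ SA.level 1 := add_mem hx1 (hs1 m)
      have hxhU : x + hs m ∈ Us := hsU m
      have hfk1 : f (x + hs m) ∈ SB.level 1 := (hTfl (x + hs m, 0) hxhU hxh1 (zero_mem _)).1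
      obtain ⟨k, hk_def⟩ : ∃ k, k = f (x + hs m) - f x := ⟨_, rfl⟩
      have hk1 : k ∈ SB.level 1 := by rw [hk_def]; exact sub_mem hfk1 hfx1
      have hk0 : k ∈ SB.level 0 := hB.mono zero_le_one hk1
      -- level-1 smallness of k
      have hkn1 : SB.lnorm 1 k < min (δs/2) (ρ/Cb) := by
        have hmm : (x + hs m, (0:A)) ∈ SA.tangentSet Us ∩ (SA.tangent.level 0 : Set (A×A)) :=
          ⟨⟨hxhU, hxh1, zero_mem _⟩, Submodule.mem_prod.mpr ⟨hxh1, zero_mem _⟩⟩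
        have hdist : SA.tangent.lnorm 0 ((x + hs m, (0:A)) - (x, 0)) < δk := by
          show SA.lnorm 1 (x + hs m - x) + SA.lnorm 0 ((0:A) - 0) < δk
          rw [add_sub_cancel_left, sub_zero, nice_zero hA 0, add_zero, ← ht_def m]
          exact lt_of_lt_of_le htm (min_le_right _ _)
        have hcl := hδk (x + hs m, 0) hmm hdist
        have heq : SB.tangent.lnorm 0 (Tmap f Df (x + hs m, 0) - Tmap f Df (x, 0))
            = SB.lnorm 1 (f (x + hs m) - f x) + SB.lnorm 0 (Df (x + hs m) 0 - Df x 0) := rfl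
        rw [heq, ← hk_def] at hcl
        have hnn := hB.nonneg 0 (Df (x + hs m) 0 - Df x 0)
        linarith
      have hk1lt : SB.lnorm 1 k < δs/2 := lt_of_lt_of_le hkn1 (min_le_left _ _)
      have hk0lt : SB.lnorm 0 k < ρ := by
        have h1 := hCb k hk1
        have h2 : Cb * SB.lnorm 1 k < Cb * (ρ/Cb) :=
          mul_lt_mul_of_pos_left (lt_of_lt_of_le hkn1 (min_le_right _ _)) hCbpos
        have h3 : Cb * (ρ/Cb) = ρ := by field_simp
        linarith
      -- remainder estimate for f
      have hr : SB.lnorm 0 (f (x + hs m) - f x - Df x (hs m)) ≤ (δs/8) * t m := by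
        rw [ht_def m]
        refine hδf (hs m) (hs1 m) hxhU ?_
        rw [← ht_def m]
        exact lt_of_lt_of_le htm (min_le_left _ _)
      have hhs0 : hs m ∈ SA.level 0 := hA.mono zero_le_one (hs1 m)
      have hDfhs0 : Df x (hs m) ∈ SB.level 0 := (hTfl (x, hs m) hxU hx1 hhs0).2
      have hr0 : f (x + hs m) - f x - Df x (hs m) ∈ SB.level 0 := sub_mem (hk_def ▸ hk0) hDfhs0
      have hem0 : e m ∈ SA.level 0 := hA.mono zero_le_one (he1 m)
      have htne : t m ≠ 0 := ne_of_gt (ht_pos m)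
      have hDfem0 : Df x (e m) ∈ SB.level 0 := (hTfl (x, e m) hxU hx1 hem0).2
      have hDfe : SB.lnorm 0 (Df x (e m) - Df x elim) ≤ Cf' * a := by
        rw [← map_sub]
        exact le_trans (hCfb _ (sub_mem hem0 helim))
          (mul_le_mul_of_nonneg_left (le_of_lt hea) (le_of_lt hCf'pos))
      have ha1 : Cf' * a ≤ δs/8 := by
        have hmin : a ≤ δs/(8*Cf') := by rw [ha_def]; exact min_le_left _ _
        have e1 : Cf' * (δs/(8*Cf')) = δs/8 := by field_simp
        calc Cf' * a ≤ Cf' * (δs/(8*Cf')) := mul_le_mul_of_nonneg_left hmin (le_of_lt hCf'pos)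
        _ = δs/8 := e1
      have ha2 : Cg' * (Cf' * a) ≤ ε/3 := by
        have hmin : a ≤ ε/(3*Cg'*Cf') := by rw [ha_def]; exact min_le_right _ _
        have e1 : Cg' * (Cf' * (ε/(3*Cg'*Cf'))) = ε/3 := by field_simp
        calc Cg' * (Cf' * a)
            ≤ Cg' * (Cf' * (ε/(3*Cg'*Cf'))) := by
              refine mul_le_mul_of_nonneg_left (mul_le_mul_of_nonneg_left hmin hCf'pos.le) hCg'pos.le
        _ = ε/3 := e1
      -- normalized increment close to the limit direction
      have hsm_eq : hs m = t m • e m := by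
        rw [he_def m, smul_smul, mul_inv_cancel₀ htne, one_smul]
      have hksplit : (t m)⁻¹ • k = (t m)⁻¹ • (f (x + hs m) - f x - Df x (hs m)) + Df x (e m) := by
        have e1 : k = (f (x + hs m) - f x - Df x (hs m)) + Df x (hs m) := by
          rw [hk_def]; abel
        rw [e1, smul_add]
        congr 1
        rw [he_def m, map_smul]
      have htk : SB.lnorm 0 ((t m)⁻¹ • k - Df x elim) ≤ δs/4 := by
        have hmem1 : (t m)⁻¹ • (f (x + hs m) - f x - Df x (hs m)) ∈ SB.level 0 := Submodule.smul_mem _ _ hr0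
        have hmem2 : Df x (e m) - Df x elim ∈ SB.level 0 := sub_mem hDfem0 hw0
        have heq2 : (t m)⁻¹ • k - Df x elim
            = (t m)⁻¹ • (f (x + hs m) - f x - Df x (hs m)) + (Df x (e m) - Df x elim) := by
          rw [hksplit]; abel
        rw [heq2]
        have htri := hB.tri 0 _ hmem1 _ hmem2
        have hn1 : SB.lnorm 0 ((t m)⁻¹ • (f (x + hs m) - f x - Df x (hs m))) ≤ δs/8 := by
          rw [hB.homog 0 _ _ hr0, abs_of_pos (inv_pos.mpr (ht_pos m))]
          have := mul_le_mul_of_nonneg_left hr (inv_pos.mpr (ht_pos m)).le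
          have e3 : (t m)⁻¹ * ((δs/8) * t m) = δs/8 := by
            field_simp
          linarith
        linarith
      -- the segment stays in Vs
      have hseg : ∀ c : ℝ, c ∈ Set.Icc (0:ℝ) 1 →
          f x + c • k ∈ Vs ∧ f x + c • k ∈ SB.level 1 := by
        intro c hc
        have hmem : f x + c • k ∈ SB.level 1 := add_mem hfx1 (Submodule.smul_mem _ _ hk1)
        refine ⟨?_, hmem⟩
        apply hρ _ (hB.mono zero_le_one hmem)
        have e1 : f x + c • k - f x = c • k := by abel
        rw [e1, hB.homog 0 _ _ hk0, abs_of_nonneg hc.1]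
        apply lt_of_le_of_lt _ hk0lt
        calc c * SB.lnorm 0 k ≤ 1 * SB.lnorm 0 k :=
          mul_le_mul_of_nonneg_right hc.2 (hB.nonneg _ _)
        _ = SB.lnorm 0 k := one_mul _
      have hDgz0 : ∀ c : ℝ, c ∈ Set.Icc (0:ℝ) 1 → ∀ z ∈ SB.level 0,
          Dg (f x + c • k) z ∈ SC.level 0 :=
        fun c hc z hz => (hTgl (f x + c • k, z) (hseg c hc).1 (hseg c hc).2 hz).2
      have hgz0 : ∀ c : ℝ, c ∈ Set.Icc (0:ℝ) 1 → g (f x + c • k) ∈ SC.level 0 :=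
        fun c hc => hC.mono zero_le_one
          (hTgl (f x + c • k, 0) (hseg c hc).1 (hseg c hc).2 (zero_mem _)).1
      have hgfx0 : g (f x) ∈ SC.level 0 :=
        hC.mono zero_le_one (hTgl (f x, 0) hfxV hfx1 (zero_mem _)).1
      -- uniform closeness of Dg along the segment
      have key1 : ∀ c : ℝ, c ∈ Set.Icc (0:ℝ) 1 →
          SC.lnorm 0 (Dg (f x + c • k) ((t m)⁻¹ • k) - Dg (f x) (Df x elim)) < ε/3 := by
        intro c hc
        have hmm : (f x + c • k, (t m)⁻¹ • k) ∈ SB.tangentSet Vs ∩ (SB.tangent.level 0 : Set (B×B)) :=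
          ⟨⟨(hseg c hc).1, (hseg c hc).2, Submodule.smul_mem _ _ hk0⟩,
            Submodule.mem_prod.mpr ⟨(hseg c hc).2, Submodule.smul_mem _ _ hk0⟩⟩
        have hdist : SB.tangent.lnorm 0 ((f x + c • k, (t m)⁻¹ • k) - (f x, Df x elim)) < δs := by
          show SB.lnorm 1 (f x + c • k - f x) + SB.lnorm 0 ((t m)⁻¹ • k - Df x elim) < δs
          have e1 : f x + c • k - f x = c • k := by abel
          rw [e1, hB.homog 1 _ _ hk1, abs_of_nonneg hc.1]
          have hle : c * SB.lnorm 1 k ≤ SB.lnorm 1 k := by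
            calc c * SB.lnorm 1 k ≤ 1 * SB.lnorm 1 k :=
              mul_le_mul_of_nonneg_right hc.2 (hB.nonneg _ _)
            _ = SB.lnorm 1 k := one_mul _
          linarith
        have hcl := hδs _ hmm hdist
        have heq : SC.tangent.lnorm 0 (Tmap g Dg (f x + c • k, (t m)⁻¹ • k) - Tmap g Dg (f x, Df x elim))
            = SC.lnorm 1 (g (f x + c • k) - g (f x))
              + SC.lnorm 0 (Dg (f x + c • k) ((t m)⁻¹ • k) - Dg (f x) (Df x elim)) := rfl
        rw [heq] at hcl
        linarith [hC.nonneg 1 (g (f x + c • k) - g (f x))]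
      -- comparing t•(Dg(fx) w) with the target derivative
      have hW0 : Dg (f x) (Df x elim) ∈ SC.level 0 := (hTgl (f x, Df x elim) hfxV hfx1 hw0).2
      have hv0 : Dg (f x) (Df x (hs m)) ∈ SC.level 0 :=
        (hTgl (f x, Df x (hs m)) hfxV hfx1 hDfhs0).2
      have key2 : SC.lnorm 0 (t m • Dg (f x) (Df x elim) - Dg (f x) (Df x (hs m))) ≤ (ε/3) * t m := by
        have e1 : Dg (f x) (Df x (hs m)) = t m • Dg (f x) (Df x (e m)) := by
          conv_lhs => rw [hsm_eq]
          rw [map_smul, map_smul]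
        rw [e1, ← smul_sub]
        have hmem : Dg (f x) (Df x elim) - Dg (f x) (Df x (e m)) ∈ SC.level 0 :=
          sub_mem hW0 ((hTgl (f x, Df x (e m)) hfxV hfx1 hDfem0).2)
        rw [hC.homog 0 _ _ hmem, abs_of_pos (ht_pos m)]
        have hN : SC.lnorm 0 (Dg (f x) (Df x elim) - Dg (f x) (Df x (e m))) ≤ Cg' * (Cf' * a) := by
          rw [← map_sub]
          refine le_trans (hCgb _ (sub_mem hw0 hDfem0)) ?_
          refine mul_le_mul_of_nonneg_left ?_ hCg'pos.le
          rw [nice_sub_comm hB 0 hw0 hDfem0]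
          exact hDfe
        calc t m * SC.lnorm 0 (Dg (f x) (Df x elim) - Dg (f x) (Df x (e m)))
            ≤ t m * (ε/3) := mul_le_mul_of_nonneg_left (le_trans hN ha2) (ht_pos m).le
        _ = (ε/3) * t m := mul_comm _ _
      -- the derivative along the segment is uniformly close to the target
      have keyv : ∀ c : ℝ, c ∈ Set.Icc (0:ℝ) 1 →
          SC.lnorm 0 (Dg (f x + c • k) k - Dg (f x) (Df x (hs m))) ≤ (2*ε/3) * t m := by
        intro c hc
        have e1 : Dg (f x + c • k) k = t m • Dg (f x + c • k) ((t m)⁻¹ • k) := by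
          rw [← map_smul, smul_smul, mul_inv_cancel₀ htne, one_smul]
        have hsplit : Dg (f x + c • k) k - Dg (f x) (Df x (hs m))
            = (t m • Dg (f x + c • k) ((t m)⁻¹ • k) - t m • Dg (f x) (Df x elim))
              + (t m • Dg (f x) (Df x elim) - Dg (f x) (Df x (hs m))) := by
          rw [← e1]; abel
        have hm1 : t m • Dg (f x + c • k) ((t m)⁻¹ • k) - t m • Dg (f x) (Df x elim) ∈ SC.level 0 :=
          sub_mem (Submodule.smul_mem _ _ (hDgz0 c hc _ (Submodule.smul_mem _ _ hk0))) (Submodule.smul_mem _ _ hW0)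
        have hm2 : t m • Dg (f x) (Df x elim) - Dg (f x) (Df x (hs m)) ∈ SC.level 0 :=
          sub_mem (Submodule.smul_mem _ _ hW0) hv0
        rw [hsplit]
        refine le_trans (hC.tri 0 _ hm1 _ hm2) ?_
        have hb1 : SC.lnorm 0 (t m • Dg (f x + c • k) ((t m)⁻¹ • k) - t m • Dg (f x) (Df x elim)) ≤ (ε/3) * t m := by
          rw [← smul_sub, hC.homog 0 _ _ (sub_mem (hDgz0 c hc _ (Submodule.smul_mem _ _ hk0)) hW0),
            abs_of_pos (ht_pos m)]
          calc t m * SC.lnorm 0 (Dg (f x + c • k) ((t m)⁻¹ • k) - Dg (f x) (Df x elim))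
              ≤ t m * (ε/3) := mul_le_mul_of_nonneg_left (key1 c hc).le (ht_pos m).le
          _ = (ε/3) * t m := mul_comm _ _
        linarith [key2]
      -- mean value argument
      have hmvt : SC.lnorm 0 (g (f x + (1:ℝ) • k) - g (f x) - (1:ℝ) • Dg (f x) (Df x (hs m)))
          ≤ ε * t m := by
        apply scalar_mvt (fun c => SC.lnorm 0 (g (f x + c • k) - g (f x) - c • Dg (f x) (Df x (hs m))))
        · have e0 : g (f x + (0:ℝ) • k) - g (f x) - (0:ℝ) • Dg (f x) (Df x (hs m)) = 0 := by
            simp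
          show SC.lnorm 0 _ ≤ 0
          rw [e0, nice_zero hC 0]
        · intro c hc
          have hzV := (hseg c hc).1
          have hz1 := (hseg c hc).2
          have hLnn := hB.nonneg 1 k
          have hη : 0 < (ε/3) * t m / (SB.lnorm 1 k + 1) :=
            div_pos (mul_pos (by linarith) (ht_pos m)) (by linarith)
          obtain ⟨δc, hδcpos, hδc⟩ := (hg.1 (f x + c • k) ⟨hzV, hz1⟩).2 _ hη
          refine ⟨δc / (SB.lnorm 1 k + 1), div_pos hδcpos (by linarith), ?_⟩
          intro s hsabs hcs
          have hsk1 : SB.lnorm 1 (s • k) < δc := by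
            rw [hB.homog 1 _ _ hk1]
            have h1 : |s| * SB.lnorm 1 k ≤ (δc / (SB.lnorm 1 k + 1)) * SB.lnorm 1 k :=
              mul_le_mul_of_nonneg_right hsabs (hB.nonneg _ _)
            have h2 : (δc / (SB.lnorm 1 k + 1)) * SB.lnorm 1 k < δc := by
              rw [div_mul_eq_mul_div, div_lt_iff₀ (by linarith)]
              exact mul_lt_mul_of_pos_left (lt_add_one _) hδcpos
            linarith
          have hzsV : f x + c • k + s • k ∈ Vs := by
            have e2 : f x + c • k + s • k = f x + (c+s) • k := by module
            rw [e2]; exact (hseg (c+s) hcs).1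
          have hest := hδc (s • k) (Submodule.smul_mem _ _ hk1) hzsV hsk1
          have hest2 : SC.lnorm 0 (g (f x + (c+s) • k) - g (f x + c • k) - Dg (f x + c • k) (s • k))
              ≤ (ε/3) * t m * |s| := by
            rw [show f x + (c+s) • k = f x + c • k + s • k from by module]
            refine le_trans hest ?_
            rw [hB.homog 1 _ _ hk1]
            rw [div_mul_eq_mul_div, div_le_iff₀ (by linarith)]
            have base : (0:ℝ) ≤ ε/3 * t m * |s| :=
              mul_nonneg (mul_nonneg (by linarith) (ht_pos m).le) (abs_nonneg s)
            calc ε/3 * t m * (|s| * SB.lnorm 1 k) = (ε/3 * t m * |s|) * SB.lnorm 1 k := by ring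
            _ ≤ (ε/3 * t m * |s|) * (SB.lnorm 1 k + 1) := mul_le_mul_of_nonneg_left (by linarith) base
            _ = ε/3 * t m * |s| * (SB.lnorm 1 k + 1) := rfl
          have hDgs : SC.lnorm 0 (Dg (f x + c • k) (s • k) - s • Dg (f x) (Df x (hs m)))
              ≤ |s| * ((2*ε/3) * t m) := by
            rw [show Dg (f x + c • k) (s • k) - s • Dg (f x) (Df x (hs m))
                = s • (Dg (f x + c • k) k - Dg (f x) (Df x (hs m))) from by
              rw [map_smul, smul_sub]]
            rw [hC.homog 0 _ _ (sub_mem (hDgz0 c hc k hk0) hv0)]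
            exact mul_le_mul_of_nonneg_left (keyv c hc) (abs_nonneg s)
          have hΔm1 : g (f x + (c+s) • k) - g (f x + c • k) - Dg (f x + c • k) (s • k) ∈ SC.level 0 :=
            sub_mem (sub_mem (hgz0 (c+s) hcs) (hgz0 c hc)) (hDgz0 c hc _ (Submodule.smul_mem _ _ hk0))
          have hΔm2 : Dg (f x + c • k) (s • k) - s • Dg (f x) (Df x (hs m)) ∈ SC.level 0 :=
            sub_mem (hDgz0 c hc _ (Submodule.smul_mem _ _ hk0)) (Submodule.smul_mem _ _ hv0)
          have hΔmem : g (f x + (c+s) • k) - g (f x + c • k) - s • Dg (f x) (Df x (hs m)) ∈ SC.level 0 :=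
            sub_mem (sub_mem (hgz0 (c+s) hcs) (hgz0 c hc)) (Submodule.smul_mem _ _ hv0)
          have hΔ : SC.lnorm 0 (g (f x + (c+s) • k) - g (f x + c • k) - s • Dg (f x) (Df x (hs m)))
              ≤ (ε * t m) * |s| := by
            have hsplit2 : g (f x + (c+s) • k) - g (f x + c • k) - s • Dg (f x) (Df x (hs m))
                = (g (f x + (c+s) • k) - g (f x + c • k) - Dg (f x + c • k) (s • k))
                  + (Dg (f x + c • k) (s • k) - s • Dg (f x) (Df x (hs m))) := by abel
            rw [hsplit2]
            refine le_trans (hC.tri 0 _ hΔm1 _ hΔm2) ?_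
            calc SC.lnorm 0 (g (f x + (c+s) • k) - g (f x + c • k) - Dg (f x + c • k) (s • k))
                  + SC.lnorm 0 (Dg (f x + c • k) (s • k) - s • Dg (f x) (Df x (hs m)))
                ≤ (ε/3) * t m * |s| + |s| * ((2*ε/3) * t m) := add_le_add hest2 hDgs
            _ = (ε * t m) * |s| := by ring
          -- pass to the scalar difference
          have hXc : g (f x + c • k) - g (f x) - c • Dg (f x) (Df x (hs m)) ∈ SC.level 0 :=
            sub_mem (sub_mem (hgz0 c hc) hgfx0) (Submodule.smul_mem _ _ hv0)
          have hXcs : g (f x + (c+s) • k) - g (f x) - (c+s) • Dg (f x) (Df x (hs m)) ∈ SC.level 0 :=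
            sub_mem (sub_mem (hgz0 (c+s) hcs) hgfx0) (Submodule.smul_mem _ _ hv0)
          have eqX : g (f x + (c+s) • k) - g (f x) - (c+s) • Dg (f x) (Df x (hs m))
              = (g (f x + c • k) - g (f x) - c • Dg (f x) (Df x (hs m)))
                + (g (f x + (c+s) • k) - g (f x + c • k) - s • Dg (f x) (Df x (hs m))) := by
            module
          have t1 := hC.tri 0 _ hXc _ hΔmem
          rw [← eqX] at t1
          have eqX2 : g (f x + c • k) - g (f x) - c • Dg (f x) (Df x (hs m))
              = (g (f x + (c+s) • k) - g (f x) - (c+s) • Dg (f x) (Df x (hs m)))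
                + (-(g (f x + (c+s) • k) - g (f x + c • k) - s • Dg (f x) (Df x (hs m)))) := by
            module
          have t2 := hC.tri 0 _ hXcs _ (neg_mem hΔmem)
          rw [← eqX2, nice_neg hC 0 hΔmem] at t2
          rw [abs_sub_le_iff]
          constructor
          · linarith
          · linarith
      -- the contradiction
      have hfinal : SC.lnorm 0 ((g ∘ f) (x + hs m) - (g ∘ f) x - Dg (f x) (Df x (hs m)))
          ≤ ε * t m := by
        have e1 : f x + k = f (x + hs m) := by rw [hk_def]; abel
        have e2 : (g ∘ f) (x + hs m) - (g ∘ f) x - Dg (f x) (Df x (hs m))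
            = g (f x + (1:ℝ) • k) - g (f x) - (1:ℝ) • Dg (f x) (Df x (hs m)) := by
          rw [one_smul, one_smul, e1]; rfl
        rw [e2]
        exact hmvt
      rw [ht_def m] at hfinal
      exact absurd (hsbig m) (not_lt.mpr hfinal)
  · -- sc0 of the tangent map of the composition
    have hcompT : Tmap (g ∘ f) (fun p => (Dg (f p)).comp (Df p))
        = (Tmap g Dg) ∘ (Tmap f Df) := by
      funext q
      simp [Tmap, Function.comp]
    rw [hcompT]
    refine sc0_comp (fun q hq => ?_) hTf hTg
    obtain ⟨hq1, hq2, hq3⟩ := hq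
    exact ⟨hmap _ hq1, (hTfl q hq1 hq2 hq3).1, (hTfl q hq1 hq2 hq3).2⟩

lemma tri_transport (SE' : ScScale E) (SF' : ScScale F) (SW' : ScScale W) (SH' : ScScale H)
    (U : Set E) (K : E × F → W × H) (DK : E × F → (E × F) →ₗ[ℝ] (W × H))
    (h : Sc0 (SE'.prod SF').tangent (SW'.prod SH').tangent
      ((SE'.prod SF').tangentSet {p : E × F | p.1 ∈ U}) (Tmap K DK)) :
    Sc0 (SE'.tangent.prod SF'.tangent) (SW'.tangent.prod SH'.tangent)
      (triTangentSet SE' SF' U) (triTangent K DK) := by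
  intro m
  obtain ⟨hlev, hcont⟩ := h m
  set σ : (E × E) × (F × F) → (E × F) × (E × F) :=
    fun q => ((q.1.1, q.2.1), (q.1.2, q.2.2)) with hσ
  set τ : (W × H) × (W × H) → (W × W) × (H × H) :=
    fun p => ((p.1.1, p.2.1), (p.1.2, p.2.2)) with hτ
  have hmem : ∀ q : (E × E) × (F × F),
      q ∈ triTangentSet SE' SF' U ∩ ((SE'.tangent.prod SF'.tangent).level m : Set _) ↔
      σ q ∈ (SE'.prod SF').tangentSet {p : E × F | p.1 ∈ U} ∩
        (((SE'.prod SF').tangent.level m : Set _)) := by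
    intro q
    simp only [triTangentSet, ScScale.tangentSet, ScScale.tangent, ScScale.prod,
      Set.mem_inter_iff, Set.mem_setOf_eq, SetLike.mem_coe, Submodule.mem_prod, hσ]
    tauto
  have hval : ∀ q, triTangent K DK q = τ (Tmap K DK (σ q)) := by
    intro q
    simp only [triTangent, Tmap, hσ, hτ]
  have hnorm : ∀ q q' : (E × E) × (F × F),
      (SE'.tangent.prod SF'.tangent).lnorm m (q - q')
        = (SE'.prod SF').tangent.lnorm m (σ q - σ q') := by
    intro q q'
    show SE'.lnorm (m+1) (q.1.1 - q'.1.1) + SE'.lnorm m (q.1.2 - q'.1.2)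
        + (SF'.lnorm (m+1) (q.2.1 - q'.2.1) + SF'.lnorm m (q.2.2 - q'.2.2))
      = SE'.lnorm (m+1) (q.1.1 - q'.1.1) + SF'.lnorm (m+1) (q.2.1 - q'.2.1)
        + (SE'.lnorm m (q.1.2 - q'.1.2) + SF'.lnorm m (q.2.2 - q'.2.2))
    ring
  have hnormW : ∀ p p' : (W × H) × (W × H),
      (SW'.tangent.prod SH'.tangent).lnorm m (τ p - τ p')
        = (SW'.prod SH').tangent.lnorm m (p - p') := by
    intro p p'
    show SW'.lnorm (m+1) (p.1.1 - p'.1.1) + SW'.lnorm m (p.2.1 - p'.2.1)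
        + (SH'.lnorm (m+1) (p.1.2 - p'.1.2) + SH'.lnorm m (p.2.2 - p'.2.2))
      = SW'.lnorm (m+1) (p.1.1 - p'.1.1) + SH'.lnorm (m+1) (p.1.2 - p'.1.2)
        + (SW'.lnorm m (p.2.1 - p'.2.1) + SH'.lnorm m (p.2.2 - p'.2.2))
    ring
  have hlevW : ∀ p : (W × H) × (W × H), p ∈ (SW'.prod SH').tangent.level m →
      τ p ∈ (SW'.tangent.prod SH'.tangent).level m := by
    intro p hp
    simp only [ScScale.tangent, ScScale.prod, Submodule.mem_prod] at hp ⊢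
    tauto
  constructor
  · intro q hq
    rw [hval]
    exact hlevW _ (hlev (σ q) ((hmem q).mp hq))
  · intro q hq ε hε
    obtain ⟨δ, hδ, hd⟩ := hcont (σ q) ((hmem q).mp hq) ε hε
    refine ⟨δ, hδ, fun y hy hlt => ?_⟩
    rw [hval, hval, hnormW]
    exact hd (σ y) ((hmem y).mp hy) (by rw [← hnorm]; exact hlt)

lemma sc0_level_congr {X Y : Type*} [AddCommGroup X] [Module ℝ X] [AddCommGroup Y] [Module ℝ Y]
    {SX : ScScale X} {SY : ScScale Y} {s₁ s₂ : Set X}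
    (h : ∀ m, s₁ ∩ (SX.level m : Set X) = s₂ ∩ (SX.level m : Set X))
    {f : X → Y} (hf : Sc0 SX SY s₁ f) : Sc0 SX SY s₂ f := by
  intro m
  have hmm : ∀ x : X, x ∈ s₂ ∩ (SX.level m : Set X) ↔ x ∈ s₁ ∩ (SX.level m : Set X) := by
    intro x; rw [h m]
  refine ⟨fun x hx => (hf m).1 x ((hmm x).mp hx), ?_⟩
  intro x hx ε hε
  obtain ⟨δ, hδ, h'⟩ := (hf m).2 x ((hmm x).mp hx) ε hε
  exact ⟨δ, hδ, fun y hy hlt => h' y ((hmm y).mp hy) hlt⟩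

/-- chain rule for sc¹_◁-maps.  Let `f : U ◁ F → V ◁ G` and
`g : V ◁ G → W ◁ H` be sc¹_◁ maps between local strong sc-bundles (each of the
form `(u,h) ↦ (a(u), ℓ(u,h))`, with the base image of `f` landing in `V`).
Then `g ∘ f` is sc¹_◁, `T_◁(g ∘ f) = (T_◁ g) ∘ (T_◁ f)` (witnessed by the
composed linearizations and the pointwise identity of the ◁-tangent maps), and
`T_◁(g ∘ f)` is sc⁰_◁. -/
theorem sc1_triangle_chain_rule
    (SE : ScScale E) (SF : ScScale F) (SR : ScScale R) (SG : ScScale G)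
    (SW : ScScale W) (SH : ScScale H)
    (hSE : SE.IsScBanach) (hSF : SF.IsScBanach) (hSR : SR.IsScBanach)
    (hSG : SG.IsScBanach) (hSW : SW.IsScBanach) (hSH : SH.IsScBanach)
    (U : Set E) (V : Set R) (hU : SE.IsOpenIn U) (hV : SR.IsOpenIn V)
    (f : E × F → R × G) (g : R × G → W × H)
    -- f and g are of the form (u,h) ↦ (a(u), ℓ(u,h)):
    (hf_form : ∀ p q : E × F, p.1 = q.1 → (f p).1 = (f q).1)
    (hg_form : ∀ p q : R × G, p.1 = q.1 → (g p).1 = (g q).1)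
    -- the base map of f maps U into V:
    (hbase : ∀ p : E × F, p.1 ∈ U → (f p).1 ∈ V)
    (hf : IsSc1Tri SE SF SR SG U f) (hg : IsSc1Tri SR SG SW SH V g) :
    IsSc1Tri SE SF SW SH U (g ∘ f) ∧
    ∀ (Df : E × F → ((E × F) →ₗ[ℝ] (R × G)))
      (Dg : R × G → ((R × G) →ₗ[ℝ] (W × H))),
      Sc1TriWith SE SF SR SG U f Df → Sc1TriWith SR SG SW SH V g Dg →
        -- the composed linearizations witness sc¹_◁ for g ∘ f:
        Sc1TriWith SE SF SW SH U (g ∘ f) (fun p => (Dg (f p)).comp (Df p)) ∧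
        -- T_◁(g ∘ f) = (T_◁ g) ∘ (T_◁ f) pointwise on T_◁(U ◁ F):
        (∀ q ∈ triTangentSet SE SF U,
          triTangent (g ∘ f) (fun p => (Dg (f p)).comp (Df p)) q
            = triTangent g Dg (triTangent f Df q)) ∧
        -- T_◁(g ∘ f) is sc⁰_◁:
        Sc0 (SE.tangent.prod SF.tangent) (SW.tangent.prod SH.tangent)
          (triTangentSet SE SF U)
          (triTangent (g ∘ f) (fun p => (Dg (f p)).comp (Df p))) ∧
        Sc0 (SE.tangent.prod (SF.tangent.shift 1)) (SW.tangent.prod (SH.tangent.shift 1))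
          (triTangentSet SE SF U)
          (triTangent (g ∘ f) (fun p => (Dg (f p)).comp (Df p))) := by
  have nE := nice_of_banach hSE
  have nF := nice_of_banach hSF
  have nR := nice_of_banach hSR
  have nG := nice_of_banach hSG
  have nW := nice_of_banach hSW
  have nH := nice_of_banach hSH
  have hmapUV : ∀ p ∈ {p : E × F | p.1 ∈ U}, f p ∈ {p : R × G | p.1 ∈ V} :=
    fun p hp => hbase p hp
  have hopen1 := prod_open_lift SR SG V nG.nonneg hV
  have hopen2 := prod_open_lift SR (SG.shift 1) V (fun m y => nG.nonneg _ y) hV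
  -- the composed witnesses
  have main : ∀ (Df : E × F → ((E × F) →ₗ[ℝ] (R × G)))
      (Dg : R × G → ((R × G) →ₗ[ℝ] (W × H))),
      Sc1TriWith SE SF SR SG U f Df → Sc1TriWith SR SG SW SH V g Dg →
      Sc1TriWith SE SF SW SH U (g ∘ f) (fun p => (Dg (f p)).comp (Df p)) := by
    intro Df Dg hDf hDg
    constructor
    · exact sc1With_comp (SE.prod SF) (SR.prod SG) (SW.prod SH)
        (nice_prod nE nF) (nice_prod nR nG) (nice_prod nW nH)
        {p : E × F | p.1 ∈ U} {p : R × G | p.1 ∈ V} hopen1 f g hmapUV Df Dg hDf.1 hDg.1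
    · exact sc1With_comp (SE.prod (SF.shift 1)) (SR.prod (SG.shift 1)) (SW.prod (SH.shift 1))
        (nice_prod nE (nice_shift nF 1)) (nice_prod nR (nice_shift nG 1))
        (nice_prod nW (nice_shift nH 1))
        {p : E × F | p.1 ∈ U} {p : R × G | p.1 ∈ V} hopen2 f g hmapUV Df Dg hDf.2 hDg.2
  -- pointwise identity of the ◁-tangent maps
  have hpoint : ∀ (Df : E × F → ((E × F) →ₗ[ℝ] (R × G)))
      (Dg : R × G → ((R × G) →ₗ[ℝ] (W × H))) (q : (E × E) × (F × F)),
      triTangent (g ∘ f) (fun p => (Dg (f p)).comp (Df p)) q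
        = triTangent g Dg (triTangent f Df q) := by
    intro Df Dg q
    simp only [triTangent, Function.comp_apply, LinearMap.comp_apply, Prod.mk.eta]
  -- set congruence for the shifted scales
  have hsets : ∀ m, triTangentSet SE (SF.shift 1) U ∩
        (((SE.tangent.prod ((SF.shift 1).tangent)).level m : Set ((E × E) × (F × F)))) =
      triTangentSet SE SF U ∩
        (((SE.tangent.prod ((SF.shift 1).tangent)).level m : Set ((E × E) × (F × F)))) := by
    intro m
    ext q
    simp only [triTangentSet, ScScale.tangent, ScScale.prod, ScScale.shift,
      Set.mem_inter_iff, Set.mem_setOf_eq, SetLike.mem_coe, Submodule.mem_prod]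
    constructor
    · rintro ⟨⟨h1, _, _, _, _⟩, hl⟩
      exact ⟨⟨h1, nE.mono (by omega) hl.1.1, nE.mono (by omega) hl.1.2,
        nF.mono (by omega) hl.2.1, nF.mono (by omega) hl.2.2⟩, hl⟩
    · rintro ⟨⟨h1, _, _, _, _⟩, hl⟩
      exact ⟨⟨h1, nE.mono (by omega) hl.1.1, nE.mono (by omega) hl.1.2,
        nF.mono (by omega) hl.2.1, nF.mono (by omega) hl.2.2⟩, hl⟩
  refine ⟨?_, ?_⟩
  · refine ⟨⟨?_, ?_⟩, ?_⟩
    · exact sc0_comp hmapUV hf.1.1 hg.1.1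
    · exact sc0_comp hmapUV hf.1.2 hg.1.2
    · obtain ⟨Df0, hDf0⟩ := hf.2
      obtain ⟨Dg0, hDg0⟩ := hg.2
      exact ⟨_, main Df0 Dg0 hDf0 hDg0⟩
  · intro Df Dg hDf hDg
    have hmain := main Df Dg hDf hDg
    refine ⟨hmain, fun q _ => hpoint Df Dg q, ?_, ?_⟩
    · exact tri_transport SE SF SW SH U (g ∘ f) (fun p => (Dg (f p)).comp (Df p)) hmain.1.2
    · have h2 := tri_transport SE (SF.shift 1) SW (SH.shift 1) U (g ∘ f)
        (fun p => (Dg (f p)).comp (Df p)) hmain.2.2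
      have e1 : (SF.shift 1).tangent = SF.tangent.shift 1 := rfl
      have e2 : (SH.shift 1).tangent = SH.tangent.shift 1 := rfl
      rw [← e1, ← e2]
      exact sc0_level_congr hsets h2

end TriangleBundles
end

section
/- Let (S,R) be a degeneration structure, Z ∈ S, and suppose there exists a degeneration sequence z_n ← ⋯ ← z₀ = (Z) of length n (so z_n is an (n+1)-tuple). Then there exist exactly n! degeneration sequences connecting z₀ = (Z) with z_n. -/
variable {S : Type*}

/-- A 1-step degeneration for a set of relators `R`: the tuple `z'` is obtained from
the tuple `z` by replacing one entry `C` by the adjacent pair `A, B`, where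
`(A, B; C)` is a relator. -/
def OneStep (R : Set (S × S × S)) (z z' : List S) : Prop :=
  ∃ (l r : List S) (A B C : S), (A, B, C) ∈ R ∧ z = l ++ C :: r ∧ z' = l ++ A :: B :: r

/-- `A` is decomposable if it is the target of some relator. -/
def Decomposable (R : Set (S × S × S)) (A : S) : Prop :=
  ∃ X Y : S, (X, Y, A) ∈ R

/-- A degeneration sequence is a finite chain of 1-step degenerations, recorded as the
list of successive tuples. -/
def IsDegSeq (R : Set (S × S × S)) (c : List (List S)) : Prop :=
  c.Chain' (OneStep R)

/-- A degeneration structure: a set with relators satisfying the degeneration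
finiteness, associativity and minimality axioms. -/
structure DegenStructure (S : Type*) where
  /-- The set of relators `(A, B; C)`. -/
  R : Set (S × S × S)
  /-- (Degeneration Finiteness) For every `Z` only finitely many degeneration
  sequences start at the `1`-tuple `(Z)`. -/
  finiteness : ∀ Z : S,
    Set.Finite {c : List (List S) | c.head? = some [Z] ∧ IsDegSeq R c}
  /-- (Associativity) The set of two-step degeneration sequences with prescribed
  source `(Z)` and target `z₂` is either empty or consists of exactly the two
  sequences `(Z) → (A,B) → (A,I,E)` and `(Z) → (A*,E) → (A,I,E)`. -/
  assoc : ∀ (Z : S) (z₂ : List S),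
    (∃ z₁, OneStep R [Z] z₁ ∧ OneStep R z₁ z₂) →
    ∃ A I Ep B Astar : S, z₂ = [A, I, Ep] ∧
      (A, B, Z) ∈ R ∧ (I, Ep, B) ∈ R ∧ (A, I, Astar) ∈ R ∧ (Astar, Ep, Z) ∈ R ∧
      ([A, B] : List S) ≠ [Astar, Ep] ∧
      {z₁ : List S | OneStep R [Z] z₁ ∧ OneStep R z₁ z₂} = {[A, B], [Astar, Ep]}
  /-- (Minimality) If `(A,B;C)` and `(A',B';C)` are relators and either `A = A'` with
  `A` not decomposable, or `B = B'` with `B` not decomposable, then `(A,B) = (A',B')`. -/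
  minimality : ∀ A B A' B' C : S, (A, B, C) ∈ R → (A', B', C) ∈ R →
    ((A = A' ∧ ¬ Decomposable R A) ∨ (B = B' ∧ ¬ Decomposable R B)) →
    A = A' ∧ B = B'

/-- abbreviation for reachability -/
abbrev Reach (R : Set (S × S × S)) : List S → List S → Prop :=
  Relation.ReflTransGen (OneStep R)

lemma oneStep_of_rel {R : Set (S × S × S)} {A B C : S} (h : (A, B, C) ∈ R)
    (l r : List S) : OneStep R (l ++ C :: r) (l ++ A :: B :: r) :=
  ⟨l, r, A, B, C, h, rfl, rfl⟩

lemma oneStep_of_rel_nil {R : Set (S × S × S)} {A B C : S} (h : (A, B, C) ∈ R) :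
    OneStep R [C] [A, B] := by
  simpa using oneStep_of_rel h [] []

lemma oneStep_length {R : Set (S × S × S)} {z z' : List S} (h : OneStep R z z') :
    z'.length = z.length + 1 := by
  obtain ⟨l, r, A, B, C, -, rfl, rfl⟩ := h
  simp
  omega

lemma reach_length {R : Set (S × S × S)} {z z' : List S} (h : Reach R z z') :
    z.length ≤ z'.length := by
  induction h with
  | refl => exact le_refl _
  | tail h1 h2 ih => rw [oneStep_length h2]; omega

lemma reach_single {D : DegenStructure S} {Z G : S} (h : Reach D.R [Z] [G]) : G = Z := by
  rcases Relation.ReflTransGen.cases_tail h with he | ⟨y, hy, hstep⟩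
  · simpa using he
  · exfalso
    have h1 : (1:ℕ) = y.length + 1 := by simpa using oneStep_length hstep
    have h2 : (1:ℕ) ≤ y.length := by simpa using reach_length hy
    omega

/-- Pumping: a relator whose target equals its left source contradicts finiteness. -/
lemma not_rel_left {D : DegenStructure S} {A B : S} (h : (A, B, A) ∈ D.R) : False := by
  have key : ∀ k : ℕ, ((List.range (k+1)).map (fun i => A :: List.replicate i B)) ∈
      {c : List (List S) | c.head? = some [A] ∧ IsDegSeq D.R c} := by
    intro k
    constructor
    · rw [List.range_succ_eq_map]
      simp
    · show List.IsChain _ _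
      rw [List.isChain_map, List.isChain_range_succ]
      intro m _
      have := oneStep_of_rel h [] (List.replicate m B)
      simpa [List.replicate_succ] using this
  have hinf : {c : List (List S) | c.head? = some [A] ∧ IsDegSeq D.R c}.Infinite := by
    apply Set.infinite_of_injective_forall_mem
      (f := fun k => ((List.range (k+1)).map (fun i => A :: List.replicate i B)))
    · intro a b hab
      have := congrArg List.length hab
      simpa using this
    · exact key
  exact hinf (D.finiteness A)

lemma not_rel_right {D : DegenStructure S} {A B : S} (h : (A, B, B) ∈ D.R) : False := by
  have key : ∀ k : ℕ, ((List.range (k+1)).map (fun i => List.replicate i A ++ [B])) ∈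
      {c : List (List S) | c.head? = some [B] ∧ IsDegSeq D.R c} := by
    intro k
    constructor
    · rw [List.range_succ_eq_map]
      simp
    · show List.IsChain _ _
      rw [List.isChain_map, List.isChain_range_succ]
      intro m _
      have := oneStep_of_rel h (List.replicate m A) []
      simpa [List.replicate_succ'] using this
  have hinf : {c : List (List S) | c.head? = some [B] ∧ IsDegSeq D.R c}.Infinite := by
    apply Set.infinite_of_injective_forall_mem
      (f := fun k => ((List.range (k+1)).map (fun i => List.replicate i A ++ [B])))
    · intro a b hab
      have := congrArg List.length hab
      simpa using this
    · exact key
  exact hinf (D.finiteness B)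

lemma rel_ne_left {D : DegenStructure S} {A B C : S} (h : (A, B, C) ∈ D.R) : A ≠ C := by
  rintro rfl; exact not_rel_left h

lemma rel_ne_right {D : DegenStructure S} {A B C : S} (h : (A, B, C) ∈ D.R) : B ≠ C := by
  rintro rfl; exact not_rel_right h

/-- height of a letter: maximal length of a degeneration sequence starting at `[X]` -/
noncomputable def hgt (D : DegenStructure S) (X : S) : ℕ :=
  (D.finiteness X).toFinset.sup List.length

lemma hgt_lt_left {D : DegenStructure S} {A B C : S} (h : (A, B, C) ∈ D.R) :
    hgt D A < hgt D C := by
  have hCpos : 0 < hgt D C := by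
    have hm : ([[C]] : List (List S)) ∈ (D.finiteness C).toFinset := by
      rw [Set.Finite.mem_toFinset]
      exact ⟨rfl, List.isChain_singleton _⟩
    have h2 : ([[C]] : List (List S)).length ≤ hgt D C := Finset.le_sup hm
    simp at h2
    omega
  rw [hgt, Finset.sup_lt_iff (by simpa using hCpos)]
  intro c hc
  rw [Set.Finite.mem_toFinset] at hc
  obtain ⟨hhead, hchain⟩ := hc
  have hmem : ([C] :: c.map (· ++ [B])) ∈ (D.finiteness C).toFinset := by
    rw [Set.Finite.mem_toFinset]
    refine ⟨rfl, ?_⟩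
    show List.IsChain _ _
    rw [List.isChain_cons]
    constructor
    · intro y hy
      rw [List.head?_map, hhead] at hy
      simp at hy
      subst hy
      exact oneStep_of_rel_nil h
    · rw [List.isChain_map]
      refine List.IsChain.imp ?_ hchain
      intro a b hab
      obtain ⟨l, r, A', B', C', hR, rfl, rfl⟩ := hab
      exact ⟨l, r ++ [B], A', B', C', hR, by simp, by simp⟩
  have hle : ([C] :: c.map (· ++ [B])).length ≤ hgt D C := Finset.le_sup hmem
  simp at hle
  omega

lemma hgt_lt_right {D : DegenStructure S} {A B C : S} (h : (A, B, C) ∈ D.R) :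
    hgt D B < hgt D C := by
  have hCpos : 0 < hgt D C := by
    have hm : ([[C]] : List (List S)) ∈ (D.finiteness C).toFinset := by
      rw [Set.Finite.mem_toFinset]
      exact ⟨rfl, List.isChain_singleton _⟩
    have h2 : ([[C]] : List (List S)).length ≤ hgt D C := Finset.le_sup hm
    simp at h2
    omega
  rw [hgt, Finset.sup_lt_iff (by simpa using hCpos)]
  intro c hc
  rw [Set.Finite.mem_toFinset] at hc
  obtain ⟨hhead, hchain⟩ := hc
  have hmem : ([C] :: c.map (A :: ·)) ∈ (D.finiteness C).toFinset := by
    rw [Set.Finite.mem_toFinset]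
    refine ⟨rfl, ?_⟩
    show List.IsChain _ _
    rw [List.isChain_cons]
    constructor
    · intro y hy
      rw [List.head?_map, hhead] at hy
      simp at hy
      subst hy
      exact oneStep_of_rel_nil h
    · rw [List.isChain_map]
      refine List.IsChain.imp ?_ hchain
      intro a b hab
      obtain ⟨l, r, A', B', C', hR, rfl, rfl⟩ := hab
      exact ⟨A :: l, r, A', B', C', hR, by simp, by simp⟩
  have hle : ([C] :: c.map (A :: ·)).length ≤ hgt D C := Finset.le_sup hmem
  simp at hle
  omega

/-- Left cancellation: relators are determined by target and left source. -/
lemma cancel_left_aux (D : DegenStructure S) :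
    ∀ (n : ℕ) (A B B' C : S), hgt D A ≤ n → (A, B, C) ∈ D.R → (A, B', C) ∈ D.R → B = B' := by
  intro n
  induction n with
  | zero =>
    intro A B B' C hA h h'
    by_cases hd : Decomposable D.R A
    · obtain ⟨D1, D2, hD⟩ := hd
      have := hgt_lt_left hD
      omega
    · exact (D.minimality A B A B' C h h' (Or.inl ⟨rfl, hd⟩)).2
  | succ n ih =>
    intro A B B' C hA h h'
    by_cases hd : Decomposable D.R A
    · obtain ⟨D1, D2, hD⟩ := hd
      obtain ⟨A₀, I, Ep, B₀, Astar, hz2, r1, r2, r3, r4, hne, hset⟩ :=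
        D.assoc C [D1, D2, B] ⟨[A, B], oneStep_of_rel_nil h,
          by simpa using oneStep_of_rel hD [] [B]⟩
      obtain ⟨A₀', I', Ep', B₀', Astar', hz2', r1', r2', r3', r4', hne', hset'⟩ :=
        D.assoc C [D1, D2, B'] ⟨[A, B'], oneStep_of_rel_nil h',
          by simpa using oneStep_of_rel hD [] [B']⟩
      have ha : D1 = A₀ ∧ D2 = I ∧ B = Ep := by simpa using hz2
      have ha' : D1 = A₀' ∧ D2 = I' ∧ B' = Ep' := by simpa using hz2'
      have r1a : (D1, B₀, C) ∈ D.R := by rw [ha.1]; exact r1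
      have r2a : (D2, B, B₀) ∈ D.R := by rw [ha.2.1, ha.2.2]; exact r2
      have r1b : (D1, B₀', C) ∈ D.R := by rw [ha'.1]; exact r1'
      have r2b : (D2, B', B₀') ∈ D.R := by rw [ha'.2.1, ha'.2.2]; exact r2'
      have hB₀ : B₀ = B₀' := by
        refine ih D1 B₀ B₀' C ?_ r1a r1b
        have := hgt_lt_left hD
        omega
      rw [hB₀] at r2a
      refine ih D2 B B' B₀' ?_ r2a r2b
      have := hgt_lt_right hD
      omega
    · exact (D.minimality A B A B' C h h' (Or.inl ⟨rfl, hd⟩)).2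

lemma cancel_left {D : DegenStructure S} {A B B' C : S}
    (h : (A, B, C) ∈ D.R) (h' : (A, B', C) ∈ D.R) : B = B' :=
  cancel_left_aux D (hgt D A) A B B' C le_rfl h h'

/-- Right cancellation: relators are determined by target and right source. -/
lemma cancel_right_aux (D : DegenStructure S) :
    ∀ (n : ℕ) (A A' B C : S), hgt D B ≤ n → (A, B, C) ∈ D.R → (A', B, C) ∈ D.R → A = A' := by
  intro n
  induction n with
  | zero =>
    intro A A' B C hB h h'
    by_cases hd : Decomposable D.R B
    · obtain ⟨D1, D2, hD⟩ := hd
      have := hgt_lt_left hD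
      omega
    · exact (D.minimality A B A' B C h h' (Or.inr ⟨rfl, hd⟩)).1
  | succ n ih =>
    intro A A' B C hB h h'
    by_cases hd : Decomposable D.R B
    · obtain ⟨D1, D2, hD⟩ := hd
      obtain ⟨A₀, I, Ep, B₀, Astar, hz2, r1, r2, r3, r4, hne, hset⟩ :=
        D.assoc C [A, D1, D2] ⟨[A, B], oneStep_of_rel_nil h,
          by simpa using oneStep_of_rel hD [A] []⟩
      obtain ⟨A₀', I', Ep', B₀', Astar', hz2', r1', r2', r3', r4', hne', hset'⟩ :=
        D.assoc C [A', D1, D2] ⟨[A', B], oneStep_of_rel_nil h',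
          by simpa using oneStep_of_rel hD [A'] []⟩
      have ha : A = A₀ ∧ D1 = I ∧ D2 = Ep := by simpa using hz2
      have ha' : A' = A₀' ∧ D1 = I' ∧ D2 = Ep' := by simpa using hz2'
      have r3a : (A, D1, Astar) ∈ D.R := by rw [ha.1, ha.2.1]; exact r3
      have r4a : (Astar, D2, C) ∈ D.R := by rw [ha.2.2]; exact r4
      have r3b : (A', D1, Astar') ∈ D.R := by rw [ha'.1, ha'.2.1]; exact r3'
      have r4b : (Astar', D2, C) ∈ D.R := by rw [ha'.2.2]; exact r4'
      have hAst : Astar = Astar' := by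
        refine ih Astar Astar' D2 C ?_ r4a r4b
        have := hgt_lt_right hD
        omega
      rw [hAst] at r3a
      refine ih A A' D1 Astar' ?_ r3a r3b
      have := hgt_lt_left hD
      omega
    · exact (D.minimality A B A' B C h h' (Or.inr ⟨rfl, hd⟩)).1

lemma cancel_right {D : DegenStructure S} {A A' B C : S}
    (h : (A, B, C) ∈ D.R) (h' : (A', B, C) ∈ D.R) : A = A' :=
  cancel_right_aux D (hgt D B) A A' B C le_rfl h h'

/-- J1: every adjacent pair in a reachable tuple can be merged within the interval:
there is a relator `(a,b,E)` such that the merged tuple is still reachable. -/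
lemma merger_exists (D : DegenStructure S) (Z : S) :
    ∀ (N : ℕ) (z : List S), z.length ≤ N → Reach D.R [Z] z →
      ∀ (p s : List S) (a b : S), z = p ++ a :: b :: s →
      ∃ E, (a, b, E) ∈ D.R ∧ Reach D.R [Z] (p ++ E :: s) := by
  intro N
  induction N with
  | zero =>
    intro z hlen _ p s a b hz
    subst hz
    simp at hlen
  | succ N ih =>
    intro z hlen hreach p s a b hz
    -- walk lemmas
    have walkR : ∀ (p' s' : List S) (a' b' c' : S),
        p'.length + 3 + s'.length ≤ N + 1 →
        (∃ E, (a', b', E) ∈ D.R ∧ Reach D.R [Z] (p' ++ E :: c' :: s')) →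
        ∃ E, (b', c', E) ∈ D.R ∧ Reach D.R [Z] (p' ++ a' :: E :: s') := by
      rintro p' s' a' b' c' hl ⟨E, hE, hRe⟩
      obtain ⟨E₂, hE₂, hRe₂⟩ := ih (p' ++ E :: c' :: s') (by simp; omega) hRe p' s' E c' rfl
      obtain ⟨A₀, I, Ep, B₀, Astar, hz2, r1, r2, r3, r4, hne, hset⟩ :=
        D.assoc E₂ [a', b', c'] ⟨[E, c'], oneStep_of_rel_nil hE₂,
          by simpa using oneStep_of_rel hE [] [c']⟩
      have ha : a' = A₀ ∧ b' = I ∧ c' = Ep := by simpa using hz2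
      have r1a : (a', B₀, E₂) ∈ D.R := by rw [ha.1]; exact r1
      have r2a : (b', c', B₀) ∈ D.R := by rw [ha.2.1, ha.2.2]; exact r2
      exact ⟨B₀, r2a, hRe₂.tail (oneStep_of_rel r1a p' s')⟩
    have walkL : ∀ (p' s' : List S) (x a' b' : S),
        p'.length + 3 + s'.length ≤ N + 1 →
        (∃ E, (a', b', E) ∈ D.R ∧ Reach D.R [Z] (p' ++ x :: E :: s')) →
        ∃ E, (x, a', E) ∈ D.R ∧ Reach D.R [Z] (p' ++ E :: b' :: s') := by
      rintro p' s' x a' b' hl ⟨E, hE, hRe⟩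
      obtain ⟨E₂, hE₂, hRe₂⟩ := ih (p' ++ x :: E :: s') (by simp; omega) hRe p' s' x E rfl
      obtain ⟨A₀, I, Ep, B₀, Astar, hz2, r1, r2, r3, r4, hne, hset⟩ :=
        D.assoc E₂ [x, a', b'] ⟨[x, E], oneStep_of_rel_nil hE₂,
          by simpa using oneStep_of_rel hE [x] []⟩
      have ha : x = A₀ ∧ a' = I ∧ b' = Ep := by simpa using hz2
      have r3a : (x, a', Astar) ∈ D.R := by rw [ha.1, ha.2.1]; exact r3
      have r4a : (Astar, b', E₂) ∈ D.R := by rw [ha.2.2]; exact r4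
      exact ⟨Astar, r3a, hRe₂.tail (oneStep_of_rel r4a p' s')⟩
    -- cover lemmas
    have coverR : ∀ (d : ℕ) (l' r' : List S) (A' B' : S) (p' s' : List S) (a' b' : S),
        l'.length + d = p'.length →
        l' ++ A' :: B' :: r' = p' ++ a' :: b' :: s' →
        p'.length + 2 + s'.length ≤ N + 1 →
        (∃ E, (A', B', E) ∈ D.R ∧ Reach D.R [Z] (l' ++ E :: r')) →
        ∃ E, (a', b', E) ∈ D.R ∧ Reach D.R [Z] (p' ++ E :: s') := by
      intro d
      induction d with
      | zero =>
        intro l' r' A' B' p' s' a' b' hlen heq hN hG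
        obtain ⟨h1, h2⟩ := List.append_inj heq (by omega)
        obtain ⟨rfl, rfl, rfl⟩ : A' = a' ∧ B' = b' ∧ r' = s' := by simpa using h2
        subst h1
        exact hG
      | succ d ihd =>
        intro l' r' A' B' p' s' a' b' hlen heq hN hG
        have hlens : l'.length + 2 + r'.length = p'.length + 2 + s'.length := by
          have := congrArg List.length heq
          simp at this
          omega
        have hr : r' ≠ [] := by
          intro h
          subst h
          simp at hlens
          omega
        obtain ⟨c, r'', rfl⟩ := List.exists_cons_of_ne_nil hr
        have step := walkR l' r'' A' B' c (by simp at hlens ⊢; omega) hG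
        refine ihd (l' ++ [A']) r'' B' c p' s' a' b' (by simp; omega) ?_ hN ?_
        · simpa using heq
        · simpa using step
    have coverL : ∀ (d : ℕ) (l' r' : List S) (A' B' : S) (p' s' : List S) (a' b' : S),
        p'.length + d = l'.length →
        l' ++ A' :: B' :: r' = p' ++ a' :: b' :: s' →
        p'.length + 2 + s'.length ≤ N + 1 →
        (∃ E, (A', B', E) ∈ D.R ∧ Reach D.R [Z] (l' ++ E :: r')) →
        ∃ E, (a', b', E) ∈ D.R ∧ Reach D.R [Z] (p' ++ E :: s') := by
      intro d
      induction d with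
      | zero =>
        intro l' r' A' B' p' s' a' b' hlen heq hN hG
        obtain ⟨h1, h2⟩ := List.append_inj heq (by omega)
        obtain ⟨rfl, rfl, rfl⟩ : A' = a' ∧ B' = b' ∧ r' = s' := by simpa using h2
        subst h1
        exact hG
      | succ d ihd =>
        intro l' r' A' B' p' s' a' b' hlen heq hN hG
        have hlens : l'.length + 2 + r'.length = p'.length + 2 + s'.length := by
          have := congrArg List.length heq
          simp at this
          omega
        rcases List.eq_nil_or_concat l' with rfl | ⟨l'', x, rfl⟩
        · simp at hlen
        · rw [List.concat_eq_append] at *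
          have hG' : ∃ E, (A', B', E) ∈ D.R ∧ Reach D.R [Z] (l'' ++ x :: E :: r') := by
            obtain ⟨E, h1, h2⟩ := hG
            exact ⟨E, h1, by simpa using h2⟩
          have step := walkL l'' r' x A' B'
            (by simp at hlens ⊢; omega) hG'
          refine ihd l'' (B' :: r') x A' p' s' a' b' (by simp at hlen ⊢; omega) ?_ hN step
          simpa using heq
    -- base decomposition from last step of a path to z
    have hz2 : 2 ≤ z.length := by subst hz; simp; omega
    rcases Relation.ReflTransGen.cases_tail hreach with heq | ⟨y, hy, hstep⟩
    · exfalso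
      rw [heq] at hz2
      simp at hz2
    obtain ⟨l, r, A, B, C, hR, hyeq, hzeq⟩ := hstep
    have base : ∃ E, (A, B, E) ∈ D.R ∧ Reach D.R [Z] (l ++ E :: r) :=
      ⟨C, hR, hyeq ▸ hy⟩
    have heq2 : l ++ A :: B :: r = p ++ a :: b :: s := by rw [← hzeq, ← hz]
    have hNlen : p.length + 2 + s.length ≤ N + 1 := by
      have := congrArg List.length hz
      simp at this
      omega
    rcases le_or_gt l.length p.length with hle | hlt
    · exact coverR (p.length - l.length) l r A B p s a b (by omega) heq2 hNlen base
    · exact coverL (l.length - p.length) l r A B p s a b (by omega) heq2 hNlen base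

/-- Uniqueness: a reachable tuple is determined by all of its entries but one. -/
lemma reach_unique (D : DegenStructure S) (Z : S) :
    ∀ (N : ℕ) (p s : List S) (G G' : S), p.length + s.length ≤ N →
      Reach D.R [Z] (p ++ G :: s) → Reach D.R [Z] (p ++ G' :: s) → G = G' := by
  intro N
  induction N with
  | zero =>
    intro p s G G' hN h1 h2
    have hp : p = [] := by
      cases p with
      | nil => rfl
      | cons x t => simp at hN
    have hs : s = [] := by
      cases s with
      | nil => rfl
      | cons x t => simp at hN
    subst hp hs
    have e1 : G = Z := reach_single (by simpa using h1)
    have e2 : G' = Z := reach_single (by simpa using h2)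
    rw [e1, e2]
  | succ N ih =>
    intro p s G G' hN h1 h2
    rcases List.eq_nil_or_concat p with rfl | ⟨p₀, x, rfl⟩
    · cases s with
      | nil =>
        have e1 : G = Z := reach_single (by simpa using h1)
        have e2 : G' = Z := reach_single (by simpa using h2)
        rw [e1, e2]
      | cons c s' =>
        obtain ⟨E, hE, hRe⟩ := merger_exists D Z (G :: c :: s').length (G :: c :: s')
          le_rfl (by simpa using h1) [] s' G c rfl
        obtain ⟨E', hE', hRe'⟩ := merger_exists D Z (G' :: c :: s').length (G' :: c :: s')
          le_rfl (by simpa using h2) [] s' G' c rfl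
        have hEE : E = E' := by
          refine ih [] s' E E' ?_ hRe hRe'
          simp at hN ⊢
          omega
        rw [hEE] at hE
        exact cancel_right hE hE'
    · rw [List.concat_eq_append] at *
      have h1' : Reach D.R [Z] (p₀ ++ x :: G :: s) := by simpa using h1
      have h2' : Reach D.R [Z] (p₀ ++ x :: G' :: s) := by simpa using h2
      obtain ⟨E, hE, hRe⟩ := merger_exists D Z (p₀ ++ x :: G :: s).length _
        le_rfl h1' p₀ s x G rfl
      obtain ⟨E', hE', hRe'⟩ := merger_exists D Z (p₀ ++ x :: G' :: s).length _
        le_rfl h2' p₀ s x G' rfl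
      have hEE : E = E' := by
        refine ih p₀ s E E' ?_ hRe hRe'
        simp at hN ⊢
        omega
      rw [hEE] at hE
      exact cancel_left hE hE'

def SeqSet (D : DegenStructure S) (Z : S) (w : List S) : Set (List (List S)) :=
  {c | IsDegSeq D.R c ∧ c.head? = some [Z] ∧ c.getLast? = some w}

lemma seqSet_finite (D : DegenStructure S) (Z : S) (w : List S) : (SeqSet D Z w).Finite :=
  (D.finiteness Z).subset (fun c hc => ⟨hc.2.1, hc.1⟩)

lemma reach_of_seq (D : DegenStructure S) :
    ∀ (c : List (List S)) (a b : List S),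
      IsDegSeq D.R c → c.head? = some a → c.getLast? = some b → Reach D.R a b := by
  intro c
  induction c with
  | nil => intro a b _ hh _; simp at hh
  | cons x t iht =>
    intro a b hch hh hl
    have hx : x = a := by simpa using hh
    subst hx
    cases t with
    | nil =>
      have hb : x = b := by simpa using hl
      rw [← hb]
    | cons y t' =>
      rw [IsDegSeq, List.Chain', List.isChain_cons_cons] at hch
      exact Relation.ReflTransGen.head hch.1
        (iht y b hch.2 rfl (by simpa using hl))

lemma seq_len (D : DegenStructure S) :
    ∀ (c : List (List S)) (a b : List S),
      IsDegSeq D.R c → c.head? = some a → c.getLast? = some b →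
      b.length + 1 = a.length + c.length := by
  intro c
  induction c with
  | nil => intro a b _ hh _; simp at hh
  | cons x t iht =>
    intro a b hch hh hl
    have hx : x = a := by simpa using hh
    subst hx
    cases t with
    | nil =>
      have hb : x = b := by simpa using hl
      rw [← hb]
      simp
    | cons y t' =>
      rw [IsDegSeq, List.Chain', List.isChain_cons_cons] at hch
      have h2 := iht y b hch.2 rfl (by simpa using hl)
      have h3 := oneStep_length hch.1
      simp at h2 h3 ⊢
      omega

lemma seq_of_reach (D : DegenStructure S) {a b : List S} (h : Reach D.R a b) :
    ∃ c : List (List S), IsDegSeq D.R c ∧ c.head? = some a ∧ c.getLast? = some b := by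
  induction h using Relation.ReflTransGen.head_induction_on with
  | refl => exact ⟨[b], List.isChain_singleton _, rfl, rfl⟩
  | head hstep _ ih =>
    obtain ⟨c, hch, hh, hl⟩ := ih
    cases c with
    | nil => simp at hh
    | cons y t =>
      rename_i a' c' _
      have hy : y = c' := by simpa using hh
      refine ⟨a' :: y :: t, ?_, rfl, by simpa using hl⟩
      rw [IsDegSeq, List.Chain', List.isChain_cons_cons]
      exact ⟨hy ▸ hstep, hch⟩

lemma reach_finite (D : DegenStructure S) (Z : S) : {z : List S | Reach D.R [Z] z}.Finite := by
  apply Set.Finite.subset ((D.finiteness Z).image (fun c => c.getLastD []))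
  intro z hz
  obtain ⟨c, hch, hh, hl⟩ := seq_of_reach D hz
  refine ⟨c, ⟨hh, hch⟩, ?_⟩
  show c.getLastD [] = z
  rw [List.getLastD_eq_getLast?, hl]
  rfl

lemma w_decomp (w : List S) (j : ℕ) (h : j + 1 < w.length) :
    w = w.take j ++ w[j] :: w[j+1] :: w.drop (j+2) := by
  conv_lhs => rw [← List.take_append_drop j w]
  rw [List.drop_eq_getElem_cons (by omega), List.drop_eq_getElem_cons (by omega)]

lemma main_count (D : DegenStructure S) (Z : S) :
    ∀ (N : ℕ) (w : List S), w.length ≤ N → Reach D.R [Z] w →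
      (SeqSet D Z w).ncard = Nat.factorial (w.length - 1) := by
  classical
  intro N
  induction N with
  | zero =>
    intro w hlen hw
    exfalso
    have := reach_length hw
    simp at this
    omega
  | succ N ih =>
    intro w hlen hw
    have hwpos : 1 ≤ w.length := by
      have := reach_length hw
      simpa using this
    by_cases hone : w.length = 1
    · -- base case : w = [Z]
      obtain ⟨x, rfl⟩ := List.length_eq_one_iff.mp hone
      have hx : x = Z := reach_single hw
      rw [hx]
      have hset : SeqSet D Z [Z] = {[[Z]]} := by
        ext c
        simp only [SeqSet, Set.mem_setOf_eq, Set.mem_singleton_iff]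
        constructor
        · rintro ⟨hch, hh, hl⟩
          cases c with
          | nil => simp at hh
          | cons x t =>
            have hx : x = [Z] := by simpa using hh
            subst hx
            cases t with
            | nil => rfl
            | cons y t' =>
              exfalso
              rw [IsDegSeq, List.Chain', List.isChain_cons_cons] at hch
              have hre : Reach D.R y [Z] :=
                reach_of_seq D (y :: t') y [Z] hch.2 rfl (by simpa using hl)
              have l1 := oneStep_length hch.1
              have l2 := reach_length hre
              simp at l1 l2
              omega
        · rintro rfl
          exact ⟨List.isChain_singleton _, rfl, rfl⟩
      rw [hset]
      simp
    · -- main case : w.length = m + 2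
      obtain ⟨m, hm⟩ : ∃ m, w.length = m + 2 := ⟨w.length - 2, by omega⟩
      -- the merger at each junction
      have hJ : ∀ (j : ℕ) (hj : j < m + 1), ∃ E, (w[j]'(by omega), w[j+1]'(by omega), E) ∈ D.R ∧
          Reach D.R [Z] (w.take j ++ E :: w.drop (j+2)) := by
        intro j hj
        exact merger_exists D Z w.length w le_rfl hw (w.take j) (w.drop (j+2)) _ _
          (w_decomp w j (by omega))
      choose E hE1 hE2 using hJ
      set P : Set (List S) := {z | Reach D.R [Z] z ∧ OneStep D.R z w} with hPdef
      set g : ℕ → List S :=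
        fun j => if hj : j < m + 1 then w.take j ++ E j hj :: w.drop (j+2) else [] with hgdef2
      have hgdef : ∀ j (hj : j < m + 1), g j = w.take j ++ E j hj :: w.drop (j+2) := by
        intro j hj
        simp only [hgdef2, dif_pos hj]
      -- P is the image of the junctions
      have hP : P = g '' ↑(Finset.range (m+1)) := by
        ext z
        constructor
        · rintro ⟨hz1, hz2⟩
          obtain ⟨l, r, A, B, C, hR, hzeq, hweq⟩ := hz2
          have hlw : l.length + 2 + r.length = w.length := by
            have := congrArg List.length hweq
            simp at this
            omega
          have hj : l.length < m + 1 := by omega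
          have hlt : l = w.take l.length := by
            rw [hweq, List.take_left]
          have hdr : r = w.drop (l.length + 2) := by
            rw [hweq, show l ++ A :: B :: r = (l ++ [A, B]) ++ r by simp,
              show l.length + 2 = (l ++ [A, B]).length by simp, List.drop_left]
          have hzeq' : z = w.take l.length ++ C :: w.drop (l.length + 2) := by
            rw [hzeq, ← hlt, ← hdr]
          have hCE : C = E l.length hj := by
            refine reach_unique D Z ((w.take l.length).length + (w.drop (l.length + 2)).length)
              (w.take l.length) (w.drop (l.length + 2)) C (E l.length hj) le_rfl ?_ ?_
            · rw [← hzeq']; exact hz1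
            · exact hE2 l.length hj
          refine ⟨l.length, by simpa using hj, ?_⟩
          rw [hgdef l.length hj, ← hCE, ← hzeq']
        · rintro ⟨j, hjmem, rfl⟩
          have hj : j < m + 1 := by simpa using hjmem
          rw [hgdef j hj]
          refine ⟨hE2 j hj, ?_⟩
          exact ⟨w.take j, w.drop (j+2), w[j]'(by omega), w[j+1]'(by omega), E j hj,
            hE1 j hj, rfl, w_decomp w j (by omega)⟩
      have hginj : Set.InjOn g ↑(Finset.range (m+1)) := by
        have key : ∀ j j', j < j' → j' < m + 1 → g j ≠ g j' := by
          intro j j' hjj hj' heq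
          have hj : j < m + 1 := by omega
          rw [hgdef j hj, hgdef j' hj'] at heq
          have e := congrArg (fun t => t[j]?) heq
          have hlt1 : (w.take j).length = j := by
            rw [List.length_take]
            omega
          have hlt2 : j < (w.take j').length := by
            rw [List.length_take]
            omega
          rw [List.getElem?_append_right (le_of_eq hlt1), hlt1, Nat.sub_self,
            List.getElem?_cons_zero] at e
          rw [List.getElem?_append_left hlt2, List.getElem?_take, if_pos hjj,
            List.getElem?_eq_getElem (show j < w.length by omega)] at e
          have hne := rel_ne_left (hE1 j hj)
          injection e with e'
          exact hne e'.symm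
        intro a ha b hb hab
        by_contra hne
        rcases Nat.lt_or_ge a b with h | h
        · exact key a b h (by simpa using hb) hab
        · have hba : b < a := by omega
          exact key b a hba (by simpa using ha) hab.symm
      have hPcard : P.ncard = m + 1 := by
        rw [hP, Set.ncard_image_of_injOn hginj, Set.ncard_coe_finset, Finset.card_range]
      have hzlen : ∀ z ∈ P, z.length = m + 1 := by
        rintro z ⟨-, hz2⟩
        have := oneStep_length hz2
        omega
      have hdecomp : SeqSet D Z w = ⋃ z ∈ P, (fun c => c ++ [w]) '' SeqSet D Z z := by
        ext c
        simp only [Set.mem_iUnion, Set.mem_image, Set.mem_setOf_eq, exists_prop]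
        constructor
        · rintro ⟨hch, hh, hl⟩
          obtain ⟨c', rfl⟩ : ∃ c', c = c' ++ [w] := List.getLast?_eq_some_iff.mp hl
          have hc' : c' ≠ [] := by
            rintro rfl
            have hwz : w = [Z] := by simpa using hh
            rw [hwz] at hm
            simp at hm
          rw [IsDegSeq, List.Chain', List.isChain_append] at hch
          obtain ⟨hch1, -, hlink⟩ := hch
          obtain ⟨z, hz⟩ : ∃ z, c'.getLast? = some z := by
            cases hzz : c'.getLast? with
            | none => exact absurd (by simpa using hzz) hc'
            | some z => exact ⟨z, rfl⟩
          have hstep : OneStep D.R z w := hlink z hz w rfl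
          have hh' : c'.head? = some [Z] := by
            cases c' with
            | nil => exact absurd rfl hc'
            | cons u t => simpa using hh
          exact ⟨z, ⟨reach_of_seq D c' [Z] z hch1 hh' hz, hstep⟩,
            c', ⟨hch1, hh', hz⟩, rfl⟩
        · rintro ⟨z, hzP, c', ⟨hch', hh', hl'⟩, rfl⟩
          have hc' : c' ≠ [] := by rintro rfl; simp at hh'
          refine ⟨?_, ?_, List.getLast?_concat⟩
          · rw [IsDegSeq, List.Chain', List.isChain_append]
            refine ⟨hch', List.isChain_singleton _, ?_⟩
            intro x hx y hy
            have hxz : z = x := by rw [hl'] at hx; simpa using hx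
            have hyw : w = y := by simpa using hy
            rw [← hxz, ← hyw]
            exact hzP.2
          · cases c' with
            | nil => exact absurd rfl hc'
            | cons u t => simpa using hh'
      have hPfin : P.Finite := (reach_finite D Z).subset (fun z hz => hz.1)
      have hSfin : (SeqSet D Z w).Finite := seqSet_finite D Z w
      set F : List S → Finset (List (List S)) :=
        fun z => ((seqSet_finite D Z z).image (fun c => c ++ [w])).toFinset with hF
      have hFeq : hSfin.toFinset = hPfin.toFinset.biUnion F := by
        ext c
        rw [Set.Finite.mem_toFinset, hdecomp, Finset.mem_biUnion]
        simp only [hF, Set.Finite.mem_toFinset, Set.mem_iUnion, Set.mem_image, exists_prop]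
      have hdisj : ∀ x ∈ hPfin.toFinset, ∀ y ∈ hPfin.toFinset, x ≠ y → Disjoint (F x) (F y) := by
        intro x hx y hy hxy
        rw [Finset.disjoint_left]
        intro c hcx hcy
        simp only [hF, Set.Finite.mem_toFinset, Set.mem_image] at hcx hcy
        obtain ⟨c1, hc1, hc1e⟩ := hcx
        obtain ⟨c2, hc2, hc2e⟩ := hcy
        have hcc : c1 = c2 := by
          have h12 := hc1e.trans hc2e.symm
          exact (List.append_inj h12
            (by have := congrArg List.length h12; simpa using this)).1
        apply hxy
        rw [hcc] at hc1
        have := hc1.2.2.symm.trans hc2.2.2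
        simpa using this
      have hcard : ∀ z ∈ hPfin.toFinset, (F z).card = Nat.factorial m := by
        intro z hz
        rw [Set.Finite.mem_toFinset] at hz
        have hzl : z.length = m + 1 := hzlen z hz
        have hinj : Function.Injective (fun c : List (List S) => c ++ [w]) := by
          intro a b hab
          exact (List.append_inj hab
            (by have := congrArg List.length hab; simpa using this)).1
        have h1 : (F z).card = ((fun c => c ++ [w]) '' SeqSet D Z z).ncard := by
          rw [Set.ncard_eq_toFinset_card _ ((seqSet_finite D Z z).image _)]
        rw [h1, Set.ncard_image_of_injOn hinj.injOn]
        rw [ih z (by omega) hz.1, hzl]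
        simp
      rw [Set.ncard_eq_toFinset_card _ hSfin, hFeq, Finset.card_biUnion hdisj,
        Finset.sum_congr rfl hcard, Finset.sum_const, smul_eq_mul]
      have hcard2 : hPfin.toFinset.card = m + 1 := by
        rw [← Set.ncard_eq_toFinset_card _ hPfin]
        exact hPcard
      rw [hcard2, hm]
      simp [Nat.factorial_succ]

/-- if in a degeneration structure there is a degeneration sequence of
length `n` from the `1`-tuple `(Z)` to the `(n+1)`-tuple `w`, then there are exactly
`n!` degeneration sequences connecting `(Z)` with `w`. -/
theorem degeneration_sequences_count (D : DegenStructure S) (Z : S) (w : List S) (n : ℕ)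
    (h : ∃ c : List (List S), IsDegSeq D.R c ∧ c.head? = some [Z] ∧
      c.getLast? = some w ∧ c.length = n + 1) :
    Set.ncard {c : List (List S) | IsDegSeq D.R c ∧ c.head? = some [Z] ∧
      c.getLast? = some w} = Nat.factorial n := by
  obtain ⟨c, hch, hh, hl, hlen⟩ := h
  have hre : Reach D.R [Z] w := reach_of_seq D c [Z] w hch hh hl
  have hwl : w.length = n + 1 := by
    have := seq_len D c [Z] w hch hh hl
    simp at this
    omega
  have hmain := main_count D Z w.length w le_rfl hre
  rw [hwl] at hmain
  simpa [SeqSet] using hmain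
end

section
/- Let (S,R) be a degeneration structure and Λ a ring. For functions α, β : S → Λ define the convolution α ∗ β : S → Λ by (α ∗ β)(C) = Σ_{(A,B;C) ∈ R} α(A)β(B); this sum is finite, so the convolution is well-defined, and the convolution is associative: (α ∗ β) ∗ γ = α ∗ (β ∗ γ) for all α, β, γ : S → Λ. -/
variable {S : Type*}

/-- The convolution product on functions `S → Λ` associated to a degeneration
structure: `(α ∗ β)(C) = Σ_{(A,B;C) ∈ R} α(A) β(B)`. -/
noncomputable def DegenStructure.conv {Λ : Type*} [Ring Λ] (D : DegenStructure S)
    (α β : S → Λ) : S → Λ :=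
  fun C => ∑ᶠ p ∈ {p : S × S | (p.1, p.2, C) ∈ D.R}, α p.1 * β p.2

section Aux

namespace DegenStructure

variable (D : DegenStructure S)

lemma stepL {A B C : S} (h : (A, B, C) ∈ D.R) (r : List S) :
    OneStep D.R (C :: r) (A :: B :: r) := ⟨[], r, A, B, C, h, rfl, rfl⟩

lemma stepR {A B C : S} (h : (A, B, C) ∈ D.R) (X : S) :
    OneStep D.R [X, C] [X, A, B] := ⟨[X], [], A, B, C, h, rfl, rfl⟩

lemma no_left_loop {X Y : S} (h : (X, Y, X) ∈ D.R) : False := by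
  have hmem : ∀ n : ℕ, ((List.range (n+1)).map fun m => X :: List.replicate m Y) ∈
      {c : List (List S) | c.head? = some [X] ∧ IsDegSeq D.R c} := by
    intro n
    constructor
    · rw [List.range_succ_eq_map]; simp
    · unfold IsDegSeq
      show List.IsChain _ _
      rw [List.isChain_map, List.isChain_range_succ]
      intro m _
      exact ⟨[], List.replicate m Y, X, Y, X, h, rfl, by simp [List.replicate_succ]⟩
  exact (Set.infinite_of_injective_forall_mem
    (f := fun n : ℕ => (List.range (n+1)).map fun m => X :: List.replicate m Y)
    (fun a b hab => by simpa using congrArg List.length hab) hmem) (D.finiteness X)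

lemma no_right_loop {X Y : S} (h : (Y, X, X) ∈ D.R) : False := by
  have hmem : ∀ n : ℕ, ((List.range (n+1)).map fun m => List.replicate m Y ++ [X]) ∈
      {c : List (List S) | c.head? = some [X] ∧ IsDegSeq D.R c} := by
    intro n
    constructor
    · rw [List.range_succ_eq_map]; simp
    · unfold IsDegSeq
      show List.IsChain _ _
      rw [List.isChain_map, List.isChain_range_succ]
      intro m _
      exact ⟨List.replicate m Y, [], Y, X, X, h, rfl,
        by simp [List.replicate_succ', List.append_assoc]⟩
  exact (Set.infinite_of_injective_forall_mem
    (f := fun n : ℕ => (List.range (n+1)).map fun m => List.replicate m Y ++ [X])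
    (fun a b hab => by simpa using congrArg List.length hab) hmem) (D.finiteness X)

lemma rel_finite (C : S) : {p : S × S | (p.1, p.2, C) ∈ D.R}.Finite := by
  have key : Set.Finite ((fun p : S × S => [[C], [p.1, p.2]]) ''
      {p : S × S | (p.1, p.2, C) ∈ D.R}) :=
    (D.finiteness C).subset (by
      rintro _ ⟨p, hp, rfl⟩
      exact ⟨rfl, List.isChain_pair.mpr ⟨[], [], p.1, p.2, C, hp, rfl, rfl⟩⟩)
  exact Set.Finite.of_finite_image key (fun p _ q _ h => by
    have h' : p.1 = q.1 ∧ p.2 = q.2 := by simpa using h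
    exact Prod.ext h'.1 h'.2)

lemma fwd {Z p₁ p₂ q₁ q₂ : S}
    (h1 : (p₁, p₂, Z) ∈ D.R) (h2 : (q₁, q₂, p₁) ∈ D.R) :
    ∃ B, (q₁, B, Z) ∈ D.R ∧ (q₂, p₂, B) ∈ D.R := by
  obtain ⟨A, I, Ep, B, As, hz, hAB, hIE, _, _, _, _⟩ :=
    D.assoc Z [q₁, q₂, p₂] ⟨[p₁, p₂], D.stepL h1 [], D.stepL h2 [p₂]⟩
  obtain ⟨rfl, rfl, rfl⟩ : q₁ = A ∧ q₂ = I ∧ p₂ = Ep := by simpa using hz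
  exact ⟨B, hAB, hIE⟩

lemma bwd {Z a b i e : S}
    (h1 : (a, b, Z) ∈ D.R) (h2 : (i, e, b) ∈ D.R) :
    ∃ As, (As, e, Z) ∈ D.R ∧ (a, i, As) ∈ D.R := by
  obtain ⟨A, I, Ep, B, As, hz, _, _, hAI, hAs, _, _⟩ :=
    D.assoc Z [a, i, e] ⟨[a, b], D.stepL h1 [], D.stepR h2 a⟩
  obtain ⟨rfl, rfl, rfl⟩ : a = A ∧ i = I ∧ e = Ep := by simpa using hz
  exact ⟨As, hAs, hAI⟩

lemma fwd_unique {Z q₁ q₂ p₂ B B' : S}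
    (h1 : (q₁, B, Z) ∈ D.R) (h2 : (q₂, p₂, B) ∈ D.R)
    (h1' : (q₁, B', Z) ∈ D.R) (h2' : (q₂, p₂, B') ∈ D.R) : B = B' := by
  obtain ⟨A, I, Ep, B₀, As, hz, _, _, _, _, _, hset⟩ :=
    D.assoc Z [q₁, q₂, p₂] ⟨[q₁, B], D.stepL h1 [], D.stepR h2 q₁⟩
  obtain ⟨rfl, rfl, rfl⟩ : q₁ = A ∧ q₂ = I ∧ p₂ = Ep := by simpa using hz
  have key : ∀ b, (q₁, b, Z) ∈ D.R → (q₂, p₂, b) ∈ D.R → b = B₀ := by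
    intro b hb1 hb2
    have hmem : [q₁, b] ∈ {z₁ : List S | OneStep D.R [Z] z₁ ∧ OneStep D.R z₁ [q₁, q₂, p₂]} :=
      ⟨D.stepL hb1 [], D.stepR hb2 q₁⟩
    rw [hset] at hmem
    simp only [Set.mem_insert_iff, Set.mem_singleton_iff] at hmem
    rcases hmem with hmem | hmem
    · simpa using hmem
    · obtain ⟨-, rfl⟩ : q₁ = As ∧ b = p₂ := by simpa using hmem
      exact absurd hb2 (fun hc => D.no_right_loop hc)
  rw [key B h1 h2, key B' h1' h2']

lemma bwd_unique {Z a i e As As' : S}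
    (h1 : (As, e, Z) ∈ D.R) (h2 : (a, i, As) ∈ D.R)
    (h1' : (As', e, Z) ∈ D.R) (h2' : (a, i, As') ∈ D.R) : As = As' := by
  obtain ⟨A, I, Ep, B₀, Ast, hz, _, _, _, _, _, hset⟩ :=
    D.assoc Z [a, i, e] ⟨[As, e], D.stepL h1 [], D.stepL h2 [e]⟩
  obtain ⟨rfl, rfl, rfl⟩ : a = A ∧ i = I ∧ e = Ep := by simpa using hz
  have key : ∀ x, (x, e, Z) ∈ D.R → (a, i, x) ∈ D.R → x = Ast := by
    intro x hx1 hx2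
    have hmem : [x, e] ∈ {z₁ : List S | OneStep D.R [Z] z₁ ∧ OneStep D.R z₁ [a, i, e]} :=
      ⟨D.stepL hx1 [], D.stepL hx2 [e]⟩
    rw [hset] at hmem
    simp only [Set.mem_insert_iff, Set.mem_singleton_iff] at hmem
    rcases hmem with hmem | hmem
    · obtain ⟨rfl, -⟩ : x = a ∧ e = B₀ := by simpa using hmem
      exact absurd hx2 (fun hc => D.no_left_loop hc)
    · simpa using hmem
  rw [key As h1 h2, key As' h1' h2']

open scoped Classical in
/-- Forward map for the associativity bijection. -/
noncomputable def Phi (Z : S) (x : (_ : S × S) × (S × S)) : (_ : S × S) × (S × S) :=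
  if h : (x.1.1, x.1.2, Z) ∈ D.R ∧ (x.2.1, x.2.2, x.1.1) ∈ D.R then
    ⟨(x.2.1, (D.fwd h.1 h.2).choose), (x.2.2, x.1.2)⟩
  else x

open scoped Classical in
/-- Backward map for the associativity bijection. -/
noncomputable def Psi (Z : S) (x : (_ : S × S) × (S × S)) : (_ : S × S) × (S × S) :=
  if h : (x.1.1, x.1.2, Z) ∈ D.R ∧ (x.2.1, x.2.2, x.1.2) ∈ D.R then
    ⟨((D.bwd h.1 h.2).choose, x.2.2), (x.1.1, x.2.1)⟩
  else x

end DegenStructure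

end Aux

/-- the convolution on a degeneration structure is well-defined
(the defining sums are finite) and associative. -/
theorem degen_convolution_assoc {Λ : Type*} [Ring Λ] (D : DegenStructure S) :
    (∀ C : S, Set.Finite {p : S × S | (p.1, p.2, C) ∈ D.R}) ∧
    ∀ α β γ : S → Λ, D.conv (D.conv α β) γ = D.conv α (D.conv β γ) := by
  refine ⟨D.rel_finite, fun α β γ => funext fun Z => ?_⟩
  have hconv : ∀ (α β : S → Λ) (C : S),
      D.conv α β C = ∑ p ∈ (D.rel_finite C).toFinset, α p.1 * β p.2 := fun α β C => by
    rw [DegenStructure.conv, ← finsum_mem_coe_finset, Set.Finite.coe_toFinset]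
  calc D.conv (D.conv α β) γ Z
      = ∑ p ∈ (D.rel_finite Z).toFinset,
          (∑ q ∈ (D.rel_finite p.1).toFinset, α q.1 * β q.2) * γ p.2 := by
        rw [hconv]; exact Finset.sum_congr rfl fun p _ => by rw [hconv]
    _ = ∑ x ∈ (D.rel_finite Z).toFinset.sigma (fun p => (D.rel_finite p.1).toFinset),
          α x.2.1 * β x.2.2 * γ x.1.2 := by
        rw [Finset.sum_sigma]
        exact Finset.sum_congr rfl fun p _ => by rw [Finset.sum_mul]
    _ = ∑ x ∈ (D.rel_finite Z).toFinset.sigma (fun p => (D.rel_finite p.2).toFinset),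
          α x.1.1 * (β x.2.1 * γ x.2.2) := by
        refine Finset.sum_nbij' (D.Phi Z) (D.Psi Z) ?_ ?_ ?_ ?_ ?_
        · rintro ⟨⟨p₁, p₂⟩, q₁, q₂⟩ hx
          rw [Finset.mem_sigma, Set.Finite.mem_toFinset, Set.Finite.mem_toFinset] at hx
          obtain ⟨h1, h2⟩ := hx
          rw [DegenStructure.Phi]; rw [dif_pos ⟨h1, h2⟩]
          rw [Finset.mem_sigma, Set.Finite.mem_toFinset, Set.Finite.mem_toFinset]
          exact ⟨(D.fwd h1 h2).choose_spec.1, (D.fwd h1 h2).choose_spec.2⟩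
        · rintro ⟨⟨a, b⟩, i, e⟩ hy
          rw [Finset.mem_sigma, Set.Finite.mem_toFinset, Set.Finite.mem_toFinset] at hy
          obtain ⟨h1, h2⟩ := hy
          rw [DegenStructure.Psi]; rw [dif_pos ⟨h1, h2⟩]
          rw [Finset.mem_sigma, Set.Finite.mem_toFinset, Set.Finite.mem_toFinset]
          exact ⟨(D.bwd h1 h2).choose_spec.1, (D.bwd h1 h2).choose_spec.2⟩
        · rintro ⟨⟨p₁, p₂⟩, q₁, q₂⟩ hx
          rw [Finset.mem_sigma, Set.Finite.mem_toFinset, Set.Finite.mem_toFinset] at hx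
          obtain ⟨h1, h2⟩ := hx
          rw [DegenStructure.Phi]; rw [dif_pos ⟨h1, h2⟩]
          have hB1 := (D.fwd h1 h2).choose_spec.1
          have hB2 := (D.fwd h1 h2).choose_spec.2
          rw [DegenStructure.Psi]; rw [dif_pos ⟨hB1, hB2⟩]
          have hA1 := (D.bwd hB1 hB2).choose_spec.1
          have hA2 := (D.bwd hB1 hB2).choose_spec.2
          have : (D.bwd hB1 hB2).choose = p₁ := D.bwd_unique hA1 hA2 h1 h2
          simp [this]
        · rintro ⟨⟨a, b⟩, i, e⟩ hy
          rw [Finset.mem_sigma, Set.Finite.mem_toFinset, Set.Finite.mem_toFinset] at hy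
          obtain ⟨h1, h2⟩ := hy
          rw [DegenStructure.Psi]; rw [dif_pos ⟨h1, h2⟩]
          have hA1 := (D.bwd h1 h2).choose_spec.1
          have hA2 := (D.bwd h1 h2).choose_spec.2
          rw [DegenStructure.Phi]; rw [dif_pos ⟨hA1, hA2⟩]
          have hB1 := (D.fwd hA1 hA2).choose_spec.1
          have hB2 := (D.fwd hA1 hA2).choose_spec.2
          have : (D.fwd hA1 hA2).choose = b := D.fwd_unique hB1 hB2 h1 h2
          simp [this]
        · rintro ⟨⟨p₁, p₂⟩, q₁, q₂⟩ hx
          rw [Finset.mem_sigma, Set.Finite.mem_toFinset, Set.Finite.mem_toFinset] at hx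
          obtain ⟨h1, h2⟩ := hx
          rw [DegenStructure.Phi]; rw [dif_pos ⟨h1, h2⟩]
          exact mul_assoc _ _ _
    _ = ∑ p ∈ (D.rel_finite Z).toFinset,
          α p.1 * ∑ q ∈ (D.rel_finite p.2).toFinset, β q.1 * γ q.2 := by
        rw [Finset.sum_sigma]
        exact Finset.sum_congr rfl fun p _ => by rw [Finset.mul_sum]
    _ = D.conv α (D.conv β γ) Z := by
        rw [hconv]; exact (Finset.sum_congr rfl fun p _ => by rw [hconv]).symm
end
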